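/- arXiv:2205.01535 — 10 statements merged into one kernel-verified Lean document; each statement's English description precedes it below -/
import Mathlib

section
/- Let A be an n×n Hermitian matrix with orthonormal eigenvectors q_1,...,q_n and eigenvalues λ_1,...,λ_n, and let u ∈ ℂⁿ with spectral coefficients w_j = ⟨q_j, u⟩. Then the Krylov matrix (u, Au, ..., A^{m-1}u) has rank m if and only if there exist at least m indices j with w_j ≠ 0 and pairwise distinct eigenvalues λ_j. -/
open Matrix Polynomial
open scoped ComplexOrder

/-!
Let `Q` be the matrix with columns `q j`. Orthonormality says `Qᴴ M Q = 1`, so `Q` is invertible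
and `u = Q w`, while the eigen-equations say `A Q = Q diag(λ)`. Hence the Krylov matrix is `Q W`
with `W j k = λ_j ^ k * w_j`, and has the rank of `W`. Every row of `W` is a multiple of
`(μ ^ k)_k` for an eigenvalue `μ` carried by `u` (i.e. `μ = λ_j` with `w_j ≠ 0`), so the rank
is at most the number `d` of such eigenvalues; conversely, rows of `W` for `min m d` distinct ones
contain a nonsingular diagonal-times-Vandermonde minor. So the rank is `min m d`.
-/

open Finset

theorem Finset.le_card_image_iff_exists_subset_injOn {α β : Type*} [DecidableEq β]
    {s : Finset α} {f : α → β} {m : ℕ} :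
    m ≤ #(s.image f) ↔ ∃ t ⊆ s, m ≤ #t ∧ Set.InjOn f t := by
  constructor
  · intro hm
    obtain ⟨t, hts, hinj, himage⟩ :=
      exists_subset_injOn_image_eq_of_surjOn (s : Set α) (s.image f)
        (by simpa using Set.surjOn_image f s)
    exact ⟨t, mod_cast hts, by rwa [← card_image_of_injOn hinj, himage], hinj⟩
  · rintro ⟨t, hts, hmt, hinj⟩
    calc m ≤ #t := hmt
      _ = #(t.image f) := (card_image_of_injOn hinj).symm
      _ ≤ #(s.image f) := card_le_card (image_subset_image hts)

namespace Matrix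

variable {R K ι : Type*} [CommRing R] [Field K]

def weightedVandermonde (lam w : ι → R) (m : ℕ) : Matrix ι (Fin m) R :=
  of fun j k => lam j ^ (k : ℕ) * w j

def krylov [Fintype ι] [DecidableEq ι] (A : Matrix ι ι R) (u : ι → R) (m : ℕ) :
    Matrix ι (Fin m) R :=
  of fun i k => (A ^ (k : ℕ) *ᵥ u) i

theorem rank_weightedVandermonde_le [Fintype ι] [DecidableEq K] (lam w : ι → K) (m : ℕ) :
    (weightedVandermonde lam w m).rank ≤ #(({j | w j ≠ 0} : Finset ι).image lam) := by
  set powers : K → Fin m → K := fun μ k => μ ^ (k : ℕ)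
  have hrow : Set.range (weightedVandermonde lam w m).row ⊆
      Submodule.span K
        ((({j | w j ≠ 0} : Finset ι).image lam).image powers : Set (Fin m → K)) := by
    rintro _ ⟨j, rfl⟩
    have hrow_j : (weightedVandermonde lam w m).row j = w j • powers (lam j) := by
      ext k; simp [weightedVandermonde, powers, mul_comm]
    rw [hrow_j]
    by_cases hj : w j = 0
    · simp [hj]
    · refine Submodule.smul_mem _ _ (Submodule.subset_span ?_)
      exact mem_coe.mpr (mem_image_of_mem _ (mem_image_of_mem _ (by simpa using hj)))
  rw [rank_eq_finrank_span_row]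
  exact (Submodule.finrank_mono (Submodule.span_le.mpr hrow)).trans
    ((finrank_span_finset_le_card _).trans card_image_le)

theorem le_rank_weightedVandermonde {lam w : ι → K} {r m : ℕ} (hr : r ≤ m) (e : Fin r → ι)
    (hw : ∀ k, w (e k) ≠ 0) (hlam : Function.Injective (lam ∘ e)) :
    r ≤ (weightedVandermonde lam w m).rank := by
  have hsub : (weightedVandermonde lam w m).submatrix e (Fin.castLE hr) =
      diagonal (w ∘ e) * vandermonde (lam ∘ e) := by
    ext k l; simp [weightedVandermonde, mul_comm]
  have hdet : (diagonal (w ∘ e) * vandermonde (lam ∘ e)).det ≠ 0 := by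
    rw [det_mul, det_diagonal]
    exact mul_ne_zero (prod_ne_zero_iff.mpr fun k _ => hw k)
      (det_vandermonde_ne_zero_iff.mpr hlam)
  calc r = (diagonal (w ∘ e) * vandermonde (lam ∘ e)).rank := by
        rw [rank_of_det_ne_zero hdet, Fintype.card_fin]
    _ ≤ _ := hsub ▸ rank_submatrix_le _ _ _

theorem rank_weightedVandermonde [Fintype ι] [DecidableEq K] (lam w : ι → K) (m : ℕ) :
    (weightedVandermonde lam w m).rank = min m #(({j | w j ≠ 0} : Finset ι).image lam) := by
  refine le_antisymm (le_min ((rank_le_card_width _).trans_eq (Fintype.card_fin m))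
    (rank_weightedVandermonde_le lam w m)) ?_
  obtain ⟨S, hS, hcard, hinj⟩ := (le_card_image_iff_exists_subset_injOn
    (s := ({j | w j ≠ 0} : Finset ι)) (f := lam)).mp (min_le_right _ _)
  set e : Fin _ → ι := fun k => S.equivFin.symm (Fin.castLE hcard k)
  have he : Function.Injective e :=
    Subtype.val_injective.comp (S.equivFin.symm.injective.comp (Fin.castLE_injective hcard))
  have heS : ∀ k, e k ∈ S := fun k => (S.equivFin.symm _).2
  refine le_rank_weightedVandermonde (min_le_left _ _) e (fun k => ?_) ?_
  · simpa using hS (heS k)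
  · exact fun a b hab => he (hinj (heS a) (heS b) hab)

theorem krylov_mulVec_eq_mul_weightedVandermonde [Fintype ι] [DecidableEq ι]
    {A Q : Matrix ι ι R} {lam : ι → R} (hAQ : A * Q = Q * diagonal lam) (w : ι → R)
    (m : ℕ) :
    krylov A (Q *ᵥ w) m = Q * weightedVandermonde lam w m := by
  have hpow (k : ℕ) : A ^ k * Q = Q * diagonal (lam ^ k) := by
    rw [← diagonal_pow]; exact (SemiconjBy.pow_right hAQ.symm k).eq.symm
  ext i k
  rw [krylov, of_apply, mulVec_mulVec, hpow, ← mulVec_mulVec, mul_apply]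
  simp [mulVec, dotProduct, diagonal_apply, weightedVandermonde]

theorem rank_krylov_mulVec [Fintype ι] [DecidableEq ι] [DecidableEq K] {A Q : Matrix ι ι K}
    {lam : ι → K} (hQ : IsUnit Q.det) (hAQ : A * Q = Q * diagonal lam) (w : ι → K) (m : ℕ) :
    (krylov A (Q *ᵥ w) m).rank = min m #(({j | w j ≠ 0} : Finset ι).image lam) := by
  rw [krylov_mulVec_eq_mul_weightedVandermonde hAQ, rank_mul_eq_right_of_isUnit_det _ _ hQ,
    rank_weightedVandermonde]

theorem mul_transpose_of_apply [Fintype ι] (B : Matrix ι ι R) (q : ι → ι → R) (i j : ι) :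
    (B * (of q)ᵀ) i j = (B *ᵥ q j) i := by
  simp [mul_apply, mulVec, dotProduct]

theorem conjTranspose_transpose_of_mulVec_apply [Fintype ι] [StarRing R] (q : ι → ι → R)
    (v : ι → R) (j : ι) :
    ((of q)ᵀᴴ *ᵥ v) j = star (q j) ⬝ᵥ v := by
  simp [mulVec, dotProduct]

theorem mul_transpose_of_eq_mul_diagonal [Fintype ι] [DecidableEq ι] {A : Matrix ι ι R}
    {q : ι → ι → R} {lam : ι → R} (heig : ∀ j, A *ᵥ q j = lam j • q j) :
    A * (of q)ᵀ = (of q)ᵀ * diagonal lam := by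
  ext i j
  rw [mul_transpose_of_apply, heig, mul_diagonal]
  simp [mul_comm]

theorem conjTranspose_mul_mul_eq_one_of_orthonormal [Fintype ι] [DecidableEq ι] [StarRing R]
    {M : Matrix ι ι R} {q : ι → ι → R}
    (horth : ∀ i j, star (q i) ⬝ᵥ (M *ᵥ q j) = if i = j then 1 else 0) :
    (of q)ᵀᴴ * M * (of q)ᵀ = 1 := by
  ext i j
  rw [mul_transpose_of_apply, ← mulVec_mulVec, conjTranspose_transpose_of_mulVec_apply, horth,
    one_apply]

end Matrix

theorem stmt_0_general {n m : ℕ} (M A : Matrix (Fin n) (Fin n) ℂ)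
    (q : Fin n → (Fin n → ℂ)) (lam : Fin n → ℂ)
    (horth : ∀ i j : Fin n, star (q i) ⬝ᵥ (M *ᵥ q j) = if i = j then 1 else 0)
    (heig : ∀ j, A *ᵥ q j = lam j • q j)
    (u : Fin n → ℂ) (w : Fin n → ℂ)
    (hw : ∀ j, w j = star (q j) ⬝ᵥ (M *ᵥ u)) :
    (Matrix.of fun i (k : Fin m) => ((A ^ (k : ℕ)) *ᵥ u) i).rank = m ↔
      ∃ S : Finset (Fin n), m ≤ S.card ∧ (∀ j ∈ S, w j ≠ 0) ∧
        Set.InjOn lam ↑S := by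
  have hgram := conjTranspose_mul_mul_eq_one_of_orthonormal horth
  have hu : u = (of q)ᵀ *ᵥ w := by
    have hw' : w = ((of q)ᵀᴴ * M) *ᵥ u := by
      ext j; rw [hw, ← mulVec_mulVec, conjTranspose_transpose_of_mulVec_apply]
    rw [hw', mulVec_mulVec, mul_eq_one_comm.mp hgram, one_mulVec]
  change (krylov A u m).rank = m ↔ _
  rw [hu, rank_krylov_mulVec (isUnit_det_of_left_inverse hgram)
    (mul_transpose_of_eq_mul_diagonal heig), min_eq_left_iff,
    le_card_image_iff_exists_subset_injOn]
  simp [subset_iff, and_left_comm]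

/-- For an Hermitian matrix `A` (w.r.t. a positive definite `M`-inner
product) with orthonormal eigenbasis `q` and eigenvalues `lam`, and a vector `u`
with spectral coefficients `w j = ⟨q j, u⟩_M`, the Krylov matrix
`(u, Au, …, A^{m-1}u)` has rank `m` iff there exist at least `m` indices `j` with
`w j ≠ 0` and pairwise distinct eigenvalues `lam j`. -/
theorem stmt_0 {n m : ℕ} (M A : Matrix (Fin n) (Fin n) ℂ)
    (hM : M.PosDef)
    (hA : ∀ x y : Fin n → ℂ, star (A *ᵥ x) ⬝ᵥ (M *ᵥ y) = star x ⬝ᵥ (M *ᵥ (A *ᵥ y)))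
    (q : Fin n → (Fin n → ℂ)) (lam : Fin n → ℂ)
    (horth : ∀ i j : Fin n, star (q i) ⬝ᵥ (M *ᵥ q j) = if i = j then 1 else 0)
    (heig : ∀ j, A *ᵥ q j = lam j • q j)
    (u : Fin n → ℂ) (w : Fin n → ℂ)
    (hw : ∀ j, w j = star (q j) ⬝ᵥ (M *ᵥ u)) :
    (Matrix.of fun i (k : Fin m) => ((A ^ (k : ℕ)) *ᵥ u) i).rank = m ↔
      ∃ S : Finset (Fin n), m ≤ S.card ∧ (∀ j ∈ S, w j ≠ 0) ∧
        Set.InjOn lam ↑S :=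
  stmt_0_general M A q lam horth heig u w hw
end

section
/- Let λ_1 < ... < λ_n be real numbers, w_1,...,w_n nonzero complex numbers, and suppose θ_1 < ... < θ_m (m < n) and c_1,...,c_m ∈ ℂ satisfy the quadrature identity ∑_{j=1}^n |w_j|² p(λ_j) = ∑_{j=1}^m |c_j|² p(θ_j) for all polynomials p of degree ≤ 2m−2. Then c_j ≠ 0 for all j = 1,...,m. -/
open Polynomial

/-!
If `c k = 0`, the node `θ k` carries no mass, so the quadrature rule has at most `m - 1` active
nodes. The polynomial `∏_{j ≠ k} (X - θ j)²` has degree `2m - 2`, vanishes at every node and is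
nonnegative, so the quadrature rule assigns it the value `0`. But it is positive at one of the
`n > m - 1` distinct atoms `λ_j`, which carries the positive mass `‖w j‖²`, a contradiction.
-/

namespace Polynomial

variable {ι : Type*}

noncomputable def sqNodePoly (s : Finset ι) (x : ι → ℝ) : ℝ[X] :=
  ∏ j ∈ s, (X - C (x j)) ^ 2

theorem natDegree_sqNodePoly (s : Finset ι) (x : ι → ℝ) :
    (sqNodePoly s x).natDegree = 2 * s.card := by
  rw [sqNodePoly, natDegree_prod _ _ fun j _ => pow_ne_zero _ (X_sub_C_ne_zero _)]
  simp [mul_comm]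

theorem eval_sqNodePoly (s : Finset ι) (x : ι → ℝ) (y : ℝ) :
    (sqNodePoly s x).eval y = ∏ j ∈ s, (y - x j) ^ 2 := by
  simp [sqNodePoly, eval_prod]

theorem eval_sqNodePoly_nonneg (s : Finset ι) (x : ι → ℝ) (y : ℝ) :
    0 ≤ (sqNodePoly s x).eval y := by
  rw [eval_sqNodePoly]
  exact Finset.prod_nonneg fun j _ => sq_nonneg _

theorem eval_sqNodePoly_of_mem {s : Finset ι} (x : ι → ℝ) {i : ι} (hi : i ∈ s) :
    (sqNodePoly s x).eval (x i) = 0 := by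
  rw [eval_sqNodePoly]
  exact Finset.prod_eq_zero hi (by simp)

theorem eval_sqNodePoly_pos {s : Finset ι} (x : ι → ℝ) {y : ℝ} (hy : y ∉ s.image x) :
    0 < (sqNodePoly s x).eval y := by
  rw [eval_sqNodePoly]
  refine Finset.prod_pos fun j hj => sq_pos_of_ne_zero (sub_ne_zero.2 ?_)
  rintro rfl
  exact hy (Finset.mem_image_of_mem x hj)

theorem sum_mul_eval_sqNodePoly_erase [Fintype ι] [DecidableEq ι] (a : ι → ℝ) (x : ι → ℝ)
    (k : ι) :
    ∑ j, a j * (sqNodePoly (Finset.univ.erase k) x).eval (x j) =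
      a k * (sqNodePoly (Finset.univ.erase k) x).eval (x k) := by
  refine Fintype.sum_eq_single k fun j hj => ?_
  rw [eval_sqNodePoly_of_mem x (Finset.mem_erase.2 ⟨hj, Finset.mem_univ j⟩), mul_zero]

end Polynomial

theorem Function.Injective.exists_apply_notMem {α β : Type*} [Fintype α] [DecidableEq β]
    {f : α → β} (hf : Function.Injective f) {t : Finset β} (ht : t.card < Fintype.card α) :
    ∃ a, f a ∉ t := by
  obtain ⟨b, hb, hbt⟩ := Finset.exists_mem_notMem_of_card_lt_card
    (s := t) (t := Finset.univ.image f) (by rwa [Finset.card_image_of_injective _ hf])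
  obtain ⟨a, -, rfl⟩ := Finset.mem_image.1 hb
  exact ⟨a, hbt⟩

theorem stmt_1_general {n m : ℕ} (hmn : m < n)
    (lam : Fin n → ℝ) (hlam : StrictMono lam)
    (w : Fin n → ℂ) (hw : ∀ j, w j ≠ 0)
    (θ : Fin m → ℝ)
    (c : Fin m → ℂ)
    (hquad : ∀ p : Polynomial ℝ, p.natDegree ≤ 2 * m - 2 →
      ∑ j, ‖w j‖ ^ 2 * p.eval (lam j) = ∑ j, ‖c j‖ ^ 2 * p.eval (θ j)) :
    ∀ j, c j ≠ 0 := by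
  intro k hk
  set p := sqNodePoly (Finset.univ.erase k) θ
  have hcard : (Finset.univ.erase k).card = m - 1 := by simp
  have hdeg : p.natDegree ≤ 2 * m - 2 := by
    rw [natDegree_sqNodePoly, hcard]
    omega
  obtain ⟨j₀, hj₀⟩ : ∃ j₀, lam j₀ ∉ (Finset.univ.erase k).image θ :=
    hlam.injective.exists_apply_notMem <| by
      simpa using Finset.card_image_le.trans_lt (hcard.trans_lt (by omega))
  have hpos : 0 < ∑ j, ‖w j‖ ^ 2 * p.eval (lam j) :=
    Finset.sum_pos' (fun j _ => mul_nonneg (sq_nonneg _) (eval_sqNodePoly_nonneg _ _ _))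
      ⟨j₀, Finset.mem_univ _, mul_pos (pow_pos (norm_pos_iff.2 (hw j₀)) 2) (eval_sqNodePoly_pos θ hj₀)⟩
  have hzero : ∑ j, ‖c j‖ ^ 2 * p.eval (θ j) = 0 := by
    rw [sum_mul_eval_sqNodePoly_erase, hk, norm_zero, sq, zero_mul, zero_mul]
  exact hpos.ne' (hquad p hdeg ▸ hzero)

/-- If distinct nodes `θ` with weights `‖c j‖²` reproduce the discrete
measure with atoms `lam j` (strictly increasing) and nonzero weights `‖w j‖²` for all
polynomials of degree ≤ 2m−2, and `m < n`, then all `c j` are nonzero. -/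
theorem stmt_1 {n m : ℕ} (hmn : m < n)
    (lam : Fin n → ℝ) (hlam : StrictMono lam)
    (w : Fin n → ℂ) (hw : ∀ j, w j ≠ 0)
    (θ : Fin m → ℝ) (hθ : StrictMono θ)
    (c : Fin m → ℂ)
    (hquad : ∀ p : Polynomial ℝ, p.natDegree ≤ 2 * m - 2 →
      ∑ j, ‖w j‖ ^ 2 * p.eval (lam j) = ∑ j, ‖c j‖ ^ 2 * p.eval (θ j)) :
    ∀ j, c j ≠ 0 :=
  stmt_1_general hmn lam hlam w hw θ c hquad
end

section
/- Let θ_1 < ... < θ_m be real numbers and 1 ≤ k < m. Then there exists a real polynomial p of degree at most 2m−2 such that p(θ_j) = 1 for j = 1,...,k, p(θ_j) = 0 for j = k+1,...,m, and p(λ) ≤ 1 for all λ < θ_{k+1} and p(λ) ≤ 0 for all λ ≥ θ_{k+1}, with the inequalities strict for λ ∉ {θ_1,...,θ_m}. -/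
/-!
Put `F = ∏_{x ∈ A} (X - x)²` over the nodes where the minorant equals `1` and
`G = (X - a) ∏_{y ∈ B} (X - y)²`, where `a = θ_{k+1}` and `B` holds the nodes beyond it.
They are coprime, so `F v + G u = 1` with `deg u < deg F`, and `p = G u` has degree at most
`2m - 2`, vanishes at `a` and on `B`, and satisfies `1 - p = F v`. The sign conditions reduce to
`v > 0` on `(-∞, a]` and `u < 0` on `[a, ∞)`.

Rolle's theorem on a half-line shows that, counted with multiplicity, the roots of `p - 1`
in `(-∞, c)` and the roots of `p` in `[c, ∞)` together number at most `deg p' + 2 ≤ 2m - 1`,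
and the roots of `F` and `G` already use all of them. A zero `z` of `v` left of `a`, or of `u`
right of `max A`, would be one root too many (cut at `c = a`, resp. `c = min z a`); by
continuity, the signs of `v` and `u` are then those of `v a > 0` and `u (max A) < 0`.
-/

open Polynomial Lagrange Finset

namespace Polynomial

variable (p : ℝ[X]) {s : Set ℝ} [DecidablePred (· ∈ s)]

theorem card_roots_toFinset_filter_le_derivative_sdiff_succ (hs : s.OrdConnected) :
    (p.roots.filter (· ∈ s)).toFinset.card ≤
      ((p.derivative.roots.filter (· ∈ s)).toFinset \ (p.roots.filter (· ∈ s)).toFinset).card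
        + 1 := by
  rcases eq_or_ne (derivative p) 0 with hp' | hp'
  · rw [eq_C_of_derivative_eq_zero hp']
    simp
  have hp : p ≠ 0 := ne_of_apply_ne derivative (by rwa [derivative_zero])
  refine Finset.card_le_sdiff_of_interleaved fun x hx y hy hxy _ => ?_
  simp only [Multiset.mem_toFinset, Multiset.mem_filter, mem_roots hp] at hx hy
  obtain ⟨z, hz, hz'⟩ := exists_deriv_eq_zero hxy p.continuousOn (hx.1.trans hy.1.symm)
  refine ⟨z, ?_, hz⟩
  simp only [Multiset.mem_toFinset, Multiset.mem_filter, mem_roots hp', IsRoot, ← p.deriv]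
  exact ⟨hz', hs.out hx.2 hy.2 (Set.Ioo_subset_Icc_self hz)⟩

theorem card_roots_filter_le_derivative (hs : s.OrdConnected) :
    Multiset.card (p.roots.filter (· ∈ s)) ≤
      Multiset.card (p.derivative.roots.filter (· ∈ s)) + 1 := by
  classical
  set R := p.roots.filter (· ∈ s)
  set T := p.derivative.roots.filter (· ∈ s)
  have hRT : R ≤ T.filter (· ∈ R) + R.dedup := by
    refine Multiset.le_iff_count.2 fun x => ?_
    by_cases hx : x ∈ R
    · have hxs : x ∈ s := (Multiset.mem_filter.1 hx).2
      rw [Multiset.count_add, Multiset.count_filter_of_pos hx, Multiset.count_dedup, if_pos hx,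
        Multiset.count_filter_of_pos hxs, Multiset.count_filter_of_pos hxs, count_roots,
        count_roots]
      have := rootMultiplicity_sub_one_le_derivative_rootMultiplicity p x
      omega
    · simp [Multiset.count_eq_zero_of_notMem hx]
  have hU : R.toFinset.card ≤ Multiset.card (T.filter (· ∉ R)) + 1 := by
    refine (card_roots_toFinset_filter_le_derivative_sdiff_succ p hs).trans ?_
    gcongr
    refine le_of_eq_of_le ?_ (Multiset.toFinset_card_le _)
    congr 1
    ext x
    simp only [Finset.mem_sdiff, Multiset.mem_toFinset, Multiset.mem_filter, R, T]
  calc Multiset.card R ≤ Multiset.card (T.filter (· ∈ R)) + R.toFinset.card := by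
        simpa [Multiset.toFinset, Finset.card_mk] using Multiset.card_le_card hRT
    _ ≤ Multiset.card (T.filter (· ∈ R)) + Multiset.card (T.filter (· ∉ R)) + 1 := by omega
    _ = Multiset.card T + 1 := by rw [← Multiset.card_add, Multiset.filter_add_not]

theorem card_roots_add_card_roots_le_natDegree_derivative_add_two {P D E : ℝ[X]} {c : ℝ}
    (hP : P ≠ 0) (hP1 : P - 1 ≠ 0) (hD : D ∣ P - 1) (hE : E ∣ P)
    (hDc : ∀ x ∈ D.roots, x < c) (hEc : ∀ x ∈ E.roots, c ≤ x) :
    Multiset.card D.roots + Multiset.card E.roots ≤ (derivative P).natDegree + 2 := by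
  have hDle : Multiset.card D.roots ≤ Multiset.card ((P - 1).roots.filter (· ∈ Set.Iio c)) :=
    Multiset.card_le_card <| (Multiset.filter_eq_self.2 hDc).symm.le.trans
      (Multiset.filter_le_filter _ (roots.le_of_dvd hP1 hD))
  have hEle : Multiset.card E.roots ≤ Multiset.card (P.roots.filter (· ∈ Set.Ici c)) :=
    Multiset.card_le_card <| (Multiset.filter_eq_self.2 hEc).symm.le.trans
      (Multiset.filter_le_filter _ (roots.le_of_dvd hP hE))
  have hleft := card_roots_filter_le_derivative (P - 1) (Set.ordConnected_Iio (a := c))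
  have hright := card_roots_filter_le_derivative P (Set.ordConnected_Ici (a := c))
  rw [derivative_sub, derivative_one, sub_zero] at hleft
  have hsplit : Multiset.card ((derivative P).roots.filter (· ∈ Set.Iio c)) +
      Multiset.card ((derivative P).roots.filter (· ∈ Set.Ici c)) =
      Multiset.card (derivative P).roots := by
    rw [← Multiset.card_add]
    conv_rhs => rw [← Multiset.filter_add_not (· ∈ Set.Iio c) (derivative P).roots]
    simp only [Set.mem_Iio, Set.mem_Ici, not_lt]
  have := card_roots' (derivative P)
  omega

end Polynomial

theorem IsCoprime.exists_mul_add_mul_eq_one_degree_lt {R : Type*} [CommRing R] [Nontrivial R]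
    {f g : R[X]} (h : IsCoprime f g) (hf : f.Monic) :
    ∃ u v : R[X], f * v + g * u = 1 ∧ u.degree < f.degree := by
  obtain ⟨a, b, hab⟩ := h
  refine ⟨b %ₘ f, a + g * (b /ₘ f), ?_, degree_modByMonic_lt b hf⟩
  linear_combination hab + g * modByMonic_add_div b f

theorem IsPreconnected.neg_of_ne_zero {α : Type*} [TopologicalSpace α] {s : Set α}
    (hs : IsPreconnected s) {f : α → ℝ} (hf : ContinuousOn f s) (hne : ∀ x ∈ s, f x ≠ 0)
    {x₀ : α} (hx₀ : x₀ ∈ s) (h₀ : f x₀ < 0) : ∀ x ∈ s, f x < 0 := by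
  intro x hx
  by_contra! hfx
  obtain ⟨z, hz, hz0⟩ := hs.intermediate_value hx₀ hx hf ⟨h₀.le, hfx⟩
  exact hne z hz hz0

theorem IsPreconnected.pos_of_ne_zero {α : Type*} [TopologicalSpace α] {s : Set α}
    (hs : IsPreconnected s) {f : α → ℝ} (hf : ContinuousOn f s) (hne : ∀ x ∈ s, f x ≠ 0)
    {x₀ : α} (hx₀ : x₀ ∈ s) (h₀ : 0 < f x₀) : ∀ x ∈ s, 0 < f x := fun x hx =>
  neg_neg_iff_pos.1 <| hs.neg_of_ne_zero hf.neg (fun y hy => neg_ne_zero.2 (hne y hy)) hx₀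
    (neg_neg_iff_pos.2 h₀) x hx

namespace Lagrange

theorem roots_nodal_id {K : Type*} [Field K] (s : Finset K) : (nodal s id).roots = s.val := by
  simpa [nodal_eq] using roots_prod_X_sub_C s

theorem eval_nodal_id_ne_zero {K : Type*} [Field K] {s : Finset K} {x : K} (hx : x ∉ s) :
    (nodal s id).eval x ≠ 0 := by
  rw [eval_nodal]
  exact prod_ne_zero_iff.2 fun y hy => sub_ne_zero.2 (ne_of_mem_of_not_mem hy hx).symm

theorem isCoprime_nodal_id {K : Type*} [Field K] {s t : Finset K} (h : Disjoint s t) :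
    IsCoprime (nodal s id) (nodal t id) := by
  simp only [nodal_eq]
  refine IsCoprime.prod_left fun x hx => IsCoprime.prod_right fun y hy => ?_
  refine isCoprime_X_sub_C_of_isUnit_sub (sub_ne_zero.2 ?_).isUnit
  rintro rfl
  exact disjoint_left.1 h hx hy

end Lagrange

noncomputable def nodalSq (s : Finset ℝ) : ℝ[X] := nodal s id ^ 2

theorem nodalSq_monic (s : Finset ℝ) : (nodalSq s).Monic := nodal_monic.pow 2

theorem roots_nodalSq (s : Finset ℝ) : (nodalSq s).roots = 2 • s.val := by
  rw [nodalSq, roots_pow, roots_nodal_id]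

theorem natDegree_nodalSq (s : Finset ℝ) : (nodalSq s).natDegree = 2 * #s := by
  rw [nodalSq, natDegree_pow, natDegree_nodal]

theorem eval_nodalSq_nonneg (s : Finset ℝ) (x : ℝ) : 0 ≤ (nodalSq s).eval x := by
  rw [nodalSq, eval_pow]; positivity

theorem eval_nodalSq_pos {s : Finset ℝ} {x : ℝ} (hx : x ∉ s) : 0 < (nodalSq s).eval x := by
  rw [nodalSq, eval_pow]; exact sq_pos_of_ne_zero (eval_nodal_id_ne_zero hx)

theorem eval_nodalSq_of_mem {s : Finset ℝ} {x : ℝ} (hx : x ∈ s) : (nodalSq s).eval x = 0 := by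
  rw [nodalSq, eval_pow, ← id_eq x, eval_nodal_at_node hx]; simp

theorem X_sub_C_mul_nodalSq_ne_zero (z : ℝ) (s : Finset ℝ) : (X - C z) * nodalSq s ≠ 0 :=
  ((monic_X_sub_C z).mul (nodalSq_monic s)).ne_zero

theorem roots_X_sub_C_mul_nodalSq (z : ℝ) (s : Finset ℝ) :
    ((X - C z) * nodalSq s).roots = z ::ₘ 2 • s.val := by
  rw [roots_mul (X_sub_C_mul_nodalSq_ne_zero z s), roots_X_sub_C, roots_nodalSq,
    Multiset.singleton_add]

namespace StepMinorant

variable {A B : Finset ℝ} {a : ℝ} {P u v : ℝ[X]}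

theorem isCoprime_nodalSq (hAa : ∀ x ∈ A, x < a) (haB : ∀ y ∈ B, a < y) :
    IsCoprime (nodalSq A) ((X - C a) * nodalSq B) := by
  have haB' : a ∉ B := fun h => (haB a h).false
  have hdisj : Disjoint A (insert a B) := by
    refine Finset.disjoint_left.2 fun x hx hx' => ?_
    obtain rfl | hxB := Finset.mem_insert.1 hx'
    · exact (hAa x hx).false
    · exact ((hAa x hx).trans (haB x hxB)).false
  have h := isCoprime_nodal_id hdisj
  rw [nodal_insert_eq_nodal haB', IsCoprime.mul_right_iff] at h
  exact h.1.pow_left.mul_right h.2.pow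

theorem natDegree_le (hA : A.Nonempty) (hu : P = (X - C a) * nodalSq B * u)
    (hudeg : u.degree < (nodalSq A).degree) : P.natDegree ≤ 2 * #A + 2 * #B := by
  have hu' : u.natDegree < 2 * #A := by
    rcases eq_or_ne u 0 with rfl | hu0
    · simpa using hA.card_pos
    · simpa [natDegree_nodalSq] using natDegree_lt_natDegree hu0 hudeg
  rw [hu]
  refine natDegree_mul_le.trans ?_
  have := natDegree_mul_le (p := X - C a) (q := nodalSq B)
  rw [natDegree_X_sub_C, natDegree_nodalSq] at this
  omega

theorem card_roots_add_card_roots_le (hA : A.Nonempty)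
    (hv : 1 - P = nodalSq A * v) (hu : P = (X - C a) * nodalSq B * u)
    (hdeg : P.natDegree ≤ 2 * #A + 2 * #B) {D E : ℝ[X]} {c : ℝ}
    (hD : D ∣ P - 1) (hE : E ∣ P)
    (hDc : ∀ x ∈ D.roots, x < c) (hEc : ∀ x ∈ E.roots, c ≤ x) :
    Multiset.card D.roots + Multiset.card E.roots ≤ 2 * #A + 2 * #B + 1 := by
  obtain ⟨x₀, hx₀⟩ := hA
  have hP : P ≠ 0 := by
    rintro rfl
    simpa [eval_nodalSq_of_mem hx₀] using congr_arg (eval x₀) hv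
  have hP1 : P - 1 ≠ 0 := by
    intro h
    simpa [sub_eq_zero.1 h] using congr_arg (eval a) hu
  have := card_roots_add_card_roots_le_natDegree_derivative_add_two hP hP1 hD hE hDc hEc
  have := natDegree_derivative_le P
  have : 0 < #A := card_pos.2 ⟨x₀, hx₀⟩
  omega

theorem eval_pos_of_le (hA : A.Nonempty) (hAa : ∀ x ∈ A, x < a) (haB : ∀ y ∈ B, a < y)
    (hv : 1 - P = nodalSq A * v) (hu : P = (X - C a) * nodalSq B * u)
    (hdeg : P.natDegree ≤ 2 * #A + 2 * #B) : ∀ x ≤ a, 0 < v.eval x := by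
  have hva : 0 < v.eval a := by
    have h := congr_arg (eval a) hv
    simp only [hu, eval_sub, eval_one, eval_mul, eval_X, eval_C, sub_self, zero_mul,
      sub_zero] at h
    exact pos_of_mul_pos_right (h ▸ one_pos) (eval_nodalSq_nonneg A a)
  refine isPreconnected_Iic.pos_of_ne_zero v.continuous.continuousOn (fun z hz hz0 => ?_)
    Set.self_mem_Iic hva
  obtain rfl | hza := (Set.mem_Iic.1 hz).eq_or_lt
  · exact hva.ne' hz0
  have hD : (X - C z) * nodalSq A ∣ P - 1 := by
    rw [← dvd_neg, neg_sub, hv, mul_comm]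
    exact mul_dvd_mul_left _ (dvd_iff_isRoot.2 hz0)
  have hE : (X - C a) * nodalSq B ∣ P := hu ▸ dvd_mul_right _ u
  have hcard := card_roots_add_card_roots_le hA hv hu hdeg hD hE (c := a)
    (by simpa [roots_X_sub_C_mul_nodalSq, hza] using hAa)
    (by simpa [roots_X_sub_C_mul_nodalSq] using fun y hy => (haB y hy).le)
  simp only [roots_X_sub_C_mul_nodalSq, Multiset.card_cons, Multiset.card_nsmul,
    Finset.card_val] at hcard
  omega

theorem eval_neg_of_ge (hA : A.Nonempty) (hAa : ∀ x ∈ A, x < a) (haB : ∀ y ∈ B, a < y)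
    (hv : 1 - P = nodalSq A * v) (hu : P = (X - C a) * nodalSq B * u)
    (hdeg : P.natDegree ≤ 2 * #A + 2 * #B) : ∀ x ≥ a, u.eval x < 0 := by
  obtain ⟨x₀, hx₀, hmax⟩ := A.exists_max_image id hA
  have hux₀ : u.eval x₀ < 0 := by
    have h := congr_arg (eval x₀) hv
    simp only [hu, eval_sub, eval_one, eval_mul, eval_X, eval_C,
      eval_nodalSq_of_mem hx₀, zero_mul, sub_eq_zero] at h
    refine neg_of_mul_pos_right (h ▸ one_pos) (mul_nonpos_of_nonpos_of_nonneg ?_ ?_)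
    · exact sub_nonpos.2 (hAa x₀ hx₀).le
    · exact eval_nodalSq_nonneg B x₀
  have hneg := isPreconnected_Ici.neg_of_ne_zero u.continuous.continuousOn
    (fun z hz hz0 => ?_) Set.self_mem_Ici hux₀
  · exact fun x hx => hneg x (Set.mem_Ici.2 ((hAa x₀ hx₀).le.trans hx))
  obtain rfl | hz := (Set.mem_Ici.1 hz).eq_or_lt
  · exact hux₀.ne hz0
  have hD : nodalSq A ∣ P - 1 := by
    rw [← dvd_neg, neg_sub, hv]
    exact dvd_mul_right _ v
  have hE : (X - C z) * ((X - C a) * nodalSq B) ∣ P := by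
    rw [hu, mul_comm (X - C z)]
    exact mul_dvd_mul_left _ (dvd_iff_isRoot.2 hz0)
  have hcard := card_roots_add_card_roots_le hA hv hu hdeg hD hE (c := min z a)
    (by simpa [roots_nodalSq] using fun x hx => ⟨(hmax x hx).trans_lt hz, hAa x hx⟩)
    (by
      rw [roots_mul (mul_ne_zero (X_sub_C_ne_zero z) (X_sub_C_mul_nodalSq_ne_zero a B))]
      simpa [roots_X_sub_C_mul_nodalSq] using fun y hy => Or.inr (haB y hy).le)
  rw [roots_mul (mul_ne_zero (X_sub_C_ne_zero z) (X_sub_C_mul_nodalSq_ne_zero a B))] at hcard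
  simp only [roots_nodalSq, roots_X_sub_C_mul_nodalSq, roots_X_sub_C, Multiset.card_add,
    Multiset.card_singleton, Multiset.card_cons, Multiset.card_nsmul, Finset.card_val] at hcard
  omega

end StepMinorant

open StepMinorant in
theorem exists_step_minorant {A B : Finset ℝ} {a : ℝ} (hA : A.Nonempty)
    (hAa : ∀ x ∈ A, x < a) (haB : ∀ y ∈ B, a < y) :
    ∃ p : ℝ[X], p.natDegree ≤ 2 * #A + 2 * #B ∧
      (∀ x ∈ A, p.eval x = 1) ∧ p.eval a = 0 ∧ (∀ y ∈ B, p.eval y = 0) ∧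
      (∀ x < a, p.eval x ≤ 1) ∧ (∀ x ≥ a, p.eval x ≤ 0) ∧
      (∀ x < a, x ∉ A → p.eval x < 1) ∧ (∀ x > a, x ∉ B → p.eval x < 0) := by
  obtain ⟨u, v, hbez, hudeg⟩ :=
    (isCoprime_nodalSq hAa haB).exists_mul_add_mul_eq_one_degree_lt (nodalSq_monic A)
  set P := (X - C a) * nodalSq B * u with hu
  have hv : 1 - P = nodalSq A * v := by rw [← hbez]; ring
  have hdeg := natDegree_le hA hu hudeg
  have hvpos := eval_pos_of_le hA hAa haB hv hu hdeg
  have huneg := eval_neg_of_ge hA hAa haB hv hu hdeg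
  have h1 (x : ℝ) : 1 - P.eval x = (nodalSq A).eval x * v.eval x := by
    rw [← eval_one (x := x), ← eval_sub, hv, eval_mul]
  have h0 (x : ℝ) : P.eval x = (x - a) * (nodalSq B).eval x * u.eval x := by
    simp [P]
  refine ⟨P, hdeg, fun x hx => ?_, by simp [h0], fun y hy => ?_, fun x hx => ?_, fun x hx => ?_,
    fun x hx hxA => ?_, fun x hx hxB => ?_⟩
  · have h := h1 x
    rw [eval_nodalSq_of_mem hx, zero_mul] at h
    linarith
  · simp [h0, eval_nodalSq_of_mem hy]
  · linarith [h1 x, mul_nonneg (eval_nodalSq_nonneg A x) (hvpos x hx.le).le]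
  · rw [h0]
    exact mul_nonpos_of_nonneg_of_nonpos
      (mul_nonneg (sub_nonneg.2 hx) (eval_nodalSq_nonneg B x)) (huneg x hx).le
  · linarith [h1 x, mul_pos (eval_nodalSq_pos hxA) (hvpos x hx.le)]
  · rw [h0]
    exact mul_neg_of_pos_of_neg (mul_pos (sub_pos.2 hx) (eval_nodalSq_pos hxB)) (huneg x hx.le)

/-- Polynomial minorant `p_{−,k}` of the Heaviside-type step function:
for nodes `θ_1 < … < θ_m` and `1 ≤ k < m` there is a real polynomial of degree at
most `2m−2` with `p(θ_j) = 1` for `j ≤ k`, `p(θ_j) = 0` for `j > k`, `p ≤ 1` on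
`(-∞, θ_{k+1})`, `p ≤ 0` on `[θ_{k+1}, ∞)`, with strict inequalities off the nodes. -/
theorem stmt_3 {m : ℕ} (θ : Fin m → ℝ) (hθ : StrictMono θ)
    (k : Fin m) (hk : (k : ℕ) + 1 < m) :
    ∃ p : Polynomial ℝ, p.natDegree ≤ 2 * m - 2 ∧
      (∀ j : Fin m, j ≤ k → p.eval (θ j) = 1) ∧
      (∀ j : Fin m, k < j → p.eval (θ j) = 0) ∧
      (∀ x : ℝ, x < θ ⟨(k : ℕ) + 1, hk⟩ → p.eval x ≤ 1) ∧
      (∀ x : ℝ, θ ⟨(k : ℕ) + 1, hk⟩ ≤ x → p.eval x ≤ 0) ∧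
      (∀ x : ℝ, x ∉ Set.range θ →
        (x < θ ⟨(k : ℕ) + 1, hk⟩ → p.eval x < 1) ∧
        (θ ⟨(k : ℕ) + 1, hk⟩ ≤ x → p.eval x < 0)) := by
  set k' : Fin m := ⟨k + 1, hk⟩
  have hkk' : k < k' := Fin.lt_def.2 (Nat.lt_succ_self k)
  obtain ⟨p, hdeg, h1, ha, hB, hle1, hle0, hlt1, hlt0⟩ :=
    exists_step_minorant (A := (Iic k).image θ) (B := (Ioi k').image θ) (a := θ k')
      ⟨θ k, mem_image_of_mem θ (mem_Iic.2 le_rfl)⟩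
      (by simpa using fun j hj => hθ (hj.trans_lt hkk'))
      (by simpa using fun j hj => hθ hj)
  have hoff (x : ℝ) (hx : x ∉ Set.range θ) (s : Finset (Fin m)) : x ∉ s.image θ := fun h =>
    hx (by simpa using (mem_image.1 h).imp fun _ => And.right)
  refine ⟨p, ?_, fun j hj => h1 _ (mem_image_of_mem θ (mem_Iic.2 hj)), fun j hj => ?_, hle1,
    hle0, fun x hx => ⟨fun h => hlt1 x h (hoff x hx _), fun h => hlt0 x ?_ (hoff x hx _)⟩⟩
  · rw [card_image_of_injective _ hθ.injective, card_image_of_injective _ hθ.injective,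
      Fin.card_Iic, Fin.card_Ioi] at hdeg
    omega
  · obtain rfl | hj' := (show k' ≤ j from hj).eq_or_lt
    · exact ha
    · exact hB _ (mem_image_of_mem θ (mem_Ioi.2 hj'))
  · exact h.lt_of_ne fun h' => hx ⟨k', h'⟩
end

section
/- Let λ_1 < ... < λ_n and w_1,...,w_n ∈ ℂ \ {0}, and define the step function α_n(λ) = ∑_{j: λ_j ≤ λ} |w_j|². Suppose θ_1 < ... < θ_m lie in an interval (a,b) containing all λ_j, θ_k < λ_{j(k)} < θ_{k+1} for some index j(k) for each k (interlacing), and c_1,...,c_m ∈ ℂ satisfy ∑_{j=1}^n |w_j|² p(λ_j) = ∑_{j=1}^m |c_j|² p(θ_j) for all polynomials p of degree ≤ 2m−2. Then for each k = 1,...,m−1: α_n(θ_k) < |c_1|² + ... + |c_k|² < α_n(θ_{k+1}−), where α_n(θ−) = ∑_{j: λ_j < θ} |w_j|². -/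
/-!
For the lower bound it suffices to find `p` of degree `≤ 2m - 2` with `p = 1` at `θ_1, …, θ_k`,
`p = 0` at `θ_{k+1}, …, θ_m`, `p ≥ 1` at the atoms `≤ θ_k`, `p ≥ 0` at all atoms and `p > 0`
strictly between `θ_k` and `θ_{k+1}`: exactness of the quadrature for `p` then compares the two
weight sums, strictly because of the atom between `θ_k` and `θ_{k+1}`.

Take `p = ω² q` with `ω = ∏_{j > k} (X - θ_j)`, where `q` interpolates `1 / ω²` at `θ_1, …, θ_k`
and at one extra node just right of each `θ_j`, `j < k`, with no atom in between. All divided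
differences of `1 / ω²` at points left of `θ_{k+1}` are nonnegative (Leibniz rule, starting from
`1 / (c - x)`), so Newton's remainder formula gives `q ≥ 1 / ω²` at the atoms `≤ θ_k`, where the
nodal polynomial of `q` is negative, and `q > 0` right of its nodes.

The upper bound is the lower bound for the mirror image `x ↦ -x` of the configuration, combined
with the equality of the total masses.
-/

open Polynomial

/-- `divDiff [x₀, …, xₙ₋₁] f x` is the divided difference `f[x₀, …, xₙ₋₁, x]`. It is only
meaningful for distinct points: `slope f y y = 0`. -/
noncomputable def divDiff : List ℝ → (ℝ → ℝ) → ℝ → ℝ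
  | [], f => f
  | y :: L, f => divDiff L (slope f y)

noncomputable def newtonInterpolant : List ℝ → (ℝ → ℝ) → ℝ[X]
  | [], _ => 0
  | y :: L, f => C (f y) + (X - C y) * newtonInterpolant L (slope f y)

theorem eval_newtonInterpolant_cons (y : ℝ) (L : List ℝ) (f : ℝ → ℝ) (x : ℝ) :
    (newtonInterpolant (y :: L) f).eval x
      = f y + (x - y) * (newtonInterpolant L (slope f y)).eval x := by
  simp [newtonInterpolant]

/-- Newton's remainder formula. It needs no hypothesis on the nodes, because
`f x = f y + (x - y) * slope f y x` holds also for `x = y`. -/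
theorem eq_eval_newtonInterpolant_add_mul_divDiff (L : List ℝ) (f : ℝ → ℝ) (x : ℝ) :
    f x = (newtonInterpolant L f).eval x + (L.map (x - ·)).prod * divDiff L f x := by
  induction L generalizing f with
  | nil => simp [newtonInterpolant, divDiff]
  | cons y L ih =>
    have h := sub_smul_slope_vadd f y x
    simp only [vadd_eq_add, smul_eq_mul] at h
    rw [eval_newtonInterpolant_cons, divDiff, List.map_cons, List.prod_cons]
    linear_combination -h + (x - y) * ih (slope f y)

theorem eval_newtonInterpolant_of_mem {L : List ℝ} {x : ℝ} (hx : x ∈ L) (f : ℝ → ℝ) :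
    (newtonInterpolant L f).eval x = f x := by
  have hω : (L.map (x - ·)).prod = 0 := List.prod_eq_zero (List.mem_map.2 ⟨x, hx, sub_self x⟩)
  rw [eq_eval_newtonInterpolant_add_mul_divDiff L f x, hω, zero_mul, add_zero]

theorem natDegree_newtonInterpolant_le (L : List ℝ) (f : ℝ → ℝ) :
    (newtonInterpolant L f).natDegree ≤ L.length - 1 := by
  induction L generalizing f with
  | nil => simp [newtonInterpolant]
  | cons y L ih =>
    rw [newtonInterpolant]
    refine (natDegree_add_le _ _).trans (max_le (by simp) ?_)
    rcases L with _ | ⟨z, L⟩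
    · simp [newtonInterpolant]
    · refine natDegree_mul_le.trans ?_
      have := ih (slope f y)
      simp only [natDegree_X_sub_C, List.length_cons] at this ⊢
      omega

theorem divDiff_congr {f g : ℝ → ℝ} {S : Set ℝ} (hfg : Set.EqOn f g S) {L : List ℝ} {x : ℝ}
    (hL : ∀ z ∈ x :: L, z ∈ S) : divDiff L f x = divDiff L g x := by
  induction L generalizing f g with
  | nil => exact hfg (hL x List.mem_cons_self)
  | cons y L ih =>
    refine ih (fun z hz => ?_) (fun z hz => hL z ?_)
    · rw [slope_def_field, slope_def_field, hfg hz, hfg (hL y (by simp))]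
    · simp only [List.mem_cons] at hz ⊢; tauto

theorem divDiff_add (L : List ℝ) (f g : ℝ → ℝ) :
    divDiff L (f + g) = divDiff L f + divDiff L g := by
  induction L generalizing f g with
  | nil => rfl
  | cons y L ih =>
    have : slope (f + g) y = slope f y + slope g y := by
      funext z; simp only [slope_def_field, Pi.add_apply]; ring
    simp only [divDiff, this, ih]

theorem divDiff_const_mul (L : List ℝ) (a : ℝ) (f : ℝ → ℝ) :
    divDiff L (fun z => a * f z) = fun z => a * divDiff L f z := by
  induction L generalizing f with
  | nil => rfl
  | cons y L ih =>
    have : slope (fun z => a * f z) y = fun z => a * slope f y z := by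
      funext z; simp only [slope_def_field]; ring
    simp only [divDiff, this, ih]

theorem slope_mul {k : Type*} [Field k] (f g : k → k) (y : k) :
    slope (f * g) y = slope f y * g + fun z => f y * slope g y z := by
  funext z; simp only [slope_def_field, Pi.add_apply, Pi.mul_apply]; ring

theorem List.Nodup.forall_mem_sdiff_of_cons {α : Type*} {S : Set α} {y : α} {L : List α}
    (hnd : (y :: L).Nodup) (hS : ∀ z ∈ y :: L, z ∈ S) : ∀ z ∈ L, z ∈ S \ {y} :=
  fun z hz => ⟨hS z (.tail _ hz), fun h => (List.nodup_cons.1 hnd).1 (h ▸ hz)⟩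

theorem List.Nodup.mem_sdiff_of_cons_cons {α : Type*} {S : Set α} {x y : α} {L : List α}
    (hnd : (x :: y :: L).Nodup) (hS : ∀ z ∈ x :: y :: L, z ∈ S) :
    (x :: L).Nodup ∧ ∀ z ∈ x :: L, z ∈ S \ {y} := by
  simp only [List.nodup_cons, List.mem_cons, not_or] at hnd hS ⊢
  refine ⟨⟨hnd.1.2, hnd.2.2⟩, fun z hz => ?_⟩
  rcases hz with rfl | hz
  · exact ⟨hS z (Or.inl rfl), hnd.1.1⟩
  · exact ⟨hS z (Or.inr (Or.inr hz)), fun h => hnd.2.1 (h ▸ hz)⟩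

def DivDiffNonnegOn (f : ℝ → ℝ) (S : Set ℝ) : Prop :=
  ∀ (L : List ℝ) (x : ℝ), (x :: L).Nodup → (∀ z ∈ x :: L, z ∈ S) → 0 ≤ divDiff L f x

namespace DivDiffNonnegOn

variable {f g : ℝ → ℝ} {S T : Set ℝ}

theorem nonneg (hf : DivDiffNonnegOn f S) {x : ℝ} (hx : x ∈ S) : 0 ≤ f x :=
  hf [] x (List.nodup_singleton x) (by simpa using hx)

theorem mono (hf : DivDiffNonnegOn f T) (hST : S ⊆ T) : DivDiffNonnegOn f S :=
  fun L x hnd hL => hf L x hnd fun z hz => hST (hL z hz)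

theorem slope (hf : DivDiffNonnegOn f S) {y : ℝ} (hy : y ∈ S) :
    DivDiffNonnegOn (slope f y) (S \ {y}) := by
  intro L x hnd hL
  refine hf (y :: L) x ?_ ?_
  · have hyL : y ∉ x :: L := fun h => (hL y h).2 rfl
    simp only [List.mem_cons, not_or] at hyL
    simp only [List.nodup_cons, List.mem_cons, not_or] at hnd ⊢
    exact ⟨⟨Ne.symm hyL.1, hnd.1⟩, hyL.2, hnd.2⟩
  · simp only [List.mem_cons] at hL ⊢
    rintro z (rfl | rfl | hz)
    exacts [(hL z (Or.inl rfl)).1, hy, (hL z (Or.inr hz)).1]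

theorem mul (hf : DivDiffNonnegOn f S) (hg : DivDiffNonnegOn g S) :
    DivDiffNonnegOn (f * g) S := by
  intro L
  induction L generalizing f g S with
  | nil =>
    exact fun x _ hx => mul_nonneg (hf.nonneg (hx x (by simp))) (hg.nonneg (hx x (by simp)))
  | cons y L ih =>
    intro x hnd hL
    have hy : y ∈ S := hL y (by simp)
    obtain ⟨hnd', hLy⟩ := hnd.mem_sdiff_of_cons_cons hL
    rw [divDiff, _root_.slope_mul, divDiff_add, divDiff_const_mul, Pi.add_apply]
    exact add_nonneg (ih (hf.slope hy) (hg.mono Set.sdiff_subset) x hnd' hLy)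
      (mul_nonneg (hf.nonneg hy) ((hg.slope hy) L x hnd' hLy))

end DivDiffNonnegOn

theorem divDiffNonnegOn_const {a : ℝ} (ha : 0 ≤ a) (S : Set ℝ) :
    DivDiffNonnegOn (fun _ => a) S := by
  rintro (_ | ⟨y, L⟩) x - -
  · exact ha
  · have hslope : slope (fun _ : ℝ => a) y = fun _ => 0 := by
      funext z; simp [slope_def_field]
    have hzero := congrFun (divDiff_const_mul L 0 fun _ => 1) x
    simp only [zero_mul] at hzero
    rw [divDiff, hslope, hzero]

theorem divDiffNonnegOn_prod {ι : Type*} (s : Finset ι) {f : ι → ℝ → ℝ} {S : Set ℝ}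
    (hf : ∀ i ∈ s, DivDiffNonnegOn (f i) S) : DivDiffNonnegOn (∏ i ∈ s, f i) S :=
  Finset.prod_induction _ (fun g => DivDiffNonnegOn g S) (fun _ _ => DivDiffNonnegOn.mul)
    (divDiffNonnegOn_const zero_le_one S) hf

theorem divDiffNonnegOn_inv_sub (c : ℝ) :
    DivDiffNonnegOn (fun x => (c - x)⁻¹) (Set.Iio c) := by
  suffices h : ∀ a, 0 ≤ a → DivDiffNonnegOn (fun x => a * (c - x)⁻¹) (Set.Iio c) by
    simpa using h 1 zero_le_one
  intro a ha L
  induction L generalizing a with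
  | nil => exact fun x _ hx => mul_nonneg ha (inv_nonneg.2 (sub_nonneg.2 (hx x (by simp)).le))
  | cons y L ih =>
    intro x hnd hL
    have hy : y < c := hL y (by simp)
    have hslope : Set.EqOn (slope (fun x => a * (c - x)⁻¹) y)
        (fun x => (a * (c - y)⁻¹) * (c - x)⁻¹) (Set.Iio c \ {y}) := by
      rintro z ⟨hz, hzy⟩
      have hz' : c - z ≠ 0 := sub_ne_zero.2 (ne_of_gt hz)
      have hy' : c - y ≠ 0 := sub_ne_zero.2 (ne_of_gt hy)
      have hzy' : z - y ≠ 0 := sub_ne_zero.2 hzy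
      simp only [slope_def_field]
      field_simp
      ring
    obtain ⟨hnd', hLy⟩ := hnd.mem_sdiff_of_cons_cons hL
    rw [divDiff, divDiff_congr hslope hLy]
    exact ih _ (mul_nonneg ha (inv_nonneg.2 (sub_nonneg.2 hy.le))) x hnd' fun z hz => (hLy z hz).1

theorem divDiffNonnegOn_inv_sq_eval_nodal (R : Finset ℝ) :
    DivDiffNonnegOn (fun x => ((Lagrange.nodal R id).eval x ^ 2)⁻¹) {x | ∀ y ∈ R, x < y} := by
  have hprod : (fun x => ((Lagrange.nodal R id).eval x ^ 2)⁻¹)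
      = ∏ y ∈ R, ((fun x => (y - x)⁻¹) * fun x => (y - x)⁻¹) := by
    funext x
    simp only [Lagrange.eval_nodal, id_eq, Finset.prod_apply, Pi.mul_apply, ← Finset.prod_pow,
      ← Finset.prod_inv_distrib]
    exact Finset.prod_congr rfl fun y _ => by rw [← mul_inv, ← sq]; ring
  rw [hprod]
  exact divDiffNonnegOn_prod R fun y hy =>
    ((divDiffNonnegOn_inv_sub y).mul (divDiffNonnegOn_inv_sub y)).mono fun x hx => hx y hy

theorem eval_newtonInterpolant_nonneg {f : ℝ → ℝ} {S : Set ℝ} (hf : DivDiffNonnegOn f S)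
    {L : List ℝ} (hnd : L.Nodup) (hLS : ∀ z ∈ L, z ∈ S) {x : ℝ} (hLx : ∀ z ∈ L, z ≤ x) :
    0 ≤ (newtonInterpolant L f).eval x := by
  induction L generalizing f S with
  | nil => simp [newtonInterpolant]
  | cons y L ih =>
    have hy : y ∈ S := hLS y List.mem_cons_self
    rw [eval_newtonInterpolant_cons]
    exact add_nonneg (hf.nonneg hy) (mul_nonneg (sub_nonneg.2 (hLx y List.mem_cons_self))
      (ih (hf.slope hy) (List.nodup_cons.1 hnd).2 (hnd.forall_mem_sdiff_of_cons hLS)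
        fun z hz => hLx z (.tail _ hz)))

theorem eval_newtonInterpolant_pos {f : ℝ → ℝ} {S : Set ℝ} (hf : DivDiffNonnegOn f S)
    (hfS : ∀ z ∈ S, 0 < f z) {L : List ℝ} (hL : L ≠ []) (hnd : L.Nodup)
    (hLS : ∀ z ∈ L, z ∈ S) {x : ℝ} (hLx : ∀ z ∈ L, z ≤ x) :
    0 < (newtonInterpolant L f).eval x := by
  obtain ⟨y, L, rfl⟩ := List.exists_cons_of_ne_nil hL
  have hy : y ∈ S := hLS y List.mem_cons_self
  rw [eval_newtonInterpolant_cons]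
  exact add_pos_of_pos_of_nonneg (hfS y hy) (mul_nonneg (sub_nonneg.2 (hLx y List.mem_cons_self))
    (eval_newtonInterpolant_nonneg (hf.slope hy) (List.nodup_cons.1 hnd).2
      (hnd.forall_mem_sdiff_of_cons hLS) fun z hz => hLx z (.tail _ hz)))

theorem le_eval_newtonInterpolant_of_prod_neg {f : ℝ → ℝ} {S : Set ℝ}
    (hf : DivDiffNonnegOn f S) {L : List ℝ} (hnd : L.Nodup) (hLS : ∀ z ∈ L, z ∈ S) {x : ℝ}
    (hxL : x ∉ L) (hx : x ∈ S) (hω : (L.map (x - ·)).prod < 0) :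
    f x ≤ (newtonInterpolant L f).eval x := by
  have hD := hf L x (List.nodup_cons.2 ⟨hxL, hnd⟩) fun z hz => by
    rcases List.mem_cons.1 hz with rfl | hz
    exacts [hx, hLS z hz]
  nlinarith [eq_eval_newtonInterpolant_add_mul_divDiff L f x]

theorem Finset.exists_gt_forall_lt_of_gt {α : Type*} [LinearOrder α] [DenselyOrdered α]
    [NoMaxOrder α] (F : Finset α) (x : α) : ∃ g, x < g ∧ ∀ z ∈ F, x < z → g < z := by
  by_cases h : (F.filter (x < ·)).Nonempty
  · obtain ⟨y, hy, hmin⟩ := (F.filter (x < ·)).exists_min_image id h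
    obtain ⟨g, hxg, hgy⟩ := _root_.exists_between (Finset.mem_filter.1 hy).2
    exact ⟨g, hxg, fun z hz hxz => hgy.trans_le (hmin z (Finset.mem_filter.2 ⟨hz, hxz⟩))⟩
  · obtain ⟨g, hxg⟩ := exists_gt x
    exact ⟨g, hxg, fun z hz hxz => absurd ⟨z, Finset.mem_filter.2 ⟨hz, hxz⟩⟩ h⟩

section Majorant

open Finset

theorem exists_nodes_prod_neg (A L : Finset ℝ) {t : ℝ} (ht : t ∈ L) (hLt : ∀ x ∈ L, x ≤ t) :
    ∃ N : Finset ℝ, L ⊆ N ∧ (∀ z ∈ N, z ≤ t) ∧ #N + 1 ≤ 2 * #L ∧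
      ∀ a ∈ A, a ≤ t → a ∉ N → ∏ z ∈ N, (a - z) < 0 := by
  classical
  choose g hxg hg using (L ∪ A).exists_gt_forall_lt_of_gt
  -- every node `x < t` gets a partner `g x` so close to it that no atom lies in `(x, g x]`
  set E := L.erase t
  have hEt : ∀ x ∈ E, x < t := fun x hx =>
    lt_of_le_of_ne (hLt x (mem_of_mem_erase hx)) (ne_of_mem_erase hx)
  have hgt : ∀ x ∈ E, g x < t := fun x hx => hg x t (mem_union_left _ ht) (hEt x hx)
  have hdisj : Disjoint E (E.image g) := by
    refine disjoint_left.2 fun z hzE hzg => ?_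
    obtain ⟨x, hx, rfl⟩ := mem_image.1 hzg
    exact lt_irrefl _ (hg x (g x) (mem_union_left _ (mem_of_mem_erase hzE)) (hxg x))
  have hmono : StrictMonoOn g E := fun x _ x' hx' h =>
    (hg x x' (mem_union_left _ (mem_of_mem_erase hx')) h).trans (hxg x')
  have htN : t ∉ E ∪ E.image g := by
    simp only [mem_union, mem_image, not_or, not_exists, not_and]
    exact ⟨fun h => (hEt t h).false, fun x hx h => (hgt x hx).ne h⟩
  refine ⟨insert t (E ∪ E.image g), fun x hx => ?_, fun z hz => ?_, ?_, fun a ha hat haN => ?_⟩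
  · rcases eq_or_ne x t with rfl | hxt
    exacts [mem_insert_self _ _, mem_insert_of_mem (mem_union_left _ (mem_erase.2 ⟨hxt, hx⟩))]
  · simp only [mem_insert, mem_union, mem_image] at hz
    rcases hz with rfl | hz | ⟨x, hx, rfl⟩
    exacts [le_rfl, (hEt z hz).le, (hgt x hx).le]
  · have hE : #E + 1 = #L := card_erase_add_one ht
    have := card_union_le E (E.image g)
    have := card_image_le (s := E) (f := g)
    have := card_insert_le t (E ∪ E.image g)
    omega
  · simp only [mem_insert, mem_union, mem_image, not_or, not_exists, not_and] at haN
    rw [prod_insert htN, prod_union hdisj, prod_image hmono.injOn, ← prod_mul_distrib]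
    refine mul_neg_of_neg_of_pos (sub_neg.2 (lt_of_le_of_ne hat haN.1))
      (prod_pos fun x hx => ?_)
    rcases lt_or_gt_of_ne (fun h => haN.2.1 (h ▸ hx) : x ≠ a) with hxa | hax
    · have := hg x a (mem_union_right _ ha) hxa
      exact mul_pos (by linarith) (by linarith)
    · have := hxg x
      exact mul_pos_of_neg_of_neg (by linarith) (by linarith)

theorem exists_majorant (A L R : Finset ℝ) {t : ℝ} (ht : t ∈ L) (hLt : ∀ x ∈ L, x ≤ t)
    (hRt : ∀ y ∈ R, t < y) :
    ∃ p : ℝ[X], p.natDegree ≤ 2 * (#L + #R) - 2 ∧ (∀ x ∈ L, p.eval x = 1) ∧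
      (∀ y ∈ R, p.eval y = 0) ∧ (∀ a ∈ A, a ≤ t → 1 ≤ p.eval a) ∧
      (∀ x, t ≤ x → 0 ≤ p.eval x) ∧ (∀ x, t ≤ x → x ∉ R → 0 < p.eval x) := by
  obtain ⟨N, hLN, hNt, hcard, hω⟩ := exists_nodes_prod_neg A L ht hLt
  set B := Lagrange.nodal R id
  set f : ℝ → ℝ := fun x => (B.eval x ^ 2)⁻¹
  set S : Set ℝ := {x | ∀ y ∈ R, x < y}
  have hf : DivDiffNonnegOn f S := divDiffNonnegOn_inv_sq_eval_nodal R
  have hB : ∀ x ∉ R, B.eval x ≠ 0 := fun x hx =>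
    Lagrange.eval_nodal_not_at_node fun y hy h => hx (h ▸ hy)
  have hBf : ∀ x ∉ R, B.eval x ^ 2 * f x = 1 := fun x hx =>
    mul_inv_cancel₀ (pow_ne_zero 2 (hB x hx))
  have hSR : ∀ x ∈ S, x ∉ R := fun x hx hxR => lt_irrefl x (hx x hxR)
  have htS : ∀ x ≤ t, x ∈ S := fun x hx y hy => hx.trans_lt (hRt y hy)
  have hNS : ∀ z ∈ N.toList, z ∈ S := fun z hz => htS z (hNt z (mem_toList.1 hz))
  set q := newtonInterpolant N.toList f
  have hq : ∀ x, t ≤ x → 0 < q.eval x := fun x hx =>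
    eval_newtonInterpolant_pos hf (fun z hz => inv_pos.2 (pow_two_pos_of_ne_zero (hB z (hSR z hz))))
      (toList_eq_nil.not.2 (ne_empty_of_mem (hLN ht))) N.nodup_toList hNS
      fun z hz => (hNt z (mem_toList.1 hz)).trans hx
  refine ⟨B ^ 2 * q, ?_, fun x hx => ?_, fun y hy => ?_, fun a ha hat => ?_,
    fun x hx => ?_, fun x hx hxR => ?_⟩
  · have hq_deg : q.natDegree ≤ #N - 1 := by
      simpa using natDegree_newtonInterpolant_le N.toList f
    have hB_deg : (B ^ 2).natDegree ≤ 2 * #R := by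
      rw [natDegree_pow, Lagrange.natDegree_nodal, mul_comm]
    have := natDegree_mul_le (p := B ^ 2) (q := q)
    omega
  · rw [eval_mul, eval_pow, eval_newtonInterpolant_of_mem (mem_toList.2 (hLN hx)),
      hBf x (hSR x (htS x (hLt x hx)))]
  · have hBy : B.eval y = 0 := Lagrange.eval_nodal_at_node (v := id) hy
    rw [eval_mul, eval_pow, hBy, zero_pow two_ne_zero, zero_mul]
  · have hfq : f a ≤ q.eval a := by
      by_cases haN : a ∈ N
      · exact (eval_newtonInterpolant_of_mem (mem_toList.2 haN) f).ge
      · refine le_eval_newtonInterpolant_of_prod_neg hf N.nodup_toList hNS (mt mem_toList.1 haN)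
          (htS a hat) ?_
        rw [prod_map_toList]
        exact hω a ha hat haN
    rw [eval_mul, eval_pow, ← hBf a (hSR a (htS a hat))]
    exact mul_le_mul_of_nonneg_left hfq (sq_nonneg _)
  · rw [eval_mul, eval_pow]
    exact mul_nonneg (sq_nonneg _) (hq x hx).le
  · rw [eval_mul, eval_pow]
    exact mul_pos (pow_two_pos_of_ne_zero (hB x hxR)) (hq x hx)

end Majorant

section Separation

open Finset

variable {ι κ : Type*} [Fintype ι] [Fintype κ]

theorem sum_filter_le_lt_sum_of_quadrature (lam ω : ι → ℝ) (hω : ∀ i, 0 < ω i) (θ ν : κ → ℝ)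
    (hquad : ∀ p : ℝ[X], p.natDegree ≤ 2 * Fintype.card κ - 2 →
      ∑ i, ω i * p.eval (lam i) = ∑ j, ν j * p.eval (θ j))
    (K : Finset κ) {j₀ : κ} (hj₀ : j₀ ∈ K) (hK : ∀ j ∈ K, θ j ≤ θ j₀)
    (hKc : ∀ j ∉ K, θ j₀ < θ j) {i₀ : ι} (hi₀ : θ j₀ < lam i₀)
    (hi₀K : ∀ j ∉ K, lam i₀ < θ j) :
    ∑ i ∈ univ.filter (fun i => lam i ≤ θ j₀), ω i < ∑ j ∈ K, ν j := by
  classical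
  obtain ⟨p, hdeg, hL, hR, hA, hnonneg, hpos⟩ :=
    exists_majorant (univ.image lam) (K.image θ) (Kᶜ.image θ) (mem_image_of_mem θ hj₀)
      (by simpa using hK) (by simpa using hKc)
  have hcard : #(K.image θ) + #(Kᶜ.image θ) ≤ Fintype.card κ :=
    card_add_card_compl K ▸ add_le_add card_image_le card_image_le
  have hi₀R : lam i₀ ∉ Kᶜ.image θ := by
    simpa using fun j hj h => (hi₀K j hj).ne' h
  have hnodes : ∑ j, ν j * p.eval (θ j) = ∑ j ∈ K, ν j := by
    rw [← sum_add_sum_compl K, ← add_zero (∑ j ∈ K, ν j)]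
    congr 1
    · exact sum_congr rfl fun j hj => by rw [hL _ (mem_image_of_mem θ hj), mul_one]
    · exact sum_eq_zero fun j hj => by rw [hR _ (mem_image_of_mem θ hj), mul_zero]
  calc ∑ i ∈ univ.filter (fun i => lam i ≤ θ j₀), ω i
      ≤ ∑ i ∈ univ.filter (fun i => lam i ≤ θ j₀), ω i * p.eval (lam i) :=
        sum_le_sum fun i hi => le_mul_of_one_le_right (hω i).le
          (hA _ (mem_image_of_mem lam (mem_univ i)) (mem_filter.1 hi).2)
    _ < ∑ i ∈ univ.filter (fun i => lam i ≤ θ j₀), ω i * p.eval (lam i)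
          + ∑ i ∈ univ.filter (fun i => ¬lam i ≤ θ j₀), ω i * p.eval (lam i) :=
        lt_add_of_pos_right _ <| sum_pos'
          (fun i hi => mul_nonneg (hω i).le (hnonneg _ (le_of_not_ge (mem_filter.1 hi).2)))
          ⟨i₀, mem_filter.2 ⟨mem_univ _, not_le.2 hi₀⟩, mul_pos (hω i₀) (hpos _ hi₀.le hi₀R)⟩
    _ = ∑ i, ω i * p.eval (lam i) := sum_filter_add_sum_filter_not _ _ _
    _ = ∑ j, ν j * p.eval (θ j) := hquad p (hdeg.trans (by omega))
    _ = ∑ j ∈ K, ν j := hnodes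

theorem sum_lt_sum_filter_lt_of_quadrature (lam ω : ι → ℝ) (hω : ∀ i, 0 < ω i) (θ ν : κ → ℝ)
    (hquad : ∀ p : ℝ[X], p.natDegree ≤ 2 * Fintype.card κ - 2 →
      ∑ i, ω i * p.eval (lam i) = ∑ j, ν j * p.eval (θ j))
    (K : Finset κ) {j₁ : κ} (hj₁ : j₁ ∉ K) (hK : ∀ j ∈ K, θ j < θ j₁)
    (hKc : ∀ j ∉ K, θ j₁ ≤ θ j) {i₀ : ι} (hi₀ : lam i₀ < θ j₁)
    (hi₀K : ∀ j ∈ K, θ j < lam i₀) :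
    ∑ j ∈ K, ν j < ∑ i ∈ univ.filter (fun i => lam i < θ j₁), ω i := by
  classical
  have hmirror := sum_filter_le_lt_sum_of_quadrature (fun i => -lam i) ω hω (fun j => -θ j) ν
    (fun p hp => by
      simpa [eval_comp] using hquad (p.comp (-X)) (by
        rwa [natDegree_comp, natDegree_neg, natDegree_X, mul_one]))
    Kᶜ (mem_compl.2 hj₁) (fun j hj => neg_le_neg (hKc j (mem_compl.1 hj)))
    (fun j hj => neg_lt_neg (hK j (not_not.1 (mem_compl.not.1 hj)))) (neg_lt_neg hi₀)
    (fun j hj => neg_lt_neg (hi₀K j (not_not.1 (mem_compl.not.1 hj))))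
  have htotal : ∑ i, ω i = ∑ j, ν j := by simpa using hquad 1 (by simp)
  rw [← sum_filter_add_sum_filter_not univ (fun i => lam i < θ j₁), ← sum_add_sum_compl K]
    at htotal
  simp only [neg_le_neg_iff] at hmirror
  simp only [not_lt] at htotal
  linarith

end Separation

theorem stmt_4_general {n m : ℕ}
    (lam : Fin n → ℝ)
    (w : Fin n → ℂ) (hw : ∀ j, w j ≠ 0)
    (θ : Fin m → ℝ) (hθ : StrictMono θ)
    (c : Fin m → ℂ)
    (hinter : ∀ (k : Fin m) (hk : (k : ℕ) + 1 < m),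
      ∃ j, θ k < lam j ∧ lam j < θ ⟨(k : ℕ) + 1, hk⟩)
    (hquad : ∀ p : Polynomial ℝ, p.natDegree ≤ 2 * m - 2 →
      ∑ j, ‖w j‖ ^ 2 * p.eval (lam j) = ∑ j, ‖c j‖ ^ 2 * p.eval (θ j)) :
    ∀ (k : Fin m) (hk : (k : ℕ) + 1 < m),
      (∑ j ∈ Finset.univ.filter fun j => lam j ≤ θ k, ‖w j‖ ^ 2)
          < (∑ j ∈ Finset.univ.filter fun j => j ≤ k, ‖c j‖ ^ 2) ∧
      (∑ j ∈ Finset.univ.filter fun j => j ≤ k, ‖c j‖ ^ 2)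
          < ∑ j ∈ Finset.univ.filter fun j => lam j < θ ⟨(k : ℕ) + 1, hk⟩, ‖w j‖ ^ 2 := by
  intro k hk
  obtain ⟨i₀, hi₀, hi₀'⟩ := hinter k hk
  have hw' : ∀ j, 0 < ‖w j‖ ^ 2 := fun j => pow_pos (norm_pos_iff.2 (hw j)) 2
  have hquad' : ∀ p : Polynomial ℝ, p.natDegree ≤ 2 * Fintype.card (Fin m) - 2 →
      ∑ j, ‖w j‖ ^ 2 * p.eval (lam j) = ∑ j, ‖c j‖ ^ 2 * p.eval (θ j) := by
    simpa only [Fintype.card_fin] using hquad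
  have hK : ∀ j, j ∈ Finset.univ.filter (fun j => j ≤ k) ↔ j < ⟨k + 1, hk⟩ := fun j => by
    simp only [Finset.mem_filter, Finset.mem_univ, true_and, Fin.le_def, Fin.lt_def]; omega
  constructor
  · refine sum_filter_le_lt_sum_of_quadrature lam _ hw' θ _ hquad' _ (by simp)
      (fun j hj => hθ.monotone (Finset.mem_filter.1 hj).2)
      (fun j hj => hθ (by simpa using hj)) hi₀
      (fun j hj => hi₀'.trans_le (hθ.monotone (not_lt.1 ((hK j).not.1 hj))))
  · refine sum_lt_sum_filter_lt_of_quadrature lam _ hw' θ _ hquad' _ (by simp [hK])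
      (fun j hj => hθ ((hK j).1 hj)) (fun j hj => hθ.monotone (not_lt.1 ((hK j).not.1 hj))) hi₀'
      (fun j hj => (hθ.monotone (Finset.mem_filter.1 hj).2).trans_lt hi₀)

/-- Separation Theorem of Chebyshev–Markov–Stieltjes for a discrete
measure: with atoms `lam` (strictly increasing, nonzero weights `‖w j‖²`) in `(a,b)`,
nodes `θ` in `(a,b)` interlaced by atoms, and quadrature exactness of degree `2m−2`,
the accumulated weights `∑_{j≤k} ‖c j‖²` are strictly between `α_n(θ_k)` and
`α_n(θ_{k+1}−)`. -/
theorem stmt_4 {n m : ℕ}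
    (lam : Fin n → ℝ) (hlam : StrictMono lam)
    (w : Fin n → ℂ) (hw : ∀ j, w j ≠ 0)
    (a b : ℝ) (hab : ∀ j, a < lam j ∧ lam j < b)
    (θ : Fin m → ℝ) (hθ : StrictMono θ) (hθab : ∀ k, a < θ k ∧ θ k < b)
    (c : Fin m → ℂ)
    (hinter : ∀ (k : Fin m) (hk : (k : ℕ) + 1 < m),
      ∃ j, θ k < lam j ∧ lam j < θ ⟨(k : ℕ) + 1, hk⟩)
    (hquad : ∀ p : Polynomial ℝ, p.natDegree ≤ 2 * m - 2 →
      ∑ j, ‖w j‖ ^ 2 * p.eval (lam j) = ∑ j, ‖c j‖ ^ 2 * p.eval (θ j)) :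
    ∀ (k : Fin m) (hk : (k : ℕ) + 1 < m),
      (∑ j ∈ Finset.univ.filter fun j => lam j ≤ θ k, ‖w j‖ ^ 2)
          < (∑ j ∈ Finset.univ.filter fun j => j ≤ k, ‖c j‖ ^ 2) ∧
      (∑ j ∈ Finset.univ.filter fun j => j ≤ k, ‖c j‖ ^ 2)
          < ∑ j ∈ Finset.univ.filter fun j => lam j < θ ⟨(k : ℕ) + 1, hk⟩, ‖w j‖ ^ 2 :=
  stmt_4_general lam w hw θ hθ c hinter hquad
end

section
/- Under the hypotheses of the CMS separation theorem (quadrature exactness for polynomials of degree ≤ 2m−2 plus interlacing of nodes with atoms), for indices 1 < j < k < m one has μ_n([θ_j, θ_k]) < |c_j|² + |c_{j+1}|² + ... + |c_k|² < μ_n((θ_{j−1}, θ_{k+1})), where μ_n(R) = ∑_{i: λ_i ∈ R} |w_i|². -/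
/-!
For `l + 1 < m`, Hermite interpolation gives a polynomial `H` of degree `≤ 2m - 2` with
`H(θ_i) = 1` for `i ≤ l`, `H(θ_i) = 0` for `i > l`, and `H'(θ_i) = 0` for `i ≠ l`. Rolle's theorem
supplies one more zero of `H'` in every gap `(θ_i, θ_{i+1})` with `i ≠ l`; together with the nodes
these are `2m - 3 ≥ deg H'` zeros, so they are all simple and the sign of `H'` alternates between
them. Since `H` falls from `1` to `0` across `(θ_l, θ_{l+1})`, this gives `H ≥ 1` on `(-∞, θ_l]`,
`H ≥ 0` everywhere and `H > 0` on `(θ_l, θ_{l+1})`, which contains an atom. Integrating `H` against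
both measures yields `μ((-∞, θ_l]) < ∑_{i ≤ l} |c_i|²`; the reflection `y ↦ -y` gives
`μ([θ_l, ∞)) < ∑_{i ≥ l} |c_i|²`, and the theorem follows by inclusion–exclusion, the two measures
having the same total mass.
-/

open Polynomial Finset

namespace Polynomial

variable {F : Type*} [Field F]

theorem eval_eq_zero_and_eval_derivative_eq_zero_of_sq_dvd {p : F[X]} {a : F}
    (h : (X - C a) ^ 2 ∣ p) : p.eval a = 0 ∧ p.derivative.eval a = 0 := by
  refine ⟨?_, ?_⟩
  · exact dvd_iff_isRoot.mp ((dvd_pow_self _ two_ne_zero).trans h)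
  · exact dvd_iff_isRoot.mp (by simpa using pow_sub_one_dvd_derivative_of_pow_dvd h)

theorem exists_dvd_sub_one_dvd_eval_eq_one {P Q : F[X]} (hP : P.Monic) (hPQ : IsCoprime P Q)
    {e : F} (he : (P * Q).eval e ≠ 0) :
    ∃ H : F[X], H.natDegree ≤ P.natDegree + Q.natDegree ∧ P ∣ H - 1 ∧ Q ∣ H ∧ H.eval e = 1 := by
  obtain ⟨U, V, hUV⟩ := hPQ
  set H₀ := Q * (V %ₘ P)
  set c := (1 - H₀.eval e) / (P * Q).eval e
  refine ⟨H₀ + C c * (P * Q), ?_, ⟨-U - Q * (V /ₘ P) + C c * Q, ?_⟩,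
    ⟨V %ₘ P + C c * P, by ring⟩, ?_⟩
  · refine (natDegree_add_le _ _).trans (max_le ?_ ?_)
    · exact natDegree_mul_le.trans (by linarith [natDegree_modByMonic_le V hP])
    · exact (natDegree_C_mul_le _ _).trans natDegree_mul_le
  · linear_combination hUV + Q * modByMonic_add_div V P
  · rw [eval_add, eval_C_mul, div_mul_cancel₀ _ he]
    ring

theorem eq_C_mul_nodal_of_natDegree_le {ι : Type*} {s : Finset ι} {v : ι → F} {p : F[X]}
    (hv : Set.InjOn v s) (hp : p.natDegree ≤ #s) (hroot : ∀ i ∈ s, p.eval (v i) = 0) :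
    p = C (p.coeff #s) * Lagrange.nodal s v := by
  refine eq_of_degree_sub_lt_of_eval_index_eq s hv ?_ (fun i hi => ?_)
  · rw [degree_lt_iff_coeff_zero]
    intro n hn
    have hmonic := (Lagrange.nodal_monic (s := s) (v := v)).coeff_natDegree
    rw [Lagrange.natDegree_nodal] at hmonic
    have hn' : #s ≤ n := by exact_mod_cast hn
    rw [coeff_sub, coeff_C_mul]
    rcases hn'.eq_or_lt with h | h
    · rw [← h, hmonic, mul_one, sub_self]
    · have hnodal : (Lagrange.nodal s v).natDegree < n := by rwa [Lagrange.natDegree_nodal]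
      rw [coeff_eq_zero_of_natDegree_lt (hp.trans_lt h), coeff_eq_zero_of_natDegree_lt hnodal,
        mul_zero, sub_zero]
  · simp [hroot i hi, Lagrange.eval_nodal_at_node hi]

end Polynomial

theorem exists_rolle_points (H : ℝ[X]) {x : ℕ → ℝ} (hx : StrictMono x) :
    ∃ ρ : ℕ → ℝ, ∀ i, x i < ρ i ∧ ρ i < x (i + 1) ∧
      (H.eval (x i) = H.eval (x (i + 1)) → H.derivative.eval (ρ i) = 0) := by
  have h : ∀ i, ∃ r, x i < r ∧ r < x (i + 1) ∧
      (H.eval (x i) = H.eval (x (i + 1)) → H.derivative.eval r = 0) := by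
    intro i
    have hlt := hx (lt_add_one i)
    by_cases heq : H.eval (x i) = H.eval (x (i + 1))
    · obtain ⟨r, hr, hd⟩ := exists_deriv_eq_zero hlt H.continuousOn heq
      exact ⟨r, hr.1, hr.2, fun _ => by rwa [Polynomial.deriv] at hd⟩
    · exact ⟨(x i + x (i + 1)) / 2, by linarith, by linarith, fun h => absurd h heq⟩
  choose ρ hρ using h
  exact ⟨ρ, hρ⟩

theorem pos_neg_one_pow_mul_prod_sub {z : ℕ → ℝ} {K r : ℕ} {y : ℝ} (hr : r ≤ K)
    (hlt : ∀ k < r, z k < y) (hgt : ∀ k, r ≤ k → k < K → y < z k) :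
    0 < (-1) ^ (K - r) * ∏ k ∈ range K, (y - z k) := by
  have hflip : ∏ k ∈ Ico r K, (y - z k) = (-1) ^ (K - r) * ∏ k ∈ Ico r K, (z k - y) := by
    rw [← Nat.card_Ico r K, ← prod_const, ← prod_mul_distrib]
    exact prod_congr rfl fun k _ => by ring
  have hsq : ((-1 : ℝ) ^ (K - r)) * (-1) ^ (K - r) = 1 := by
    rw [← mul_pow]; norm_num
  have hsplit : (-1) ^ (K - r) * ∏ k ∈ range K, (y - z k) =
      (∏ k ∈ range r, (y - z k)) * ∏ k ∈ Ico r K, (z k - y) := by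
    rw [← prod_range_mul_prod_Ico _ hr, hflip]
    linear_combination ((∏ k ∈ range r, (y - z k)) * ∏ k ∈ Ico r K, (z k - y)) * hsq
  rw [hsplit]
  refine mul_pos (prod_pos fun k hk => ?_) (prod_pos fun k hk => ?_)
  · linarith [hlt k (mem_range.mp hk)]
  · obtain ⟨h1, h2⟩ := mem_Ico.mp hk
    linarith [hgt k h1 h2]

section Cell

variable {H : ℝ[X]} {z : ℕ → ℝ} {K r : ℕ} {lo hi : ℝ}

theorem strictMonoOn_Icc_of_sign
    (hsign : ∀ y, (∀ k < r, z k < y) → (∀ k, r ≤ k → k < K → y < z k) →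
      0 < (-1) ^ (K - r) * H.derivative.eval y)
    (hlo : ∀ k < r, z k ≤ lo) (hhi : ∀ k, r ≤ k → k < K → hi ≤ z k) (heven : Even (K - r)) :
    StrictMonoOn (fun y => H.eval y) (Set.Icc lo hi) := by
  refine strictMonoOn_of_deriv_pos (convex_Icc _ _) H.continuousOn fun y hy => ?_
  rw [interior_Icc] at hy
  have := hsign y (fun k hk => (hlo k hk).trans_lt hy.1) fun k h1 h2 => hy.2.trans_le (hhi k h1 h2)
  rwa [Polynomial.deriv, ← one_mul (H.derivative.eval y), ← heven.neg_one_pow]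

theorem strictAntiOn_Icc_of_sign
    (hsign : ∀ y, (∀ k < r, z k < y) → (∀ k, r ≤ k → k < K → y < z k) →
      0 < (-1) ^ (K - r) * H.derivative.eval y)
    (hlo : ∀ k < r, z k ≤ lo) (hhi : ∀ k, r ≤ k → k < K → hi ≤ z k) (hodd : Odd (K - r)) :
    StrictAntiOn (fun y => H.eval y) (Set.Icc lo hi) := by
  refine strictAntiOn_of_deriv_neg (convex_Icc _ _) H.continuousOn fun y hy => ?_
  rw [interior_Icc] at hy
  have := hsign y (fun k hk => (hlo k hk).trans_lt hy.1) fun k h1 h2 => hy.2.trans_le (hhi k h1 h2)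
  rw [hodd.neg_one_pow] at this
  rw [Polynomial.deriv]
  linarith

end Cell

theorem exists_le_lt_succ_of_monotone {α : Type*} [LinearOrder α] {x : ℕ → α} (hx : Monotone x)
    {a b : ℕ} {y : α} (ha : x a ≤ y) (hb : y < x b) :
    ∃ i, a ≤ i ∧ i < b ∧ x i ≤ y ∧ y < x (i + 1) := by
  induction b with
  | zero => exact absurd hb (not_lt.mpr ((hx (Nat.zero_le a)).trans ha))
  | succ b ih =>
    by_cases h : y < x b
    · obtain ⟨i, h1, h2, h3, h4⟩ := ih h
      exact ⟨i, h1, by omega, h3, h4⟩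
    · refine ⟨b, ?_, lt_add_one b, not_lt.mp h, hb⟩
      by_contra hab
      exact absurd hb (not_lt.mpr ((hx (show b + 1 ≤ a by omega)).trans ha))

def interleave {α : Type*} (x ρ : ℕ → α) (k : ℕ) : α := if Even k then x (k / 2) else ρ (k / 2)

section Interleave

variable {α : Type*} {x ρ : ℕ → α}

@[simp]
theorem interleave_two_mul (i : ℕ) : interleave x ρ (2 * i) = x i := by
  simp [interleave]

@[simp]
theorem interleave_two_mul_add_one (i : ℕ) : interleave x ρ (2 * i + 1) = ρ i := by
  simp [interleave, Nat.add_div_of_dvd_right]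

theorem strictMono_interleave [Preorder α] (hxρ : ∀ i, x i < ρ i) (hρx : ∀ i, ρ i < x (i + 1)) :
    StrictMono (interleave x ρ) := by
  refine strictMono_nat_of_lt_succ fun k => ?_
  obtain ⟨i, rfl | rfl⟩ := Nat.even_or_odd' k
  · simpa using hxρ i
  · simpa [show 2 * i + 1 + 1 = 2 * (i + 1) by ring] using hρx i

end Interleave

def skipPair (t k : ℕ) : ℕ := if k < 2 * t then k else k + 2

theorem strictMono_skipPair (t : ℕ) : StrictMono (skipPair t) :=
  strictMono_nat_of_lt_succ fun k => by simp only [skipPair]; split_ifs <;> omega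

/-- The polynomial of the Chebyshev–Markov–Stieltjes argument: it agrees with the step function
`1_{i ≤ t}` at the nodes `x 0 < ⋯ < x (N - 1)` and is tangent to it at every node but `x t`. -/
structure IsStepHermite (x : ℕ → ℝ) (N t : ℕ) (H : ℝ[X]) : Prop where
  natDegree_le : H.natDegree ≤ 2 * N - 2
  eval_of_le : ∀ i ≤ t, H.eval (x i) = 1
  eval_of_lt : ∀ i, t < i → i < N → H.eval (x i) = 0
  eval_derivative : ∀ i < N, i ≠ t → H.derivative.eval (x i) = 0

theorem exists_isStepHermite {x : ℕ → ℝ} (hx : StrictMono x) {N t : ℕ} (ht : t < N) :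
    ∃ H, IsStepHermite x N t H := by
  set P := Lagrange.nodal (range t) x ^ 2
  set Q := Lagrange.nodal (Ioo t N) x ^ 2
  have hPQ : IsCoprime P Q := by
    refine IsCoprime.pow (IsCoprime.prod_left fun i hi => IsCoprime.prod_right fun j hj => ?_)
    refine isCoprime_X_sub_C_of_isUnit_sub (sub_ne_zero.mpr (hx.injective.ne ?_)).isUnit
    simp only [mem_range, mem_Ioo] at hi hj
    omega
  have he : (P * Q).eval (x t) ≠ 0 := by
    simp only [P, Q, eval_mul, eval_pow]
    refine mul_ne_zero (pow_ne_zero _ (Lagrange.eval_nodal_not_at_node fun i hi => ?_))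
      (pow_ne_zero _ (Lagrange.eval_nodal_not_at_node fun i hi => ?_))
    · exact hx.injective.ne (by simp only [mem_range] at hi; omega)
    · exact hx.injective.ne (by simp only [mem_Ioo] at hi; omega)
  obtain ⟨H, hdeg, hP, hQ, he⟩ :=
    exists_dvd_sub_one_dvd_eval_eq_one (Lagrange.nodal_monic.pow 2) hPQ he
  have hsq_dvd : ∀ {s : Finset ℕ} {i}, i ∈ s → (X - C (x i)) ^ 2 ∣ Lagrange.nodal s x ^ 2 :=
    fun hi => pow_dvd_pow_of_dvd (Lagrange.X_sub_C_dvd_nodal x hi) 2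
  have hleft : ∀ i < t, (H - 1).eval (x i) = 0 ∧ (H - 1).derivative.eval (x i) = 0 :=
    fun i hi => eval_eq_zero_and_eval_derivative_eq_zero_of_sq_dvd
      ((hsq_dvd (mem_range.mpr hi)).trans hP)
  have hright : ∀ i, t < i → i < N → H.eval (x i) = 0 ∧ H.derivative.eval (x i) = 0 :=
    fun i h1 h2 => eval_eq_zero_and_eval_derivative_eq_zero_of_sq_dvd
      ((hsq_dvd (mem_Ioo.mpr ⟨h1, h2⟩)).trans hQ)
  refine ⟨H, ⟨?_, fun i hi => ?_, fun i h1 h2 => (hright i h1 h2).1, fun i hi hit => ?_⟩⟩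
  · simp only [Q, natDegree_pow, Lagrange.natDegree_nodal, card_range, Nat.card_Ioo] at hdeg
    omega
  · rcases hi.lt_or_eq with hi | rfl
    · simpa [sub_eq_zero] using (hleft i hi).1
    · exact he
  · rcases hit.lt_or_gt with h | h
    · simpa using (hleft i h).2
    · exact (hright i h hi).2

namespace IsStepHermite

variable {x : ℕ → ℝ} {N t : ℕ} {H : ℝ[X]}

theorem eval_succ_eq (hH : IsStepHermite x N t H) {i : ℕ} (hi : i ≠ t) (hiN : i + 1 < N) :
    H.eval (x i) = H.eval (x (i + 1)) := by
  rcases hi.lt_or_gt with h | h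
  · rw [hH.eval_of_le i h.le, hH.eval_of_le (i + 1) h]
  · rw [hH.eval_of_lt i h (by omega), hH.eval_of_lt (i + 1) (by omega) hiN]

/-- The critical points of `H` are the nodes other than `x t` together with one Rolle point in
each gap other than `(x t, x (t + 1))`; there are `2 N - 3` of them, so they are all the roots
of `H'`. -/
theorem exists_eval_derivative_eq_mul_prod (hH : IsStepHermite x N t H) (hx : StrictMono x) :
    ∃ w : ℕ → ℝ, StrictMono w ∧ (∀ i, w (2 * i) = x i) ∧
      ∃ a, ∀ y, H.derivative.eval y = a * ∏ k ∈ range (2 * N - 3), (y - w (skipPair t k)) := by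
  obtain ⟨ρ, hρ⟩ := exists_rolle_points H hx
  have hw : StrictMono (interleave x ρ) :=
    strictMono_interleave (fun i => (hρ i).1) fun i => (hρ i).2.1
  have hroot : ∀ k ∈ range (2 * N - 3),
      H.derivative.eval (interleave x ρ (skipPair t k)) = 0 := by
    intro k hk
    replace hk := mem_range.mp hk
    have hσ : skipPair t k ≠ 2 * t ∧ skipPair t k ≠ 2 * t + 1 ∧ skipPair t k ≤ 2 * N - 2 := by
      simp only [skipPair]
      split_ifs <;> omega
    obtain ⟨i, hi | hi⟩ := Nat.even_or_odd' (skipPair t k)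
    · rw [hi, interleave_two_mul]
      exact hH.eval_derivative i (by omega) (by omega)
    · rw [hi, interleave_two_mul_add_one]
      exact (hρ i).2.2 (hH.eval_succ_eq (by omega) (by omega))
  have hdeg : H.derivative.natDegree ≤ #(range (2 * N - 3)) := by
    rw [card_range]
    exact (natDegree_derivative_le H).trans (by have := hH.natDegree_le; omega)
  have hfac := eq_C_mul_nodal_of_natDegree_le
    ((hw.comp (strictMono_skipPair t)).injective.injOn) hdeg hroot
  refine ⟨interleave x ρ, hw, interleave_two_mul, H.derivative.coeff #(range (2 * N - 3)),
    fun y => ?_⟩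
  conv_lhs => rw [hfac]
  simp [Lagrange.eval_nodal]

theorem exists_sign_eval_derivative (hH : IsStepHermite x N t H) (hx : StrictMono x)
    (ht : t + 1 < N) :
    ∃ w : ℕ → ℝ, StrictMono w ∧ (∀ i, w (2 * i) = x i) ∧ ∀ r ≤ 2 * N - 3, ∀ y,
      (∀ k < r, w (skipPair t k) < y) → (∀ k, r ≤ k → k < 2 * N - 3 → y < w (skipPair t k)) →
      0 < (-1) ^ (2 * N - 3 - r) * H.derivative.eval y := by
  obtain ⟨w, hw, hwx, a, ha⟩ := hH.exists_eval_derivative_eq_mul_prod hx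
  refine ⟨w, hw, hwx, ?_⟩
  -- `H` falls from `1` to `0` on `[x t, x (t + 1)]`, which fixes the sign of `a`.
  obtain ⟨ξ, hξ, hslope⟩ := exists_deriv_eq_slope (fun y => H.eval y) (hx (lt_add_one t))
    H.continuousOn H.differentiableOn
  rw [Polynomial.deriv, hH.eval_of_le t le_rfl, hH.eval_of_lt (t + 1) (lt_add_one t) ht] at hslope
  have hneg : H.derivative.eval ξ < 0 := by
    rw [hslope]
    exact div_neg_of_neg_of_pos (by norm_num) (sub_pos.mpr (hx (lt_add_one t)))
  have hprod := pos_neg_one_pow_mul_prod_sub (z := w ∘ skipPair t) (K := 2 * N - 3) (r := 2 * t)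
    (y := ξ) (by omega)
    (fun k hk => by
      simp only [Function.comp, skipPair, if_pos hk]
      exact (hw hk).trans_le ((hwx t).trans_le hξ.1.le))
    (fun k hk _ => by
      simp only [Function.comp, skipPair, if_neg (not_lt.mpr hk)]
      exact hξ.2.trans_le (by rw [← hwx]; exact hw.monotone (by omega)))
  rw [Odd.neg_one_pow ⟨N - t - 2, by omega⟩] at hprod
  have hapos : 0 < a := by
    rw [ha] at hneg
    simp only [Function.comp] at hprod
    nlinarith
  intro r hr y hlt hgt
  rw [ha, mul_left_comm]
  exact mul_pos hapos (pos_neg_one_pow_mul_prod_sub (z := w ∘ skipPair t) hr hlt hgt)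

/-- Between two consecutive nodes other than `x t`, `H` rises to a Rolle point and falls back. -/
theorem eval_le_of_mem_Icc (hH : IsStepHermite x N t H) (hx : StrictMono x) (ht : t + 1 < N)
    {i : ℕ} (hi : i ≠ t) (hiN : i + 1 < N) {y : ℝ} (hy : y ∈ Set.Icc (x i) (x (i + 1))) :
    H.eval (x i) ≤ H.eval y := by
  obtain ⟨w, hw, hwx, hsign⟩ := hH.exists_sign_eval_derivative hx ht
  -- `[x i, w (2 i + 1)]` and `[w (2 i + 1), x (i + 1)]` lie in the `r`-th and `(r + 1)`-st gaps
  -- between consecutive critical points.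
  obtain ⟨r, hr, heven, hodd, h₁, h₂, h₃, h₄⟩ : ∃ r, r + 1 ≤ 2 * N - 3 ∧
      Even (2 * N - 3 - r) ∧ Odd (2 * N - 3 - (r + 1)) ∧
      (∀ k < r, skipPair t k ≤ 2 * i) ∧ (∀ k, r ≤ k → k < 2 * N - 3 → 2 * i + 1 ≤ skipPair t k) ∧
      (∀ k < r + 1, skipPair t k ≤ 2 * i + 1) ∧
      (∀ k, r + 1 ≤ k → k < 2 * N - 3 → 2 * i + 2 ≤ skipPair t k) := by
    rcases hi.lt_or_gt with hi | hi
    · refine ⟨2 * i + 1, by omega, ⟨N - 2 - i, by omega⟩, ⟨N - 3 - i, by omega⟩, ?_, ?_, ?_, ?_⟩ <;>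
        intros <;> simp only [skipPair] <;> split_ifs <;> omega
    · refine ⟨2 * i - 1, by omega, ⟨N - 1 - i, by omega⟩, ⟨N - 2 - i, by omega⟩, ?_, ?_, ?_, ?_⟩ <;>
        intros <;> simp only [skipPair] <;> split_ifs <;> omega
  rcases le_total y (w (2 * i + 1)) with h | h
  · have hmono := strictMonoOn_Icc_of_sign (hsign r (by omega))
      (fun k hk => hw.monotone (h₁ k hk)) (fun k h h' => hw.monotone (h₂ k h h')) heven
    rw [← hwx] at hy ⊢
    exact hmono.monotoneOn ⟨le_rfl, hw.monotone (by omega)⟩ ⟨hy.1, h⟩ hy.1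
  · have hanti := strictAntiOn_Icc_of_sign (hsign (r + 1) hr)
      (fun k hk => hw.monotone (h₃ k hk)) (fun k h h' => hw.monotone (h₄ k h h')) hodd
    rw [hH.eval_succ_eq hi hiN, ← hwx, show 2 * (i + 1) = 2 * i + 2 by ring]
    rw [← hwx, ← hwx, show 2 * (i + 1) = 2 * i + 2 by ring] at hy
    exact hanti.antitoneOn ⟨h, hy.2⟩ ⟨hw.monotone (by omega), le_rfl⟩ hy.2

theorem one_le_eval (hH : IsStepHermite x N t H) (hx : StrictMono x) (ht : t + 1 < N) {y : ℝ}
    (hy : y ≤ x t) : 1 ≤ H.eval y := by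
  rcases lt_or_ge y (x 0) with h | h
  · obtain ⟨w, hw, hwx, hsign⟩ := hH.exists_sign_eval_derivative hx ht
    have hanti := strictAntiOn_Icc_of_sign (lo := y) (hi := w 0) (hsign 0 (Nat.zero_le _))
      (fun k hk => absurd hk k.not_lt_zero) (fun k _ _ => hw.monotone (Nat.zero_le _))
      ⟨N - 2, by omega⟩
    rw [show w 0 = x 0 by simpa using hwx 0] at hanti
    rw [← hH.eval_of_le 0 (Nat.zero_le t)]
    exact hanti.antitoneOn ⟨le_rfl, h.le⟩ ⟨h.le, le_rfl⟩ h.le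
  rcases hy.lt_or_eq with hy | rfl
  · obtain ⟨i, -, hit, hi, hi'⟩ := exists_le_lt_succ_of_monotone hx.monotone h hy
    rw [← hH.eval_of_le i hit.le]
    exact hH.eval_le_of_mem_Icc hx ht hit.ne (by omega) ⟨hi, hi'.le⟩
  · exact (hH.eval_of_le t le_rfl).ge

theorem eval_nonneg_of_le (hH : IsStepHermite x N t H) (hx : StrictMono x) (ht : t + 1 < N)
    {y : ℝ} (hy : x (t + 1) ≤ y) : 0 ≤ H.eval y := by
  rcases lt_or_ge y (x (N - 1)) with h | h
  · obtain ⟨i, hti, hiN, hi, hi'⟩ := exists_le_lt_succ_of_monotone hx.monotone hy h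
    rw [← hH.eval_of_lt i (by omega) (by omega)]
    exact hH.eval_le_of_mem_Icc hx ht (by omega) (by omega) ⟨hi, hi'.le⟩
  · obtain ⟨w, hw, hwx, hsign⟩ := hH.exists_sign_eval_derivative hx ht
    have hmono := strictMonoOn_Icc_of_sign (lo := w (2 * (N - 1))) (hi := y)
      (hsign (2 * N - 3) le_rfl)
      (fun k hk => hw.monotone (by simp only [skipPair]; split_ifs <;> omega))
      (fun k h h' => absurd h' (by omega)) (by simp)
    rw [hwx] at hmono
    rw [← hH.eval_of_lt (N - 1) (by omega) (by omega)]
    exact hmono.monotoneOn ⟨le_rfl, h⟩ ⟨h, le_rfl⟩ h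

theorem eval_pos_of_mem_Ioo (hH : IsStepHermite x N t H) (hx : StrictMono x) (ht : t + 1 < N)
    {y : ℝ} (hy : y ∈ Set.Ioo (x t) (x (t + 1))) : 0 < H.eval y := by
  obtain ⟨w, hw, hwx, hsign⟩ := hH.exists_sign_eval_derivative hx ht
  have hanti := strictAntiOn_Icc_of_sign (lo := w (2 * t)) (hi := w (2 * (t + 1)))
    (hsign (2 * t) (by omega))
    (fun k hk => hw.monotone (by simp only [skipPair, if_pos hk]; omega))
    (fun k h _ => hw.monotone (by simp only [skipPair]; split_ifs <;> omega))
    ⟨N - t - 2, by omega⟩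
  rw [hwx, hwx] at hanti
  rw [← hH.eval_of_lt (t + 1) (lt_add_one t) ht]
  exact hanti ⟨hy.1.le, hy.2.le⟩ ⟨(hx (lt_add_one t)).le, le_rfl⟩ hy.2

theorem eval_nonneg (hH : IsStepHermite x N t H) (hx : StrictMono x) (ht : t + 1 < N) (y : ℝ) :
    0 ≤ H.eval y := by
  rcases le_or_gt y (x t) with h | h
  · exact zero_le_one.trans (hH.one_le_eval hx ht h)
  rcases lt_or_ge y (x (t + 1)) with h' | h'
  · exact (hH.eval_pos_of_mem_Ioo hx ht ⟨h, h'⟩).le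
  · exact hH.eval_nonneg_of_le hx ht h'

end IsStepHermite

noncomputable def natExtend {m : ℕ} (θ : Fin m → ℝ) (i : ℕ) : ℝ :=
  if h : i < m then θ ⟨i, h⟩ else ∑ k, |θ k| + i

@[simp]
theorem natExtend_coe {m : ℕ} (θ : Fin m → ℝ) (k : Fin m) : natExtend θ k = θ k := by
  simp [natExtend]

theorem strictMono_natExtend {m : ℕ} {θ : Fin m → ℝ} (hθ : StrictMono θ) :
    StrictMono (natExtend θ) := by
  refine strictMono_nat_of_lt_succ fun i => ?_
  unfold natExtend
  split_ifs with h₁ h₂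
  · exact hθ (Fin.mk_lt_mk.mpr (lt_add_one i))
  · have := (le_abs_self _).trans (single_le_sum (f := fun k => |θ k|) (fun k _ => abs_nonneg _)
      (mem_univ ⟨i, h₁⟩))
    push_cast
    linarith
  · omega
  · push_cast
    linarith

namespace Finset

variable {ι M : Type*} [AddCommMonoid M] (s : Finset ι) (f : ι → M) {P Q : ι → Prop}
  [DecidablePred P] [DecidablePred Q]

theorem sum_filter_and_add_sum (h : ∀ i ∈ s, P i ∨ Q i) :
    ∑ i ∈ s with P i ∧ Q i, f i + ∑ i ∈ s, f i = ∑ i ∈ s with P i, f i + ∑ i ∈ s with Q i, f i := by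
  classical
  rw [← sum_union_inter (s₁ := s.filter P), ← filter_or, ← filter_and, filter_true_of_mem h,
    add_comm]

theorem sum_filter_add_sum_filter_of_not_iff (h : ∀ i ∈ s, ¬P i ↔ Q i) :
    ∑ i ∈ s with P i, f i + ∑ i ∈ s with Q i, f i = ∑ i ∈ s, f i := by
  rw [← sum_filter_add_sum_filter_not s P, filter_congr h]

end Finset

section Quadrature

variable {ι : Type*} [Fintype ι] {m : ℕ} {lam a : ι → ℝ} {θ b : Fin m → ℝ}

theorem sum_filter_le_lt_sum_filter_le (ha : ∀ i, 0 ≤ a i) (hθ : StrictMono θ)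
    (hquad : ∀ p : ℝ[X], p.natDegree ≤ 2 * m - 2 →
      ∑ i, a i * p.eval (lam i) = ∑ k, b k * p.eval (θ k))
    (l : Fin m) (hl : (l : ℕ) + 1 < m)
    (hgap : ∃ i, 0 < a i ∧ θ l < lam i ∧ lam i < θ ⟨l + 1, hl⟩) :
    ∑ i with lam i ≤ θ l, a i < ∑ k with k ≤ l, b k := by
  have hx := strictMono_natExtend hθ
  obtain ⟨H, hH⟩ := exists_isStepHermite hx (t := l) (N := m) l.isLt
  obtain ⟨i₀, ha₀, hi₀⟩ := hgap
  have hnodes : ∑ k, b k * H.eval (θ k) = ∑ k with k ≤ l, b k := by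
    rw [sum_filter]
    refine sum_congr rfl fun k _ => ?_
    rw [← natExtend_coe θ k]
    split_ifs with hk
    · rw [hH.eval_of_le k hk, mul_one]
    · rw [hH.eval_of_lt k (not_le.mp hk) k.isLt, mul_zero]
  calc ∑ i with lam i ≤ θ l, a i = ∑ i, a i * if lam i ≤ θ l then 1 else 0 := by
        simp [sum_filter]
    _ < ∑ i, a i * H.eval (lam i) := by
        refine sum_lt_sum (fun i _ => mul_le_mul_of_nonneg_left ?_ (ha i))
          ⟨i₀, mem_univ _, mul_lt_mul_of_pos_left ?_ ha₀⟩
        · split_ifs with h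
          · exact hH.one_le_eval hx hl (by rwa [natExtend_coe])
          · exact hH.eval_nonneg hx hl _
        · rw [if_neg (not_le.mpr hi₀.1)]
          rw [← natExtend_coe θ l, ← natExtend_coe θ ⟨l + 1, hl⟩] at hi₀
          exact hH.eval_pos_of_mem_Ioo hx hl hi₀
    _ = ∑ k, b k * H.eval (θ k) := hquad H hH.natDegree_le
    _ = ∑ k with k ≤ l, b k := hnodes

/-- The mirror image of `sum_filter_le_lt_sum_filter_le` under `y ↦ -y`. -/
theorem sum_filter_ge_lt_sum_filter_ge (ha : ∀ i, 0 ≤ a i) (hθ : StrictMono θ)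
    (hquad : ∀ p : ℝ[X], p.natDegree ≤ 2 * m - 2 →
      ∑ i, a i * p.eval (lam i) = ∑ k, b k * p.eval (θ k))
    (l : Fin m) (hl : 0 < (l : ℕ))
    (hgap : ∃ i, 0 < a i ∧ θ ⟨l - 1, by omega⟩ < lam i ∧ lam i < θ l) :
    ∑ i with θ l ≤ lam i, a i < ∑ k with l ≤ k, b k := by
  have hθ' : StrictMono fun k : Fin m => -θ k.rev :=
    fun k k' h => neg_lt_neg (hθ (Fin.rev_lt_rev.mpr h))
  have hquad' : ∀ p : ℝ[X], p.natDegree ≤ 2 * m - 2 →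
      ∑ i, a i * p.eval (-lam i) = ∑ k : Fin m, b k.rev * p.eval (-θ k.rev) := by
    intro p hp
    have := hquad (p.comp (-X)) (by simpa [natDegree_comp] using hp)
    simp only [eval_comp, eval_neg, eval_X] at this
    rw [this]
    exact (Equiv.sum_comp Fin.revPerm fun k => b k * p.eval (-θ k)).symm
  have hl' : (l.rev : ℕ) + 1 < m := by rw [Fin.val_rev]; omega
  have hrev : (⟨l.rev + 1, hl'⟩ : Fin m).rev = ⟨l - 1, by omega⟩ := by
    ext; simp only [Fin.val_rev]; omega
  obtain ⟨i, hai, h₁, h₂⟩ := hgap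
  have := sum_filter_le_lt_sum_filter_le (lam := fun i => -lam i) ha hθ' hquad' l.rev hl'
    ⟨i, hai, neg_lt_neg (by rwa [Fin.rev_rev]), neg_lt_neg (by rwa [hrev])⟩
  simp only [Fin.rev_rev, neg_le_neg_iff] at this
  convert this using 1
  rw [sum_filter, sum_filter, ← Equiv.sum_comp Fin.revPerm]
  simp [Fin.le_rev_iff]

theorem sum_filter_le_and_le_lt_sum (ha : ∀ i, 0 < a i) (hθ : StrictMono θ)
    (hinter : ∀ (k : Fin m) (hk : (k : ℕ) + 1 < m), ∃ i, θ k < lam i ∧ lam i < θ ⟨k + 1, hk⟩)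
    (hquad : ∀ p : ℝ[X], p.natDegree ≤ 2 * m - 2 →
      ∑ i, a i * p.eval (lam i) = ∑ k, b k * p.eval (θ k))
    {j k : Fin m} (hj : 0 < (j : ℕ)) (hjk : j ≤ k) (hk : (k : ℕ) + 1 < m) :
    ∑ i with θ j ≤ lam i ∧ lam i ≤ θ k, a i < ∑ i with j ≤ i ∧ i ≤ k, b i := by
  have htotal : ∑ i, a i = ∑ i, b i := by simpa using hquad 1 (by simp)
  have hupper := sum_filter_le_lt_sum_filter_le (fun i => (ha i).le) hθ hquad k hk
    (by obtain ⟨i, hi⟩ := hinter k hk; exact ⟨i, ha i, hi⟩)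
  have hlower := sum_filter_ge_lt_sum_filter_ge (fun i => (ha i).le) hθ hquad j hj
    (by obtain ⟨i, hi⟩ := hinter ⟨j - 1, by omega⟩ (by simp; omega)
        exact ⟨i, ha i, hi.1, by convert hi.2 using 3; simp; omega⟩)
  have hμ := sum_filter_and_add_sum univ a (P := fun i => θ j ≤ lam i) (Q := fun i => lam i ≤ θ k)
    fun i _ => (le_total (θ j) (lam i)).imp_right fun h => h.trans (hθ.monotone hjk)
  have hν := sum_filter_and_add_sum univ b (P := fun i => j ≤ i) (Q := fun i => i ≤ k)
    fun i _ => (le_total j i).imp_right fun h => h.trans hjk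
  linarith

theorem sum_lt_sum_filter_lt_and_lt (ha : ∀ i, 0 < a i) (hθ : StrictMono θ)
    (hinter : ∀ (k : Fin m) (hk : (k : ℕ) + 1 < m), ∃ i, θ k < lam i ∧ lam i < θ ⟨k + 1, hk⟩)
    (hquad : ∀ p : ℝ[X], p.natDegree ≤ 2 * m - 2 →
      ∑ i, a i * p.eval (lam i) = ∑ k, b k * p.eval (θ k))
    {j k : Fin m} (hj : 0 < (j : ℕ)) (hjk : j < k) (hk : (k : ℕ) + 1 < m) :
    ∑ i with j ≤ i ∧ i ≤ k, b i <
      ∑ i with θ ⟨j - 1, by omega⟩ < lam i ∧ lam i < θ ⟨k + 1, hk⟩, a i := by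
  have hjk' : (j : ℕ) < k := hjk
  have htotal : ∑ i, a i = ∑ i, b i := by simpa using hquad 1 (by simp)
  have hupper := sum_filter_le_lt_sum_filter_le (fun i => (ha i).le) hθ hquad ⟨j - 1, by omega⟩
    (by simp; omega)
    (by obtain ⟨i, hi⟩ := hinter ⟨j - 1, by omega⟩ (by simp; omega); exact ⟨i, ha i, hi⟩)
  have hlower := sum_filter_ge_lt_sum_filter_ge (fun i => (ha i).le) hθ hquad ⟨k + 1, hk⟩
    (by simp)
    (by obtain ⟨i, hi⟩ := hinter k (by omega); exact ⟨i, ha i, hi⟩)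
  have hθjk : θ ⟨j - 1, by omega⟩ < θ ⟨k + 1, hk⟩ := hθ (Fin.mk_lt_mk.mpr (by omega))
  have hμ := sum_filter_and_add_sum univ a (P := fun i => θ ⟨j - 1, by omega⟩ < lam i)
    (Q := fun i => lam i < θ ⟨k + 1, hk⟩)
    fun i _ => (lt_or_ge (θ ⟨j - 1, by omega⟩) (lam i)).imp_right fun h => h.trans_lt hθjk
  have hμ₁ := sum_filter_add_sum_filter_of_not_iff univ a
    (P := fun i => θ ⟨j - 1, by omega⟩ < lam i) (Q := fun i => lam i ≤ θ ⟨j - 1, by omega⟩)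
    fun i _ => not_lt
  have hμ₂ := sum_filter_add_sum_filter_of_not_iff univ a
    (P := fun i => lam i < θ ⟨k + 1, hk⟩) (Q := fun i => θ ⟨k + 1, hk⟩ ≤ lam i)
    fun i _ => not_lt
  have hν := sum_filter_and_add_sum univ b (P := fun i => j ≤ i) (Q := fun i => i ≤ k)
    fun i _ => (le_total j i).imp_right fun h => h.trans hjk.le
  have hν₁ := sum_filter_add_sum_filter_of_not_iff univ b
    (P := fun i => j ≤ i) (Q := fun i => i ≤ ⟨j - 1, by omega⟩)
    fun i _ => by simp only [not_le, Fin.le_def]; omega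
  have hν₂ := sum_filter_add_sum_filter_of_not_iff univ b
    (P := fun i => i ≤ k) (Q := fun i => ⟨k + 1, hk⟩ ≤ i)
    fun i _ => by simp only [not_le, Fin.le_def]; omega
  linarith

end Quadrature

theorem stmt_5_general {n m : ℕ}
    (lam : Fin n → ℝ)
    (w : Fin n → ℂ) (hw : ∀ i, w i ≠ 0)
    (θ : Fin m → ℝ) (hθ : StrictMono θ)
    (c : Fin m → ℂ)
    (hinter : ∀ (k : Fin m) (hk : (k : ℕ) + 1 < m),
      ∃ i, θ k < lam i ∧ lam i < θ ⟨(k : ℕ) + 1, hk⟩)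
    (hquad : ∀ p : Polynomial ℝ, p.natDegree ≤ 2 * m - 2 →
      ∑ i, ‖w i‖ ^ 2 * p.eval (lam i) = ∑ i, ‖c i‖ ^ 2 * p.eval (θ i)) :
    ∀ (j k : Fin m), 0 < (j : ℕ) → j < k → ∀ hk : (k : ℕ) + 1 < m,
      (∑ i ∈ Finset.univ.filter fun i => θ j ≤ lam i ∧ lam i ≤ θ k, ‖w i‖ ^ 2)
          < (∑ i ∈ Finset.univ.filter fun i => j ≤ i ∧ i ≤ k, ‖c i‖ ^ 2) ∧
      (∑ i ∈ Finset.univ.filter fun i => j ≤ i ∧ i ≤ k, ‖c i‖ ^ 2)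
          < ∑ i ∈ Finset.univ.filter fun i =>
              θ ⟨(j : ℕ) - 1, lt_of_le_of_lt (Nat.sub_le _ _) j.isLt⟩ < lam i ∧
                lam i < θ ⟨(k : ℕ) + 1, hk⟩, ‖w i‖ ^ 2 := by
  intro j k hj hjk hk
  have hweight : ∀ i, 0 < ‖w i‖ ^ 2 := fun i => pow_pos (norm_pos_iff.mpr (hw i)) 2
  exact ⟨sum_filter_le_and_le_lt_sum hweight hθ hinter hquad hj hjk.le hk,
    sum_lt_sum_filter_lt_and_lt hweight hθ hinter hquad hj hjk hk⟩

/-- Under the CMS hypotheses (quadrature exactness of degree `2m−2` and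
interlacing of nodes with atoms), for `1 < j < k < m` one has
`μ_n([θ_j, θ_k]) < ∑_{i=j}^k ‖c i‖² < μ_n((θ_{j−1}, θ_{k+1}))`. -/
theorem stmt_5 {n m : ℕ}
    (lam : Fin n → ℝ) (hlam : StrictMono lam)
    (w : Fin n → ℂ) (hw : ∀ i, w i ≠ 0)
    (θ : Fin m → ℝ) (hθ : StrictMono θ)
    (c : Fin m → ℂ)
    (hinter : ∀ (k : Fin m) (hk : (k : ℕ) + 1 < m),
      ∃ i, θ k < lam i ∧ lam i < θ ⟨(k : ℕ) + 1, hk⟩)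
    (hquad : ∀ p : Polynomial ℝ, p.natDegree ≤ 2 * m - 2 →
      ∑ i, ‖w i‖ ^ 2 * p.eval (lam i) = ∑ i, ‖c i‖ ^ 2 * p.eval (θ i)) :
    ∀ (j k : Fin m), 0 < (j : ℕ) → j < k → ∀ hk : (k : ℕ) + 1 < m,
      (∑ i ∈ Finset.univ.filter fun i => θ j ≤ lam i ∧ lam i ≤ θ k, ‖w i‖ ^ 2)
          < (∑ i ∈ Finset.univ.filter fun i => j ≤ i ∧ i ≤ k, ‖c i‖ ^ 2) ∧
      (∑ i ∈ Finset.univ.filter fun i => j ≤ i ∧ i ≤ k, ‖c i‖ ^ 2)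
          < ∑ i ∈ Finset.univ.filter fun i =>
              θ ⟨(j : ℕ) - 1, lt_of_le_of_lt (Nat.sub_le _ _) j.isLt⟩ < lam i ∧
                lam i < θ ⟨(k : ℕ) + 1, hk⟩, ‖w i‖ ^ 2 :=
  stmt_5_general lam w hw θ hθ c hinter hquad
end

section
/- Under the hypotheses of the CMS separation theorem, for each k = 1,...,m−1 there exists an index ν_k with ℓ(k) < ν_k ≤ ℓ(k+1) and a number ξ_k ∈ (0,1] such that ∑_{j=1}^{ν_k−1} |w_j|² + ξ_k |w_{ν_k}|² = ∑_{j=1}^k |c_j|², where ℓ(k) is defined by λ_{ℓ(k)} ≤ θ_k < λ_{ℓ(k)+1}. -/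
/-!
Apply the quadrature identity to two polynomials of degree `2m - 2` that take the values
`1_{j ≤ k}` at the nodes `θ j`: one lies below the indicator of `(-∞, θ (k+1))`, the other lies
above the indicator of `(-∞, θ k]` and is positive on `(θ k, θ (k+1))`. This gives
`∑_{λ_j ≤ θ_k} ‖w j‖² < ∑_{j ≤ k} ‖c j‖² ≤ ∑_{λ_j ≤ θ_{k+1}} ‖w j‖²`, the strict inequality
coming from an atom in `(θ k, θ (k+1))`; `ν` is then the first index at which the partial sums
of `‖w j‖²` reach `∑_{j ≤ k} ‖c j‖²`.

The first polynomial `p` is the Hermite interpolant of the step with `p' = 0` at every node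
except `θ (k+1)`; the second is its mirror image. Rolle's theorem gives a critical point in every
gap except `(θ k, θ (k+1))`. With the nodes these are `2m - 3` roots of `p'`, hence all of them,
so `p'` factors completely and its sign, hence the monotonicity of `p`, is known on every piece.
-/

open Polynomial Module Set

theorem Polynomial.eq_zero_of_hermite_conditions {K : Type*} [Field K] {M : ℕ} {t : Fin M → K}
    (ht : Function.Injective t) (c : Fin M) {p : K[X]} (hdeg : p.natDegree ≤ 2 * M - 2)
    (hroot : ∀ j, p.IsRoot (t j)) (hroot' : ∀ j ≠ c, p.derivative.IsRoot (t j)) : p = 0 := by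
  have hM := c.pos
  by_contra hp
  let e : Fin M → ℕ := fun j => if j = c then 1 else 2
  have hdvd : ∏ j, (X - C (t j)) ^ e j ∣ p := by
    refine Finset.prod_dvd_of_coprime
      (fun i _ j _ hij => ((pairwise_coprime_X_sub_C ht) hij).pow) fun j _ => ?_
    rw [← le_rootMultiplicity_iff hp]
    by_cases hj : j = c
    · simp only [e, if_pos hj]
      exact (rootMultiplicity_pos hp).2 (hroot j)
    · simp only [e, if_neg hj]
      exact (one_lt_rootMultiplicity_iff_isRoot hp).2 ⟨hroot j, hroot' j hj⟩
  have hsum : ∑ j, e j = 2 * M - 1 := by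
    simp only [e, Finset.sum_ite, Finset.filter_eq', Finset.filter_ne', Finset.mem_univ, if_true,
      Finset.sum_const, Finset.card_singleton, Finset.card_erase_of_mem, Finset.card_univ,
      Fintype.card_fin, smul_eq_mul]
    omega
  have := natDegree_le_of_dvd hdvd hp
  rw [natDegree_prod_of_monic _ _ fun j _ => (monic_X_sub_C _).pow _] at this
  simp only [natDegree_pow, natDegree_X_sub_C, mul_one, hsum] at this
  omega

theorem Polynomial.exists_hermite_interpolation {K : Type*} [Field K] {M : ℕ} {t : Fin M → K}
    (ht : Function.Injective t) (c : Fin M) (v : Fin M → K) :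
    ∃ p : K[X], p.natDegree ≤ 2 * M - 2 ∧ (∀ j, p.eval (t j) = v j) ∧
      ∀ j ≠ c, p.derivative.eval (t j) = 0 := by
  have hM := c.pos
  have hdeg : ∀ q ∈ degreeLT K (2 * M - 1), q.natDegree ≤ 2 * M - 2 := fun q hq => by
    rw [show 2 * M - 1 = 2 * M - 2 + 1 by omega, degreeLT_succ_eq_degreeLE, mem_degreeLE] at hq
    exact natDegree_le_iff_degree_le.2 hq
  let S := (degreeLT K (2 * M - 1)).subtype
  let Φ : degreeLT K (2 * M - 1) →ₗ[K] (Fin M → K) × ({j // j ≠ c} → K) :=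
    (LinearMap.pi fun j => leval (t j) ∘ₗ S).prod
      (LinearMap.pi fun j : {j // j ≠ c} => leval (t j) ∘ₗ derivative ∘ₗ S)
  have hinj : Function.Injective Φ := by
    rw [← LinearMap.ker_eq_bot, Submodule.eq_bot_iff]
    rintro ⟨q, hq⟩ hΦ
    rw [Submodule.mk_eq_zero]
    exact eq_zero_of_hermite_conditions ht c (hdeg q hq)
      (fun j => congrFun (congrArg Prod.fst hΦ) j) fun j hj => congrFun (congrArg Prod.snd hΦ) ⟨j, hj⟩
  have hrank : finrank K (degreeLT K (2 * M - 1)) =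
      finrank K ((Fin M → K) × ({j // j ≠ c} → K)) := by
    rw [(degreeLTEquiv K _).finrank_eq, finrank_prod]
    simp [Fintype.card_subtype_compl]
    omega
  obtain ⟨⟨q, hq⟩, hΦ⟩ :=
    (LinearMap.injective_iff_surjective_of_finrank_eq_finrank hrank).1 hinj (v, 0)
  exact ⟨q, hdeg q hq, fun j => congrFun (congrArg Prod.fst hΦ) j,
    fun j hj => congrFun (congrArg Prod.snd hΦ) ⟨j, hj⟩⟩

theorem Polynomial.eval_eq_leadingCoeff_mul_prod_sub {R : Type*} [CommRing R] [IsDomain R]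
    {f : R[X]} {Z : Finset R} (hZ : ∀ z ∈ Z, f.IsRoot z) (hdeg : f.natDegree ≤ Z.card) (x : R) :
    f.eval x = f.leadingCoeff * ∏ z ∈ Z, (x - z) := by
  rcases eq_or_ne f 0 with rfl | hf
  · simp
  have hroots : Z.val = f.roots := Multiset.eq_of_le_of_card_le
    ((Multiset.le_iff_subset Z.nodup).2 fun z hz => (mem_roots hf).2 (hZ z hz))
    ((card_roots' f).trans hdeg)
  have hcard : f.roots.card = f.natDegree := le_antisymm (card_roots' f) (hroots ▸ hdeg)
  conv_lhs => rw [← C_leadingCoeff_mul_prod_multiset_X_sub_C hcard, ← hroots]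
  simp only [eval_mul, eval_C, eval_multiset_prod, Multiset.map_map, Function.comp_def, eval_sub,
    eval_X]
  rfl

theorem Polynomial.strictAntiOn_of_derivative_neg {D : Set ℝ} (hD : Convex ℝ D) {p : ℝ[X]}
    (h : ∀ x ∈ interior D, p.derivative.eval x < 0) : StrictAntiOn (fun x => p.eval x) D :=
  strictAntiOn_of_deriv_neg hD p.continuous.continuousOn fun x hx => p.deriv ▸ h x hx

theorem Polynomial.strictMonoOn_of_derivative_pos {D : Set ℝ} (hD : Convex ℝ D) {p : ℝ[X]}
    (h : ∀ x ∈ interior D, 0 < p.derivative.eval x) : StrictMonoOn (fun x => p.eval x) D :=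
  strictMonoOn_of_deriv_pos hD p.continuous.continuousOn fun x hx => p.deriv ▸ h x hx

section PairProduct

variable {𝕜 ι : Type*} [Field 𝕜] [LinearOrder 𝕜] [IsStrictOrderedRing 𝕜] {s : Finset ι}
  {a b : ι → 𝕜} {x : 𝕜}

theorem Finset.prod_sub_mul_sub_pos (hab : ∀ i ∈ s, a i ≤ b i)
    (hx : ∀ i ∈ s, x < a i ∨ b i < x) : 0 < ∏ i ∈ s, (x - a i) * (x - b i) :=
  Finset.prod_pos fun i hi => by rcases hx i hi with h | h <;> nlinarith [hab i hi]

theorem Finset.prod_sub_mul_sub_neg [DecidableEq ι] (hab : ∀ i ∈ s, a i ≤ b i) {i : ι} (hi : i ∈ s)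
    (hxi : x ∈ Set.Ioo (a i) (b i)) (hx : ∀ j ∈ s, j ≠ i → x < a j ∨ b j < x) :
    ∏ j ∈ s, (x - a j) * (x - b j) < 0 := by
  rw [← Finset.mul_prod_erase s _ hi]
  refine mul_neg_of_neg_of_pos (mul_neg_of_pos_of_neg (sub_pos.2 hxi.1) (sub_neg.2 hxi.2)) ?_
  exact prod_sub_mul_sub_pos (fun j hj => hab j (mem_of_mem_erase hj))
    fun j hj => hx j (mem_of_mem_erase hj) (ne_of_mem_erase hj)

end PairProduct

theorem exists_mem_Ico_succ {α : Type*} [LinearOrder α] (f : ℕ → α) {x : α} {N : ℕ}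
    (h₀ : f 0 ≤ x) (hN : x < f N) : ∃ i < N, x ∈ Ico (f i) (f (i + 1)) := by
  classical
  have hex : ∃ j, x < f j := ⟨N, hN⟩
  have hspec : x < f (Nat.find hex) := Nat.find_spec hex
  obtain ⟨i, hi⟩ := Nat.exists_eq_succ_of_ne_zero fun h : Nat.find hex = 0 => (h ▸ hspec).not_ge h₀
  have hiN : Nat.find hex ≤ N := Nat.find_min' hex hN
  rw [hi] at hspec hiN
  exact ⟨i, hiN, not_lt.1 (Nat.find_min hex (by omega)), hspec⟩

theorem exists_strictMono_nat_extension {m : ℕ} {θ : Fin m → ℝ} (hθ : StrictMono θ) :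
    ∃ t : ℕ → ℝ, StrictMono t ∧ ∀ j : Fin m, t j = θ j := by
  cases m with
  | zero => exact ⟨Nat.cast, Nat.strictMono_cast, fun j => j.elim0⟩
  | succ m =>
    refine ⟨fun i => if h : i < m + 1 then θ ⟨i, h⟩ else θ (Fin.last m) + i,
      strictMono_nat_of_lt_succ fun i => ?_, fun j => dif_pos j.2⟩
    by_cases h : i + 1 < m + 1
    · rw [dif_pos h, dif_pos (by omega)]
      exact hθ (Fin.mk_lt_mk.2 (Nat.lt_succ_self i))
    · rw [dif_neg h]
      split_ifs with h'
      · rw [show (⟨i, h'⟩ : Fin (m + 1)) = Fin.last m from Fin.ext (by simp; omega)]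
        simp only [Nat.cast_add, Nat.cast_one]
        linarith [(Nat.cast_nonneg i : (0 : ℝ) ≤ i)]
      · push_cast
        linarith

def criticalGaps (M K : ℕ) : Finset ℕ := (Finset.range (M - 1)).erase K

theorem mem_criticalGaps {M K i : ℕ} : i ∈ criticalGaps M K ↔ i + 1 < M ∧ i ≠ K := by
  simp only [criticalGaps, Finset.mem_erase, Finset.mem_range]
  omega

theorem card_criticalGaps {M K : ℕ} (h : K + 1 < M) : (criticalGaps M K).card = M - 2 := by
  rw [criticalGaps, Finset.card_erase_of_mem (Finset.mem_range.2 (by omega)), Finset.card_range]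
  omega

/-- Only `t 0, …, t (M - 1)` matter; indexing the nodes by `ℕ` (see
`exists_strictMono_nat_extension`) spares bound proofs for neighbours `t (i + 1)`. -/
structure IsStepInterpolant (t : ℕ → ℝ) (M K : ℕ) (p : ℝ[X]) (ζ : ℕ → ℝ) : Prop where
  strictMono : StrictMono t
  succ_lt : K + 1 < M
  natDegree_le : p.natDegree ≤ 2 * M - 2
  eval_node : ∀ j < M, p.eval (t j) = if j ≤ K then 1 else 0
  derivative_node : ∀ j < M, j ≠ K + 1 → p.derivative.eval (t j) = 0
  rolle : ∀ i ∈ criticalGaps M K, ζ i ∈ Ioo (t i) (t (i + 1)) ∧ p.derivative.eval (ζ i) = 0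

namespace IsStepInterpolant

variable {t : ℕ → ℝ} {M K : ℕ} {p : ℝ[X]} {ζ : ℕ → ℝ}

theorem exists_of_strictMono (ht : StrictMono t) (hK : K + 1 < M) :
    ∃ p ζ, IsStepInterpolant t M K p ζ := by
  obtain ⟨p, hdeg, hval, hder⟩ := exists_hermite_interpolation (ht.injective.comp Fin.val_injective)
    (⟨K + 1, hK⟩ : Fin M) fun j => if (j : ℕ) ≤ K then 1 else 0
  have hval' : ∀ j < M, p.eval (t j) = if j ≤ K then 1 else 0 := fun j hj => hval ⟨j, hj⟩
  have hrolle : ∀ i ∈ criticalGaps M K, ∃ z ∈ Ioo (t i) (t (i + 1)), p.derivative.eval z = 0 := by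
    intro i hi
    obtain ⟨hiM, hiK⟩ := mem_criticalGaps.1 hi
    obtain ⟨z, hz, hz0⟩ := exists_deriv_eq_zero (ht (Nat.lt_succ_self i)) p.continuous.continuousOn
      (by
        rw [hval' i (by omega), hval' (i + 1) (by omega)]
        split_ifs <;> first | rfl | (exfalso; omega))
    exact ⟨z, hz, p.deriv ▸ hz0⟩
  choose! ζ hζ using hrolle
  exact ⟨p, ζ, ht, hK, hdeg, hval',
    fun j hj hjK => hder ⟨j, hj⟩ (by simpa [Fin.ext_iff] using hjK),
    fun i hi => ⟨(hζ i hi).1, (hζ i hi).2⟩⟩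

theorem outside_pair (h : IsStepInterpolant t M K p ζ) {i j : ℕ}
    (hj : j ∈ criticalGaps M K) (hji : j ≠ i) {x : ℝ} (hx : x ∈ Ioo (t i) (t (i + 1))) :
    x < ζ j ∨ t (j + 1) < x := by
  rcases lt_or_gt_of_ne hji with hlt | hlt
  · exact Or.inr ((h.strictMono.monotone hlt).trans_lt hx.1)
  · exact Or.inl ((hx.2.trans_le (h.strictMono.monotone hlt)).trans (h.rolle j hj).1.1)

theorem prod_pos (h : IsStepInterpolant t M K p ζ) {i : ℕ} {x : ℝ}
    (hx : x ∈ Ioo (t i) (t (i + 1))) (hxi : i = K ∨ x < ζ i) :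
    0 < ∏ j ∈ criticalGaps M K, (x - ζ j) * (x - t (j + 1)) :=
  Finset.prod_sub_mul_sub_pos (fun j hj => (h.rolle j hj).1.2.le) fun j hj => by
    rcases eq_or_ne j i with rfl | hji
    · exact Or.inl (hxi.resolve_left (mem_criticalGaps.1 hj).2)
    · exact h.outside_pair hj hji hx

theorem prod_neg (h : IsStepInterpolant t M K p ζ) {i : ℕ} (hi : i ∈ criticalGaps M K)
    {x : ℝ} (hx : x ∈ Ioo (ζ i) (t (i + 1))) :
    ∏ j ∈ criticalGaps M K, (x - ζ j) * (x - t (j + 1)) < 0 :=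
  Finset.prod_sub_mul_sub_neg (fun j hj => (h.rolle j hj).1.2.le) hi hx fun _ hj hji =>
    h.outside_pair hj hji ⟨(h.rolle i hi).1.1.trans hx.1, hx.2⟩

/-- Pairing each `ζ i` with `t (i + 1)` leaves `t 0` alone; a pair factor is negative exactly
between its two roots, so the sign of `p'` can be read off on every piece. -/
theorem eval_derivative_eq (h : IsStepInterpolant t M K p ζ) (x : ℝ) :
    p.derivative.eval x = p.derivative.leadingCoeff *
      ((x - t 0) * ∏ i ∈ criticalGaps M K, (x - ζ i) * (x - t (i + 1))) := by
  classical
  set G := criticalGaps M K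
  have hK := h.succ_lt
  have hmem : ∀ i ∈ G, ∀ z ∈ ({ζ i, t (i + 1)} : Finset ℝ), t i < z ∧ z ≤ t (i + 1) := by
    intro i hi z hz
    rcases Finset.mem_insert.1 hz with rfl | hz
    · exact ⟨(h.rolle i hi).1.1, (h.rolle i hi).1.2.le⟩
    · rw [Finset.mem_singleton.1 hz]
      exact ⟨h.strictMono (Nat.lt_succ_self i), le_rfl⟩
  have hdisj : (G : Set ℕ).PairwiseDisjoint fun i => ({ζ i, t (i + 1)} : Finset ℝ) := by
    intro i hi j hj hij
    refine Finset.disjoint_left.2 fun z hzi hzj => ?_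
    have hzi := hmem i hi z hzi
    have hzj := hmem j hj z hzj
    rcases lt_or_gt_of_ne hij with hlt | hlt
    · linarith [h.strictMono.monotone (Nat.succ_le_of_lt hlt)]
    · linarith [h.strictMono.monotone (Nat.succ_le_of_lt hlt)]
  have hnot : t 0 ∉ G.biUnion fun i => ({ζ i, t (i + 1)} : Finset ℝ) := by
    simp only [Finset.mem_biUnion, not_exists, not_and]
    intro i hi hz
    linarith [(hmem i hi _ hz).1, h.strictMono.monotone (Nat.zero_le i)]
  have hcard : ∀ i ∈ G, ({ζ i, t (i + 1)} : Finset ℝ).card = 2 :=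
    fun i hi => Finset.card_pair (h.rolle i hi).1.2.ne
  have hroot : ∀ z ∈ insert (t 0) (G.biUnion fun i => {ζ i, t (i + 1)}),
      p.derivative.IsRoot z := by
    simp only [Finset.mem_insert, Finset.mem_biUnion]
    rintro z (rfl | ⟨i, hi, hz⟩)
    · exact h.derivative_node 0 (by omega) (by omega)
    · obtain ⟨hiM, hiK⟩ := mem_criticalGaps.1 hi
      rcases hz with rfl | hz
      · exact (h.rolle i hi).2
      · rw [Finset.mem_singleton.1 hz]
        exact h.derivative_node (i + 1) (by omega) (by omega)
  have hdeg : p.derivative.natDegree ≤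
      (insert (t 0) (G.biUnion fun i => ({ζ i, t (i + 1)} : Finset ℝ))).card := by
    rw [Finset.card_insert_of_notMem hnot, Finset.card_biUnion hdisj, Finset.sum_congr rfl hcard,
      Finset.sum_const, card_criticalGaps hK, smul_eq_mul]
    have := natDegree_derivative_le p
    have := h.natDegree_le
    omega
  rw [eval_eq_leadingCoeff_mul_prod_sub hroot hdeg, Finset.prod_insert hnot,
    Finset.prod_biUnion hdisj]
  congr 2
  exact Finset.prod_congr rfl fun i hi => Finset.prod_pair (h.rolle i hi).1.2.ne

theorem leadingCoeff_derivative_neg (h : IsStepInterpolant t M K p ζ) :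
    p.derivative.leadingCoeff < 0 := by
  have hK := h.succ_lt
  have hlt : t K < t (K + 1) := h.strictMono (Nat.lt_succ_self K)
  obtain ⟨y, hy, hy'⟩ := exists_hasDerivAt_eq_slope (fun x => p.eval x)
    (fun x => p.derivative.eval x) hlt p.continuous.continuousOn fun x _ => p.hasDerivAt x
  have hslope : p.derivative.eval y < 0 := by
    rw [hy', h.eval_node K (by omega), h.eval_node (K + 1) hK, if_pos le_rfl,
      if_neg (by omega)]
    exact div_neg_of_neg_of_pos (by norm_num) (sub_pos.2 hlt)
  rw [h.eval_derivative_eq] at hslope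
  have hy0 : 0 < y - t 0 := sub_pos.2 ((h.strictMono.monotone (Nat.zero_le K)).trans_lt hy.1)
  by_contra hd
  exact hslope.not_ge (mul_nonneg (not_lt.1 hd) (mul_pos hy0 (h.prod_pos hy (Or.inl rfl))).le)

theorem eval_derivative_neg (h : IsStepInterpolant t M K p ζ) {i : ℕ} {x : ℝ}
    (hx : x ∈ Ioo (t i) (t (i + 1))) (hxi : i = K ∨ x < ζ i) : p.derivative.eval x < 0 := by
  rw [h.eval_derivative_eq]
  exact mul_neg_of_neg_of_pos h.leadingCoeff_derivative_neg (mul_pos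
    (sub_pos.2 ((h.strictMono.monotone (Nat.zero_le i)).trans_lt hx.1)) (h.prod_pos hx hxi))

theorem eval_derivative_pos (h : IsStepInterpolant t M K p ζ) {i : ℕ}
    (hi : i ∈ criticalGaps M K) {x : ℝ} (hx : x ∈ Ioo (ζ i) (t (i + 1))) :
    0 < p.derivative.eval x := by
  have hx0 : t 0 < x :=
    (h.strictMono.monotone (Nat.zero_le i)).trans_lt ((h.rolle i hi).1.1.trans hx.1)
  rw [h.eval_derivative_eq]
  exact mul_pos_of_neg_of_neg h.leadingCoeff_derivative_neg
    (mul_neg_of_pos_of_neg (sub_pos.2 hx0) (h.prod_neg hi hx))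

theorem eval_derivative_pos_of_lt (h : IsStepInterpolant t M K p ζ) {x : ℝ} (hx : x < t 0) :
    0 < p.derivative.eval x := by
  have hprod : 0 < ∏ j ∈ criticalGaps M K, (x - ζ j) * (x - t (j + 1)) :=
    Finset.prod_sub_mul_sub_pos (fun j hj => (h.rolle j hj).1.2.le) fun j hj =>
      Or.inl ((hx.trans_le (h.strictMono.monotone (Nat.zero_le j))).trans (h.rolle j hj).1.1)
  rw [h.eval_derivative_eq]
  exact mul_pos_of_neg_of_neg h.leadingCoeff_derivative_neg
    (mul_neg_of_neg_of_pos (sub_neg.2 hx) hprod)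

theorem eval_derivative_neg_of_gt (h : IsStepInterpolant t M K p ζ) {x : ℝ}
    (hx : t (M - 1) < x) : p.derivative.eval x < 0 := by
  have hK := h.succ_lt
  have hprod : 0 < ∏ j ∈ criticalGaps M K, (x - ζ j) * (x - t (j + 1)) :=
    Finset.prod_sub_mul_sub_pos (fun j hj => (h.rolle j hj).1.2.le) fun j hj => by
      have := (mem_criticalGaps.1 hj).1
      exact Or.inr ((h.strictMono.monotone (by omega : j + 1 ≤ M - 1)).trans_lt hx)
  rw [h.eval_derivative_eq]
  exact mul_neg_of_neg_of_pos h.leadingCoeff_derivative_neg (mul_pos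
    (sub_pos.2 ((h.strictMono.monotone (Nat.zero_le _)).trans_lt hx)) hprod)

theorem strictAntiOn_Icc (h : IsStepInterpolant t M K p ζ) :
    StrictAntiOn (fun x => p.eval x) (Icc (t K) (t (K + 1))) :=
  strictAntiOn_of_derivative_neg (convex_Icc _ _) fun _ hx => by
    rw [interior_Icc] at hx
    exact h.eval_derivative_neg hx (Or.inl rfl)

theorem eval_le_eval_node (h : IsStepInterpolant t M K p ζ) {i : ℕ} (hi : i + 1 < M) {x : ℝ}
    (hx : x ∈ Icc (t i) (t (i + 1))) : p.eval x ≤ p.eval (t i) := by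
  rcases eq_or_ne i K with rfl | hiK
  · exact h.strictAntiOn_Icc.antitoneOn (left_mem_Icc.2 (hx.1.trans hx.2)) hx hx.1
  have hG : i ∈ criticalGaps M K := mem_criticalGaps.2 ⟨hi, hiK⟩
  have hζ := (h.rolle i hG).1
  rcases le_or_gt x (ζ i) with hxζ | hxζ
  · refine (strictAntiOn_of_derivative_neg (convex_Icc (t i) (ζ i)) fun y hy => ?_).antitoneOn
      (left_mem_Icc.2 hζ.1.le) ⟨hx.1, hxζ⟩ hx.1
    rw [interior_Icc] at hy
    exact h.eval_derivative_neg ⟨hy.1, hy.2.trans hζ.2⟩ (Or.inr hy.2)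
  · have hmono := strictMonoOn_of_derivative_pos (convex_Icc (ζ i) (t (i + 1))) fun y hy => by
      rw [interior_Icc] at hy
      exact h.eval_derivative_pos hG hy
    calc p.eval x ≤ p.eval (t (i + 1)) :=
          hmono.monotoneOn ⟨hxζ.le, hx.2⟩ (right_mem_Icc.2 hζ.2.le) hx.2
      _ = p.eval (t i) := by
          rw [h.eval_node i (by omega), h.eval_node (i + 1) hi]
          split_ifs <;> first | rfl | (exfalso; omega)

theorem eval_le_eval_first (h : IsStepInterpolant t M K p ζ) {x : ℝ} (hx : x ≤ t 0) :
    p.eval x ≤ p.eval (t 0) :=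
  (strictMonoOn_of_derivative_pos (convex_Iic (t 0)) fun _ hy => by
    rw [interior_Iic] at hy
    exact h.eval_derivative_pos_of_lt hy).monotoneOn hx self_mem_Iic hx

theorem eval_le_eval_last (h : IsStepInterpolant t M K p ζ) {x : ℝ} (hx : t (M - 1) ≤ x) :
    p.eval x ≤ p.eval (t (M - 1)) :=
  (strictAntiOn_of_derivative_neg (convex_Ici (t (M - 1))) fun _ hy => by
    rw [interior_Ici] at hy
    exact h.eval_derivative_neg_of_gt hy).antitoneOn self_mem_Ici hx hx

theorem eval_le_step (h : IsStepInterpolant t M K p ζ) (x : ℝ) :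
    p.eval x ≤ if x < t (K + 1) then 1 else 0 := by
  have hK := h.succ_lt
  have hmono := h.strictMono.monotone
  rcases le_or_gt x (t 0) with hx0 | hx0
  · rw [if_pos (hx0.trans_lt (h.strictMono (Nat.succ_pos K)))]
    simpa [h.eval_node 0 (by omega)] using h.eval_le_eval_first hx0
  rcases le_or_gt (t (M - 1)) x with hxM | hxM
  · refine (h.eval_le_eval_last hxM).trans ?_
    rw [h.eval_node (M - 1) (by omega), if_neg (by omega)]
    split_ifs <;> norm_num
  obtain ⟨i, hi, hxi⟩ := exists_mem_Ico_succ t hx0.le hxM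
  refine (h.eval_le_eval_node (by omega) (Ico_subset_Icc_self hxi)).trans ?_
  rw [h.eval_node i (by omega)]
  split_ifs with hiK hx
  · exact le_rfl
  · exact absurd (hxi.2.trans_le (hmono (by omega))) hx
  all_goals norm_num

end IsStepInterpolant

theorem exists_poly_le_step {m : ℕ} {θ : Fin m → ℝ} (hθ : StrictMono θ) (k : Fin m)
    (hk : (k : ℕ) + 1 < m) :
    ∃ p : ℝ[X], p.natDegree ≤ 2 * m - 2 ∧ (∀ j, p.eval (θ j) = if j ≤ k then 1 else 0) ∧
      (∀ x, p.eval x ≤ if x < θ ⟨k + 1, hk⟩ then 1 else 0) ∧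
      ∀ x ∈ Ioo (θ k) (θ ⟨k + 1, hk⟩), p.eval x < 1 := by
  obtain ⟨t, ht, htθ⟩ := exists_strictMono_nat_extension hθ
  obtain ⟨p, ζ, h⟩ := IsStepInterpolant.exists_of_strictMono ht hk
  have htk : t k = θ k := htθ k
  have htk' : t (k + 1) = θ ⟨k + 1, hk⟩ := htθ ⟨k + 1, hk⟩
  refine ⟨p, h.natDegree_le, fun j => ?_, fun x => ?_, fun x hx => ?_⟩
  · rw [← htθ, h.eval_node j j.2]
    rfl
  · rw [← htk']
    exact h.eval_le_step x
  · rw [← htk, ← htk'] at hx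
    have := h.strictAntiOn_Icc (left_mem_Icc.2 (h.strictMono (Nat.lt_succ_self k)).le)
      (Ioo_subset_Icc_self hx) hx.1
    simpa [h.eval_node k (by omega)] using this

theorem exists_poly_ge_step {m : ℕ} {θ : Fin m → ℝ} (hθ : StrictMono θ) (k : Fin m)
    (hk : (k : ℕ) + 1 < m) :
    ∃ q : ℝ[X], q.natDegree ≤ 2 * m - 2 ∧ (∀ j, q.eval (θ j) = if j ≤ k then 1 else 0) ∧
      (∀ x, (if x ≤ θ k then 1 else 0) ≤ q.eval x) ∧
      ∀ x ∈ Ioo (θ k) (θ ⟨k + 1, hk⟩), 0 < q.eval x := by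
  have hθ' : StrictMono fun j => -θ (Fin.rev j) := fun i j hij =>
    neg_lt_neg (hθ (Fin.rev_lt_rev.2 hij))
  obtain ⟨p, hdeg, hval, hle, hlt⟩ :=
    exists_poly_le_step hθ' ⟨m - 2 - k, by omega⟩ (by simp only; omega)
  have hrev₁ : Fin.rev (⟨m - 2 - k + 1, by omega⟩ : Fin m) = k := Fin.ext (by simp; omega)
  have hrev₂ : Fin.rev (⟨m - 2 - k, by omega⟩ : Fin m) = ⟨k + 1, hk⟩ :=
    Fin.ext (by simp; omega)
  simp only [hrev₁, hrev₂] at hle hlt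
  have heval : ∀ x, (1 - p.comp (-X)).eval x = 1 - p.eval (-x) := by simp
  refine ⟨1 - p.comp (-X), ?_, fun j => ?_, fun x => ?_, fun x hx => ?_⟩
  · refine (natDegree_sub_le _ _).trans (max_le (by simp) ?_)
    simpa [natDegree_comp] using hdeg
  · have := hval j.rev
    simp only [Fin.rev_rev] at this
    rw [heval, this]
    simp only [Fin.le_def, Fin.val_rev]
    have := j.isLt
    split_ifs <;> first | (exfalso; omega) | norm_num
  · have := hle (-x)
    rw [heval]
    split_ifs at this ⊢ <;> linarith
  · have := hlt (-x) ⟨neg_lt_neg hx.2, neg_lt_neg hx.1⟩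
    rw [heval]
    linarith

section WeightedSums

theorem sum_mul_eq_sum_filter {ι R : Type*} [Fintype ι] [Semiring R] {a f : ι → R}
    {P : ι → Prop} [DecidablePred P] (hf : ∀ j, f j = if P j then 1 else 0) :
    ∑ j, a j * f j = ∑ j ∈ Finset.univ.filter P, a j := by
  simp only [Finset.sum_filter, hf, mul_ite, mul_one, mul_zero]

variable {ι 𝕜 : Type*} [Fintype ι] [Field 𝕜] [LinearOrder 𝕜] [IsStrictOrderedRing 𝕜]
  {a f : ι → 𝕜}

theorem sum_mul_le_sum_filter {P : ι → Prop} [DecidablePred P] (ha : ∀ j, 0 ≤ a j)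
    (hf : ∀ j, f j ≤ if P j then 1 else 0) :
    ∑ j, a j * f j ≤ ∑ j ∈ Finset.univ.filter P, a j := by
  rw [Finset.sum_filter]
  exact Finset.sum_le_sum fun j _ => by
    simpa only [mul_ite, mul_one, mul_zero] using mul_le_mul_of_nonneg_left (hf j) (ha j)

theorem sum_filter_lt_sum_mul {P : ι → Prop} [DecidablePred P] (ha : ∀ j, 0 ≤ a j)
    (hf : ∀ j, (if P j then 1 else 0) ≤ f j) {j₀ : ι} (hj₀ : ¬P j₀) (hpos : 0 < a j₀ * f j₀) :
    ∑ j ∈ Finset.univ.filter P, a j < ∑ j, a j * f j := by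
  rw [Finset.sum_filter]
  refine Finset.sum_lt_sum (fun j _ => ?_) ⟨j₀, Finset.mem_univ _, by simpa [hj₀] using hpos⟩
  simpa only [mul_ite, mul_one, mul_zero] using mul_le_mul_of_nonneg_left (hf j) (ha j)

theorem exists_sum_filter_lt_add_mul_eq [LinearOrder ι] (ha : ∀ j, 0 ≤ a j) {i₀ i₁ : ι}
    {S : 𝕜} (h₀ : ∑ j ∈ Finset.univ.filter (· ≤ i₀), a j < S)
    (h₁ : S ≤ ∑ j ∈ Finset.univ.filter (· ≤ i₁), a j) :
    ∃ (ν : ι) (ξ : 𝕜), 0 < ξ ∧ ξ ≤ 1 ∧ i₀ < ν ∧ ν ≤ i₁ ∧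
      (∑ j ∈ Finset.univ.filter (· < ν), a j) + ξ * a ν = S := by
  classical
  set F := Finset.univ.filter fun ν => S ≤ ∑ j ∈ Finset.univ.filter (· ≤ ν), a j
  have hi₁ : i₁ ∈ F := by simpa [F] using h₁
  set ν := F.min' ⟨i₁, hi₁⟩
  have hνS : S ≤ ∑ j ∈ Finset.univ.filter (· ≤ ν), a j := by
    simpa [F] using F.min'_mem ⟨i₁, hi₁⟩
  have hν₀ : i₀ < ν := lt_of_not_ge fun h => (hνS.trans (Finset.sum_le_sum_of_subset_of_nonneg
    (fun j => by simpa using fun hj : j ≤ ν => hj.trans h) fun j _ _ => ha j)).not_gt h₀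
  set μ := (Finset.univ.filter (· < ν)).max' ⟨i₀, by simpa using hν₀⟩
  have hμν : μ < ν := by
    simpa using (Finset.univ.filter (· < ν)).max'_mem ⟨i₀, by simpa using hν₀⟩
  have hμ : Finset.univ.filter (· < ν) = Finset.univ.filter (· ≤ μ) := by
    ext j
    simp only [Finset.mem_filter, Finset.mem_univ, true_and]
    exact ⟨fun hj => Finset.le_max' _ _ (by simpa using hj), fun hj => hj.trans_lt hμν⟩
  have hT : ∑ j ∈ Finset.univ.filter (· < ν), a j < S := by
    rw [hμ]
    by_contra! hc
    exact (F.min'_le μ (by simpa [F] using hc)).not_gt hμν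
  have hsplit : ∑ j ∈ Finset.univ.filter (· ≤ ν), a j =
      (∑ j ∈ Finset.univ.filter (· < ν), a j) + a ν := by
    rw [show Finset.univ.filter (· ≤ ν) = insert ν (Finset.univ.filter (· < ν)) by
      ext j; simp [le_iff_lt_or_eq, or_comm], Finset.sum_insert (by simp), add_comm]
  have haν : 0 < a ν := by linarith
  refine ⟨ν, (S - ∑ j ∈ Finset.univ.filter (· < ν), a j) / a ν, div_pos (sub_pos.2 hT) haν,
    (div_le_one haν).2 (by linarith), hν₀, F.min'_le _ hi₁, ?_⟩
  field_simp
  ring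

end WeightedSums

theorem stmt_6_general {n m : ℕ}
    (lam : Fin n → ℝ) (hlam : StrictMono lam)
    (w : Fin n → ℂ) (hw : ∀ j, w j ≠ 0)
    (θ : Fin m → ℝ) (hθ : StrictMono θ)
    (c : Fin m → ℂ)
    (hinter : ∀ (k : Fin m) (hk : (k : ℕ) + 1 < m),
      ∃ j, θ k < lam j ∧ lam j < θ ⟨(k : ℕ) + 1, hk⟩)
    (hquad : ∀ p : Polynomial ℝ, p.natDegree ≤ 2 * m - 2 →
      ∑ j, ‖w j‖ ^ 2 * p.eval (lam j) = ∑ j, ‖c j‖ ^ 2 * p.eval (θ j))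
    (ℓ : Fin m → Fin n)
    (hℓle : ∀ k, lam (ℓ k) ≤ θ k)
    (hℓmax : ∀ (k : Fin m) (i : Fin n), lam i ≤ θ k → i ≤ ℓ k) :
    ∀ (k : Fin m) (hk : (k : ℕ) + 1 < m),
      ∃ (ν : Fin n) (ξ : ℝ), 0 < ξ ∧ ξ ≤ 1 ∧
        ℓ k < ν ∧ ν ≤ ℓ ⟨(k : ℕ) + 1, hk⟩ ∧
        (∑ j ∈ Finset.univ.filter fun j => j < ν, ‖w j‖ ^ 2) + ξ * ‖w ν‖ ^ 2
          = ∑ j ∈ Finset.univ.filter fun j => j ≤ k, ‖c j‖ ^ 2 := by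
  intro k hk
  have hle_ℓ : ∀ i j, j ≤ ℓ i ↔ lam j ≤ θ i :=
    fun i j => ⟨fun h => (hlam.monotone h).trans (hℓle i), hℓmax i j⟩
  obtain ⟨P, hPdeg, hPθ, hPle, -⟩ := exists_poly_le_step hθ k hk
  obtain ⟨Q, hQdeg, hQθ, hQge, hQpos⟩ := exists_poly_ge_step hθ k hk
  obtain ⟨j₀, hj₀⟩ := hinter k hk
  refine exists_sum_filter_lt_add_mul_eq (fun j => sq_nonneg ‖w j‖) ?_ ?_
  · rw [← sum_mul_eq_sum_filter hQθ, ← hquad Q hQdeg]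
    refine sum_filter_lt_sum_mul (fun j => sq_nonneg ‖w j‖) (fun j => ?_)
      (by rw [hle_ℓ]; exact not_le.2 hj₀.1)
      (mul_pos (pow_pos (norm_pos_iff.2 (hw j₀)) 2) (hQpos _ hj₀))
    simpa only [hle_ℓ] using hQge (lam j)
  · rw [← sum_mul_eq_sum_filter hPθ, ← hquad P hPdeg]
    refine sum_mul_le_sum_filter (fun j => sq_nonneg ‖w j‖) fun j => (hPle (lam j)).trans ?_
    split_ifs with h₁ h₂ <;> first | exact absurd (hℓmax _ j h₁.le) h₂ | norm_num

/-- Under the hypotheses of the CMS separation theorem, with `ℓ(k)` the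
largest index such that `lam (ℓ k) ≤ θ k` (and `lam (ℓ k) ≠ θ k`), for every
`k = 1,…,m−1` there exist an index `ν` with `ℓ(k) < ν ≤ ℓ(k+1)` and `ξ ∈ (0,1]` with
`∑_{j<ν} ‖w j‖² + ξ ‖w ν‖² = ∑_{j≤k} ‖c j‖²`. -/
theorem stmt_6 {n m : ℕ}
    (lam : Fin n → ℝ) (hlam : StrictMono lam)
    (w : Fin n → ℂ) (hw : ∀ j, w j ≠ 0)
    (θ : Fin m → ℝ) (hθ : StrictMono θ)
    (c : Fin m → ℂ)
    (hinter : ∀ (k : Fin m) (hk : (k : ℕ) + 1 < m),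
      ∃ j, θ k < lam j ∧ lam j < θ ⟨(k : ℕ) + 1, hk⟩)
    (hquad : ∀ p : Polynomial ℝ, p.natDegree ≤ 2 * m - 2 →
      ∑ j, ‖w j‖ ^ 2 * p.eval (lam j) = ∑ j, ‖c j‖ ^ 2 * p.eval (θ j))
    (ℓ : Fin m → Fin n)
    (hℓle : ∀ k, lam (ℓ k) ≤ θ k)
    (hℓmax : ∀ (k : Fin m) (i : Fin n), lam i ≤ θ k → i ≤ ℓ k)
    (hℓne : ∀ k, lam (ℓ k) ≠ θ k) :
    ∀ (k : Fin m) (hk : (k : ℕ) + 1 < m),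
      ∃ (ν : Fin n) (ξ : ℝ), 0 < ξ ∧ ξ ≤ 1 ∧
        ℓ k < ν ∧ ν ≤ ℓ ⟨(k : ℕ) + 1, hk⟩ ∧
        (∑ j ∈ Finset.univ.filter fun j => j < ν, ‖w j‖ ^ 2) + ξ * ‖w ν‖ ^ 2
          = ∑ j ∈ Finset.univ.filter fun j => j ≤ k, ‖c j‖ ^ 2 :=
  stmt_6_general lam hlam w hw θ hθ c hinter hquad ℓ hℓle hℓmax
end

section
/- Let A ∈ ℂ^{n×n} be Hermitian, u ∈ ℂⁿ, and let V_m be an orthonormal basis of the Krylov subspace K_m(A,u) generated by the Lanczos method with Jacobi matrix J_m = V_m* A V_m and β_0 = ‖u‖. Then for every polynomial p of degree at most 2m−1, ⟨u, p(A)u⟩ = β_0² ⟨e_1, p(J_m) e_1⟩. -/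
open Matrix Polynomial

/-!
Because `J` is upper Hessenberg, `J ^ k e₁` has zero last entry for `k < m - 1`, so the residual
term of `A V = V J + βₘ v' eₘᵀ` never fires and `A ^ k u = β₀ V J ^ k e₁` for `k ≤ m - 1`; one
more step with `Vᴴ A V = J` gives `Vᴴ A ^ k u = β₀ J ^ k e₁` for `k ≤ m`. For `d = i + j` with
`i ≤ m - 1` and `j ≤ m`, self-adjointness of `A` and of `J` then yields
`uᴴ A ^ d u = (A ^ i u)ᴴ A ^ j u = β₀² (J ^ i e₁)ᴴ J ^ j e₁ = β₀² e₁ᴴ J ^ d e₁`,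
and the identity extends linearly to polynomials of degree at most `2m - 1`.
-/

namespace Matrix

section Hessenberg

variable {R : Type*} [Semiring R] {m : ℕ}

def IsUpperHessenberg (J : Matrix (Fin m) (Fin m) R) : Prop :=
  ∀ i j : Fin m, (j : ℕ) + 1 < i → J i j = 0

theorem IsUpperHessenberg.pow_apply_eq_zero {J : Matrix (Fin m) (Fin m) R}
    (hJ : J.IsUpperHessenberg) (k : ℕ) {i j : Fin m} (h : (j : ℕ) + k < i) :
    (J ^ k) i j = 0 := by
  induction k generalizing i with
  | zero => exact one_apply_ne (by rintro rfl; omega)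
  | succ k ih =>
    rw [pow_succ', mul_apply]
    refine Finset.sum_eq_zero fun l _ => ?_
    by_cases hl : (l : ℕ) + 1 < i
    · rw [hJ i l hl, zero_mul]
    · rw [ih (by omega), mul_zero]

end Hessenberg

variable {R : Type*} {n m : Type*} [Fintype m]

theorem mulVec_eq_zero_of_apply_eq_zero [NonUnitalNonAssocSemiring R] {E : Matrix n m R} {l : m}
    (hE : ∀ i, ∀ j ≠ l, E i j = 0) {y : m → R} (hy : y l = 0) : E *ᵥ y = 0 := by
  funext i
  refine Finset.sum_eq_zero fun j _ => ?_
  by_cases hj : j = l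
  · exact mul_eq_zero_of_right _ (hj ▸ hy)
  · exact mul_eq_zero_of_left (hE i j hj) _

variable [Fintype n]

theorem star_dotProduct_mulVec_eq [NonUnitalCommSemiring R] [StarRing R] (M : Matrix n m R)
    (v : n → R) (w : m → R) : star v ⬝ᵥ (M *ᵥ w) = star (Mᴴ *ᵥ v) ⬝ᵥ w := by
  rw [dotProduct_mulVec, star_mulVec, conjTranspose_conjTranspose]

variable [DecidableEq n] [DecidableEq m]

theorem pow_mulVec_mulVec_of_mul_eq_add [Semiring R] {A : Matrix n n R} {V E : Matrix n m R}
    {J : Matrix m m R} (hAV : A * V = V * J + E) {x : m → R} {k : ℕ}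
    (hE : ∀ j < k, E *ᵥ (J ^ j *ᵥ x) = 0) : A ^ k *ᵥ (V *ᵥ x) = V *ᵥ (J ^ k *ᵥ x) := by
  induction k with
  | zero => simp
  | succ k ih =>
    calc A ^ (k + 1) *ᵥ (V *ᵥ x) = (A * V) *ᵥ (J ^ k *ᵥ x) := by
          rw [pow_succ', ← mulVec_mulVec, ih fun j hj => hE j (by omega), mulVec_mulVec]
      _ = V *ᵥ (J ^ (k + 1) *ᵥ x) := by
          rw [hAV, add_mulVec, hE k k.lt_succ_self, add_zero, ← mulVec_mulVec, pow_succ',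
            ← mulVec_mulVec]

section Quadrature

variable [CommRing R] [StarRing R]
  {A : Matrix n n R} {V : Matrix n m R} {J : Matrix m m R} {x : m → R} {K : ℕ}

theorem conjTranspose_mulVec_pow_mulVec_mulVec (hJ : Vᴴ * A * V = J)
    (hx : Vᴴ *ᵥ (V *ᵥ x) = x) (hK : ∀ k ≤ K, A ^ k *ᵥ (V *ᵥ x) = V *ᵥ (J ^ k *ᵥ x))
    {k : ℕ} (hk : k ≤ K + 1) : Vᴴ *ᵥ (A ^ k *ᵥ (V *ᵥ x)) = J ^ k *ᵥ x := by
  cases k with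
  | zero => simpa using hx
  | succ k =>
    rw [pow_succ', ← mulVec_mulVec, hK k (by omega), mulVec_mulVec, mulVec_mulVec, ← hJ,
      ← mulVec_mulVec, pow_succ']
    simp only [mulVec_mulVec, Matrix.mul_assoc]

theorem star_dotProduct_pow_mulVec_eq_of_krylov (hA : A.IsHermitian) (hJ : Vᴴ * A * V = J)
    (hx : Vᴴ *ᵥ (V *ᵥ x) = x) (hK : ∀ k ≤ K, A ^ k *ᵥ (V *ᵥ x) = V *ᵥ (J ^ k *ᵥ x))
    {d : ℕ} (hd : d ≤ 2 * K + 1) :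
    star (V *ᵥ x) ⬝ᵥ (A ^ d *ᵥ (V *ᵥ x)) = star x ⬝ᵥ (J ^ d *ᵥ x) := by
  obtain ⟨i, j, hi, hj, rfl⟩ : ∃ i j, i ≤ K ∧ j ≤ K + 1 ∧ i + j = d :=
    ⟨min d K, d - min d K, min_le_right _ _, by omega, by omega⟩
  have hJH : J.IsHermitian := hJ ▸ isHermitian_conjTranspose_mul_mul V hA
  calc star (V *ᵥ x) ⬝ᵥ (A ^ (i + j) *ᵥ (V *ᵥ x))
      = star (V *ᵥ (J ^ i *ᵥ x)) ⬝ᵥ (A ^ j *ᵥ (V *ᵥ x)) := by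
        rw [pow_add, ← mulVec_mulVec, star_dotProduct_mulVec_eq (A ^ i), (hA.pow i).eq, hK i hi]
    _ = star (J ^ i *ᵥ x) ⬝ᵥ (J ^ j *ᵥ x) := by
        rw [← conjTranspose_mulVec_pow_mulVec_mulVec hJ hx hK hj, star_dotProduct_mulVec_eq Vᴴ,
          conjTranspose_conjTranspose]
    _ = star x ⬝ᵥ (J ^ (i + j) *ᵥ x) := by
        rw [pow_add, ← mulVec_mulVec, star_dotProduct_mulVec_eq (J ^ i), (hJH.pow i).eq]

end Quadrature

theorem dotProduct_aeval_mulVec_eq_of_pow [CommSemiring R] {A : Matrix n n R} {B : Matrix m m R}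
    {x x' : n → R} {y y' : m → R} {N : ℕ}
    (h : ∀ d ≤ N, x ⬝ᵥ (A ^ d *ᵥ x') = y ⬝ᵥ (B ^ d *ᵥ y')) {p : R[X]} (hp : p.natDegree ≤ N) :
    x ⬝ᵥ (aeval A p *ᵥ x') = y ⬝ᵥ (aeval B p *ᵥ y') := by
  have hp' : p.natDegree < N + 1 := Nat.lt_succ_of_le hp
  simp only [aeval_eq_sum_range' hp', sum_mulVec, dotProduct_sum, smul_mulVec, dotProduct_smul]
  exact Finset.sum_congr rfl fun d hd => by rw [h d (Nat.lt_succ_iff.mp (Finset.mem_range.mp hd))]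

end Matrix

theorem stmt_7_general {n m : ℕ} (hm : 0 < m)
    (A : Matrix (Fin n) (Fin n) ℂ) (hA : A.IsHermitian)
    (u : Fin n → ℂ)
    (V : Matrix (Fin n) (Fin m) ℂ)
    (J : Matrix (Fin m) (Fin m) ℂ) (hJ : J = Vᴴ * A * V)
    (htri : ∀ i j : Fin m, ((i : ℕ) + 1 < (j : ℕ) ∨ (j : ℕ) + 1 < (i : ℕ)) → J i j = 0)
    (β₀ : ℝ)
    (hVu : Vᴴ *ᵥ u = (β₀ : ℂ) • (Pi.single (⟨0, hm⟩ : Fin m) 1 : Fin m → ℂ))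
    (hspan : u = V *ᵥ (Vᴴ *ᵥ u))
    (βm : ℂ) (v' : Fin n → ℂ)
    (hres : A * V = V * J + Matrix.of fun (i : Fin n) (j : Fin m) => βm * v' i * (if (j : ℕ) = m - 1 then 1 else 0)) :
    ∀ p : Polynomial ℂ, p.natDegree ≤ 2 * m - 1 →
      star u ⬝ᵥ ((Polynomial.aeval A p) *ᵥ u)
        = (β₀ : ℂ) ^ 2 *
          (star (Pi.single (⟨0, hm⟩ : Fin m) (1 : ℂ)) ⬝ᵥ
            ((Polynomial.aeval J p) *ᵥ (Pi.single (⟨0, hm⟩ : Fin m) 1 : Fin m → ℂ))) := by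
  intro p hp
  set e : Fin m → ℂ := Pi.single ⟨0, hm⟩ 1
  have hu : u = V *ᵥ ((β₀ : ℂ) • e) := hVu ▸ hspan
  have hHess : J.IsUpperHessenberg := fun i j h => htri i j (Or.inr h)
  have hKrylov : ∀ k ≤ m - 1, A ^ k *ᵥ u = V *ᵥ (J ^ k *ᵥ ((β₀ : ℂ) • e)) := fun k hk => by
    rw [hu]
    refine pow_mulVec_mulVec_of_mul_eq_add hres fun j hj =>
      mulVec_eq_zero_of_apply_eq_zero (l := ⟨m - 1, by omega⟩) (fun i l hl => ?_) ?_
    · simp [Fin.ext_iff.not.mp hl]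
    · rw [mulVec_smul, Pi.smul_apply, mulVec_single_one, col_apply,
        hHess.pow_apply_eq_zero j (by dsimp only; omega), smul_zero]
  have hGauss : ∀ d ≤ 2 * m - 1,
      star u ⬝ᵥ (A ^ d *ᵥ u) = star ((β₀ : ℂ) • e) ⬝ᵥ (J ^ d *ᵥ ((β₀ : ℂ) • e)) := by
    rw [hu] at hKrylov ⊢
    exact fun d hd => star_dotProduct_pow_mulVec_eq_of_krylov hA hJ.symm (by rw [← hu, hVu])
      hKrylov (by omega)
  rw [dotProduct_aeval_mulVec_eq_of_pow hGauss hp, star_smul, mulVec_smul, smul_dotProduct,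
    dotProduct_smul, Complex.star_def, Complex.conj_ofReal, smul_eq_mul, smul_eq_mul, ← mul_assoc,
    sq]

/-- For an Hermitian matrix `A` and the Lanczos decomposition
`A V = V J + β_m v_{m+1} e_m*` with orthonormal `V`, tridiagonal Jacobi matrix
`J = Vᴴ A V`, `Vᴴ u = β₀ e₁` (with `β₀ = ‖u‖`), `u ∈ span V`, and residual
orthogonal to the Krylov subspace, for every polynomial `p` of degree at most
`2m−1` one has `⟨u, p(A) u⟩ = β₀² ⟨e₁, p(J) e₁⟩`. -/
theorem stmt_7 {n m : ℕ} (hm : 0 < m)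
    (A : Matrix (Fin n) (Fin n) ℂ) (hA : A.IsHermitian)
    (u : Fin n → ℂ)
    (V : Matrix (Fin n) (Fin m) ℂ) (hV : Vᴴ * V = 1)
    (J : Matrix (Fin m) (Fin m) ℂ) (hJ : J = Vᴴ * A * V)
    (htri : ∀ i j : Fin m, ((i : ℕ) + 1 < (j : ℕ) ∨ (j : ℕ) + 1 < (i : ℕ)) → J i j = 0)
    (β₀ : ℝ) (hβ₀ : 0 ≤ β₀) (hβ : β₀ ^ 2 = ∑ i, ‖u i‖ ^ 2)
    (hVu : Vᴴ *ᵥ u = (β₀ : ℂ) • (Pi.single (⟨0, hm⟩ : Fin m) 1 : Fin m → ℂ))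
    (hspan : u = V *ᵥ (Vᴴ *ᵥ u))
    (βm : ℂ) (v' : Fin n → ℂ)
    (hres : A * V = V * J + Matrix.of fun (i : Fin n) (j : Fin m) => βm * v' i * (if (j : ℕ) = m - 1 then 1 else 0))
    (horth : Vᴴ *ᵥ v' = 0) :
    ∀ p : Polynomial ℂ, p.natDegree ≤ 2 * m - 1 →
      star u ⬝ᵥ ((Polynomial.aeval A p) *ᵥ u)
        = (β₀ : ℂ) ^ 2 *
          (star (Pi.single (⟨0, hm⟩ : Fin m) (1 : ℂ)) ⬝ᵥ
            ((Polynomial.aeval J p) *ᵥ (Pi.single (⟨0, hm⟩ : Fin m) 1 : Fin m → ℂ))) :=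
  stmt_7_general hm A hA u V J hJ htri β₀ hVu hspan βm v' hres
end

section
/- Let A be Hermitian, let R_m(A,u) be the rational Krylov subspace with denominator q_{m−1} (with poles distinct from the eigenvalues of A), U_m an orthonormal basis of R_m(A,u), A_m = U_m* A U_m, and x = U_m* u. Then for every rational function r = p / |q_{m−1}|² with p a polynomial of degree at most 2m−1, ⟨u, r(A)u⟩ = ⟨x, r(A_m) x⟩. -/
/-!
Put `w = q(A)⁻¹ u`, so that the rational Krylov space is `{a(A) w : deg a ≤ m - 1}`. Since `A` is
Hermitian, all `a(A)` and their inverses commute and `q(A)ᴴ = q̄(A)`, hence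
`⟨u, A^(i+j) |q|²(A)⁻¹ u⟩ = ⟨A^i w, A^j w⟩`, and likewise for `A_m` and `z = q(A_m)⁻¹ x`.
Because `A^j w` lies in the range of `U` for `j ≤ m - 1`, the projector `U Uᴴ` fixes it and
`Uᴴ A^k w = A_mᵏ Uᴴ w` for `k ≤ m`; applied to `q` (of degree `≤ m - 1`) this gives `Uᴴ w = z`.
Writing `k ≤ 2m - 1` as `i + j` with `i ≤ m - 1`, `j ≤ m` therefore gives both sides equal on
monomials, and the identity follows by linearity in `p`.
-/

open Matrix Polynomial

namespace Matrix

variable {R : Type*} [CommRing R] {ι κ : Type*} [Fintype ι] [Fintype κ] [DecidableEq κ]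

theorem star_dotProduct_eq_of_mem_range [StarRing R] {U : Matrix ι κ R} (hU : Uᴴ * U = 1)
    {v : ι → R} (hv : v ∈ Set.range U.mulVec) (c : ι → R) :
    star v ⬝ᵥ c = star (Uᴴ *ᵥ v) ⬝ᵥ (Uᴴ *ᵥ c) := by
  obtain ⟨y, rfl⟩ := hv
  rw [mulVec_mulVec, hU, one_mulVec, star_mulVec, dotProduct_mulVec]

theorem mulVec_mulVec_of_mem_range {U : Matrix ι κ R} {V : Matrix κ ι R} (hVU : V * U = 1)
    {v : ι → R} (hv : v ∈ Set.range U.mulVec) : U *ᵥ (V *ᵥ v) = v := by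
  obtain ⟨y, rfl⟩ := hv
  rw [mulVec_mulVec _ V U, hVU, one_mulVec]

variable [DecidableEq ι]

theorem commute_nonsing_inv_left {A B : Matrix ι ι R} (h : Commute A B) : Commute A⁻¹ B := by
  rw [nonsing_inv_eq_ringInverse]
  by_cases hA : IsUnit A
  · obtain ⟨u, rfl⟩ := hA
    rw [Ring.inverse_unit]
    exact h.units_inv_left
  · rw [Ring.inverse_non_unit _ hA]
    exact Commute.zero_left B

theorem dotProduct_aeval_mul_mulVec_eq_sum (M W : Matrix ι ι R) (v v' : ι → R) {p : R[X]}
    {N : ℕ} (hp : p.natDegree < N) :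
    v' ⬝ᵥ ((aeval M p * W) *ᵥ v) =
      ∑ k ∈ Finset.range N, p.coeff k * (v' ⬝ᵥ ((M ^ k * W) *ᵥ v)) := by
  simp only [aeval_eq_sum_range' hp, Finset.sum_mul, sum_mulVec, dotProduct_sum, smul_mul_assoc,
    smul_mulVec, dotProduct_smul, smul_eq_mul]

section Hermitian

variable [StarRing R] {M : Matrix ι ι R}

theorem IsHermitian.conjTranspose_aeval (hM : M.IsHermitian) (p : R[X]) :
    (aeval M p)ᴴ = aeval M (p.map (starRingEnd R)) := by
  induction p using Polynomial.induction_on' with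
  | add p q hp hq => simp [Polynomial.map_add, hp, hq]
  | monomial k c =>
    simp [aeval_monomial, conjTranspose_pow, hM.eq, Algebra.algebraMap_eq_smul_one,
      starRingEnd_apply]

theorem IsHermitian.dotProduct_aeval_mul_inv_mulVec (hM : M.IsHermitian) (q a b : R[X])
    (v : ι → R) :
    star v ⬝ᵥ ((aeval M (a.map (starRingEnd R) * b) *
        (aeval M (q.map (starRingEnd R) * q))⁻¹) *ᵥ v) =
      star (aeval M a *ᵥ ((aeval M q)⁻¹ *ᵥ v)) ⬝ᵥ (aeval M b *ᵥ ((aeval M q)⁻¹ *ᵥ v)) := by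
  have hcomm (f g : R[X]) : Commute (aeval M f) (aeval M g) := (Commute.all f g).map (aeval M)
  have hinv : Commute (aeval M q)⁻¹ (aeval M (q.map (starRingEnd R)))⁻¹ :=
    commute_nonsing_inv_left (commute_nonsing_inv_left (hcomm _ _).symm).symm
  have hinv' :
      Commute (aeval M (q.map (starRingEnd R)))⁻¹ (aeval M (a.map (starRingEnd R) * b)) :=
    commute_nonsing_inv_left (hcomm _ _)
  have key : aeval M (a.map (starRingEnd R) * b) * (aeval M (q.map (starRingEnd R) * q))⁻¹ =
      (aeval M a * (aeval M q)⁻¹)ᴴ * (aeval M b * (aeval M q)⁻¹) := by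
    rw [conjTranspose_mul, conjTranspose_nonsing_inv, hM.conjTranspose_aeval,
      hM.conjTranspose_aeval, _root_.map_mul (aeval M) (q.map _), mul_inv_rev, hinv.eq,
      ← mul_assoc, ← hinv'.eq, _root_.map_mul]
    simp only [mul_assoc]
  rw [key, ← mulVec_mulVec, dotProduct_mulVec, ← star_mulVec]
  simp only [mulVec_mulVec]

theorem IsHermitian.dotProduct_pow_add_mul_inv_mulVec (hM : M.IsHermitian) (q : R[X])
    (v : ι → R) (i j : ℕ) :
    star v ⬝ᵥ ((M ^ (i + j) * (aeval M (q.map (starRingEnd R) * q))⁻¹) *ᵥ v) =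
      star (M ^ i *ᵥ ((aeval M q)⁻¹ *ᵥ v)) ⬝ᵥ (M ^ j *ᵥ ((aeval M q)⁻¹ *ᵥ v)) := by
  simpa [Polynomial.map_pow, pow_add] using hM.dotProduct_aeval_mul_inv_mulVec q (X ^ i) (X ^ j) v

end Hermitian

section LeftInverse

variable {U : Matrix ι κ R} {V : Matrix κ ι R} {A : Matrix ι ι R} {w : ι → R}

theorem mulVec_pow_mulVec_eq_of_mem_range (hVU : V * U = 1) {m : ℕ}
    (hK : ∀ j < m, A ^ j *ᵥ w ∈ Set.range U.mulVec) {k : ℕ} (hk : k ≤ m) :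
    V *ᵥ (A ^ k *ᵥ w) = (V * A * U) ^ k *ᵥ (V *ᵥ w) := by
  induction k with
  | zero => simp
  | succ k ih =>
    calc V *ᵥ (A ^ (k + 1) *ᵥ w) = V *ᵥ (A *ᵥ (U *ᵥ (V *ᵥ (A ^ k *ᵥ w)))) := by
          rw [mulVec_mulVec_of_mem_range hVU (hK k (by omega)), pow_succ', ← mulVec_mulVec]
      _ = (V * A * U) *ᵥ (V *ᵥ (A ^ k *ᵥ w)) := by simp only [mulVec_mulVec, Matrix.mul_assoc]
      _ = (V * A * U) ^ (k + 1) *ᵥ (V *ᵥ w) := by rw [ih (by omega), pow_succ', mulVec_mulVec]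

theorem mulVec_aeval_mulVec_eq_of_mem_range (hVU : V * U = 1) {m : ℕ}
    (hK : ∀ j < m, A ^ j *ᵥ w ∈ Set.range U.mulVec) {r : R[X]} (hr : r.natDegree ≤ m) :
    V *ᵥ (aeval A r *ᵥ w) = aeval (V * A * U) r *ᵥ (V *ᵥ w) := by
  simp only [aeval_eq_sum_range, sum_mulVec, mulVec_sum, smul_mulVec, mulVec_smul]
  refine Finset.sum_congr rfl fun k hk => ?_
  rw [mulVec_pow_mulVec_eq_of_mem_range hVU hK (by simp at hk; omega)]

theorem star_pow_mulVec_dotProduct_pow_mulVec_eq_compression [StarRing R] (hU : Uᴴ * U = 1)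
    {l : ℕ} (hK : ∀ j ≤ l, A ^ j *ᵥ w ∈ Set.range U.mulVec) {i j : ℕ} (hi : i ≤ l)
    (hj : j ≤ l + 1) :
    star (A ^ i *ᵥ w) ⬝ᵥ (A ^ j *ᵥ w) =
      star ((Uᴴ * A * U) ^ i *ᵥ (Uᴴ *ᵥ w)) ⬝ᵥ ((Uᴴ * A * U) ^ j *ᵥ (Uᴴ *ᵥ w)) := by
  have hK' : ∀ j < l + 1, A ^ j *ᵥ w ∈ Set.range U.mulVec := fun j hj => hK j (by omega)
  rw [star_dotProduct_eq_of_mem_range hU (hK i hi),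
    mulVec_pow_mulVec_eq_of_mem_range hU hK' (by omega),
    mulVec_pow_mulVec_eq_of_mem_range hU hK' hj]

end LeftInverse

end Matrix

/-- Rational Gaussian quadrature identity in a rational Krylov subspace:
with `A` Hermitian, `q = q_{m−1}` the denominator built from the finite poles (which
are distinct from the eigenvalues of `A`, i.e. `q(A)` is invertible), `U` an
orthonormal basis of `R_m(A,u) = span{p(A) q(A)⁻¹ u : deg p ≤ m−1}`,
`A_m = Uᴴ A U` and `x = Uᴴ u`, one has
`⟨u, r(A) u⟩ = ⟨x, r(A_m) x⟩` for every `r = p / (q̄ q)` with `deg p ≤ 2m−1`. -/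
theorem stmt_8 {n m d : ℕ} (hd : d ≤ m - 1)
    (A : Matrix (Fin n) (Fin n) ℂ) (hA : A.IsHermitian)
    (u : Fin n → ℂ)
    (s : Fin d → ℂ) (q : Polynomial ℂ)
    (hq : q = ∏ j : Fin d, (Polynomial.X - Polynomial.C (s j)))
    (hqA : IsUnit (Polynomial.aeval A q))
    (U : Matrix (Fin n) (Fin m) ℂ) (hU : Uᴴ * U = 1)
    (hspan : ∀ v : Fin n → ℂ,
      (∃ y, U *ᵥ y = v) ↔
        ∃ p : Polynomial ℂ, p.natDegree ≤ m - 1 ∧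
          v = (Polynomial.aeval A p) *ᵥ ((Polynomial.aeval A q)⁻¹ *ᵥ u))
    (Am : Matrix (Fin m) (Fin m) ℂ) (hAm : Am = Uᴴ * A * U)
    (x : Fin m → ℂ) (hx : x = Uᴴ *ᵥ u)
    (hqAm : IsUnit (Polynomial.aeval Am (q.map (starRingEnd ℂ) * q))) :
    ∀ p : Polynomial ℂ, p.natDegree ≤ 2 * m - 1 →
      star u ⬝ᵥ
          (((Polynomial.aeval A p) *
            (Polynomial.aeval A (q.map (starRingEnd ℂ) * q))⁻¹) *ᵥ u)
        = star x ⬝ᵥ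
          (((Polynomial.aeval Am p) *
            (Polynomial.aeval Am (q.map (starRingEnd ℂ) * q))⁻¹) *ᵥ x) := by
  intro p hp
  set w := (aeval A q)⁻¹ *ᵥ u with hw
  clear_value w
  have hkrylov : ∀ j ≤ m - 1, A ^ j *ᵥ w ∈ Set.range U.mulVec := fun j hj =>
    (hspan _).2 ⟨X ^ j, by simpa using hj, by simp⟩
  have hqAm' : IsUnit (aeval Am q) := by
    rw [_root_.map_mul] at hqAm
    exact (((Commute.all (q.map (starRingEnd ℂ)) q).map (aeval Am)).isUnit_mul_iff.1 hqAm).2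
  have hz : Uᴴ *ᵥ w = (aeval Am q)⁻¹ *ᵥ x := by
    have hqw : aeval A q *ᵥ w = u := by
      rw [hw, mulVec_mulVec, mul_nonsing_inv _ ((isUnit_iff_isUnit_det _).1 hqA), one_mulVec]
    have hxw : x = aeval Am q *ᵥ (Uᴴ *ᵥ w) := by
      rw [hx, ← hqw, hAm, mulVec_aeval_mulVec_eq_of_mem_range hU (m := m)
        (fun j hj => hkrylov j (by omega)) (by simp [hq]; omega)]
    rw [hxw, mulVec_mulVec, nonsing_inv_mul _ ((isUnit_iff_isUnit_det _).1 hqAm'), one_mulVec]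
  have hAmH : Am.IsHermitian := hAm ▸ isHermitian_conjTranspose_mul_mul U hA
  have hmonomial : ∀ k ≤ 2 * m - 1,
      star u ⬝ᵥ ((A ^ k * (aeval A (q.map (starRingEnd ℂ) * q))⁻¹) *ᵥ u) =
        star x ⬝ᵥ ((Am ^ k * (aeval Am (q.map (starRingEnd ℂ) * q))⁻¹) *ᵥ x) := by
    intro k hk
    -- also for `m = 0`, where `2 * m - 1` and `m - 1` truncate to `0`
    obtain ⟨i, j, rfl, hi, hj⟩ : ∃ i j, k = i + j ∧ i ≤ m - 1 ∧ j ≤ m - 1 + 1 :=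
      ⟨min k (m - 1), k - min k (m - 1), by omega, min_le_right _ _, by omega⟩
    rw [hA.dotProduct_pow_add_mul_inv_mulVec, hAmH.dotProduct_pow_add_mul_inv_mulVec, ← hw,
      ← hz, hAm, star_pow_mulVec_dotProduct_pow_mulVec_eq_compression hU hkrylov hi hj]
  rw [dotProduct_aeval_mul_mulVec_eq_sum _ _ _ _ (N := 2 * m - 1 + 1) (by omega),
    dotProduct_aeval_mul_mulVec_eq_sum _ _ _ _ (N := 2 * m - 1 + 1) (by omega)]
  exact Finset.sum_congr rfl fun k hk => by rw [hmonomial k (by simp at hk; omega)]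
end

section
/- Let A be Hermitian and R_m(A,u) a rational Krylov subspace with denominator q_{m−1}, U_m an orthonormal basis, x = U_m* u. Then for every rational function r = p/q_{m−1} with p a polynomial of degree at most m−1, r(A)u = U_m r(A_m) x, where A_m = U_m* A U_m. -/
/-!
If `V * U = 1` and the vectors `w, A w, …, A^N w` all lie in the range of `U`, then `V` intertwines
`A` with its compression `V A U` on these vectors, hence `V p(A) w = p(V A U) (V w)` for every
polynomial `p` of degree at most `N`. For the rational Krylov space take `w = q(A)⁻¹ u` and `V = Uᴴ`:
applying this to `q` (of degree `d ≤ m - 1`) gives `q(A_m)⁻¹ x = Uᴴ w`, and applying it to `p`,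
together with `U Uᴴ = 1` on the range of `U`, gives `p(A) w = U p(A_m) q(A_m)⁻¹ x`.
-/

open Matrix Polynomial

namespace Matrix

variable {R ι κ : Type*} [CommRing R] [Fintype ι] [Fintype κ] [DecidableEq κ]
  {U : Matrix ι κ R} {V : Matrix κ ι R}

theorem mulVec_mulVec_eq_self_of_mul_eq_one (hVU : V * U = 1) {v : ι → R}
    (hv : ∃ y, U *ᵥ y = v) : U *ᵥ (V *ᵥ v) = v := by
  obtain ⟨y, rfl⟩ := hv
  rw [mulVec_mulVec, mulVec_mulVec, Matrix.mul_assoc, hVU, Matrix.mul_one]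

theorem mulVec_mulVec_eq_compression_mulVec (hVU : V * U = 1) (A : Matrix ι ι R) {v : ι → R}
    (hv : ∃ y, U *ᵥ y = v) : V *ᵥ (A *ᵥ v) = (V * A * U) *ᵥ (V *ᵥ v) := by
  obtain ⟨y, rfl⟩ := hv
  simp only [mulVec_mulVec, Matrix.mul_assoc, hVU, Matrix.mul_one]

variable [DecidableEq ι] {A : Matrix ι ι R} {w : ι → R} {N : ℕ}

theorem mulVec_pow_mulVec_eq_compression (hVU : V * U = 1)
    (hw : ∀ j ≤ N, ∃ y, U *ᵥ y = (A ^ j) *ᵥ w) :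
    ∀ j ≤ N, V *ᵥ ((A ^ j) *ᵥ w) = (V * A * U) ^ j *ᵥ (V *ᵥ w) := by
  intro j hj
  induction j with
  | zero => simp
  | succ j ih =>
    calc V *ᵥ ((A ^ (j + 1)) *ᵥ w)
        = V *ᵥ (A *ᵥ ((A ^ j) *ᵥ w)) := by rw [pow_succ', ← mulVec_mulVec]
      _ = (V * A * U) *ᵥ (V *ᵥ ((A ^ j) *ᵥ w)) :=
          mulVec_mulVec_eq_compression_mulVec hVU A (hw j (by omega))
      _ = (V * A * U) ^ (j + 1) *ᵥ (V *ᵥ w) := by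
          rw [ih (by omega), mulVec_mulVec, ← pow_succ']

theorem mulVec_aeval_mulVec_eq_compression (hVU : V * U = 1)
    (hw : ∀ j ≤ N, ∃ y, U *ᵥ y = (A ^ j) *ᵥ w) {p : R[X]} (hp : p.natDegree ≤ N) :
    V *ᵥ (aeval A p *ᵥ w) = aeval (V * A * U) p *ᵥ (V *ᵥ w) := by
  have hlt : p.natDegree < N + 1 := Nat.lt_succ_of_le hp
  simp only [aeval_eq_sum_range' hlt, sum_mulVec, mulVec_sum, smul_mulVec, mulVec_smul]
  refine Finset.sum_congr rfl fun j hj => ?_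
  rw [mulVec_pow_mulVec_eq_compression hVU hw j (Nat.lt_succ_iff.mp (Finset.mem_range.mp hj))]

end Matrix

theorem stmt_9_general {n m d : ℕ} (hd : d ≤ m - 1)
    (A : Matrix (Fin n) (Fin n) ℂ)
    (u : Fin n → ℂ)
    (s : Fin d → ℂ) (q : Polynomial ℂ)
    (hq : q = ∏ j : Fin d, (Polynomial.X - Polynomial.C (s j)))
    (hqA : IsUnit (Polynomial.aeval A q))
    (U : Matrix (Fin n) (Fin m) ℂ) (hU : Uᴴ * U = 1)
    (hspan : ∀ v : Fin n → ℂ,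
      (∃ y, U *ᵥ y = v) ↔
        ∃ p : Polynomial ℂ, p.natDegree ≤ m - 1 ∧
          v = (Polynomial.aeval A p) *ᵥ ((Polynomial.aeval A q)⁻¹ *ᵥ u))
    (Am : Matrix (Fin m) (Fin m) ℂ) (hAm : Am = Uᴴ * A * U)
    (hqAm : IsUnit (Polynomial.aeval Am q))
    (x : Fin m → ℂ) (hx : x = Uᴴ *ᵥ u) :
    ∀ p : Polynomial ℂ, p.natDegree ≤ m - 1 →
      (Polynomial.aeval A p) *ᵥ ((Polynomial.aeval A q)⁻¹ *ᵥ u)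
        = U *ᵥ ((Polynomial.aeval Am p) *ᵥ ((Polynomial.aeval Am q)⁻¹ *ᵥ x)) := by
  intro p hp
  set w := (aeval A q)⁻¹ *ᵥ u
  have hkrylov : ∀ j ≤ m - 1, ∃ y, U *ᵥ y = (A ^ j) *ᵥ w := fun j hj =>
    (hspan _).mpr ⟨X ^ j, by simpa using hj, by simp⟩
  have hcompress : ∀ g : ℂ[X], g.natDegree ≤ m - 1 →
      Uᴴ *ᵥ (aeval A g *ᵥ w) = aeval Am g *ᵥ (Uᴴ *ᵥ w) := fun g hg => by
    rw [hAm]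
    exact mulVec_aeval_mulVec_eq_compression hU hkrylov hg
  have hqw : aeval A q *ᵥ w = u := by
    rw [mulVec_mulVec, mul_nonsing_inv _ ((isUnit_iff_isUnit_det _).mp hqA), one_mulVec]
  have hxw : (aeval Am q)⁻¹ *ᵥ x = Uᴴ *ᵥ w := by
    have hqdeg : q.natDegree ≤ m - 1 := by simpa [hq] using hd
    rw [hx, ← hqw, hcompress q hqdeg, mulVec_mulVec,
      nonsing_inv_mul _ ((isUnit_iff_isUnit_det _).mp hqAm), one_mulVec]
  rw [hxw, ← hcompress p hp,
    mulVec_mulVec_eq_self_of_mul_eq_one hU ((hspan _).mpr ⟨p, hp, rfl⟩)]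

/-- In a rational Krylov subspace with denominator `q = q_{m−1}`
(with `q(A)` and `q(A_m)` invertible), orthonormal basis `U` and `x = Uᴴ u`,
every rational function `r = p/q` with `deg p ≤ m−1` satisfies
`r(A) u = U r(A_m) x`, where `A_m = Uᴴ A U`. -/
theorem stmt_9 {n m d : ℕ} (hd : d ≤ m - 1)
    (A : Matrix (Fin n) (Fin n) ℂ) (hA : A.IsHermitian)
    (u : Fin n → ℂ)
    (s : Fin d → ℂ) (q : Polynomial ℂ)
    (hq : q = ∏ j : Fin d, (Polynomial.X - Polynomial.C (s j)))
    (hqA : IsUnit (Polynomial.aeval A q))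
    (U : Matrix (Fin n) (Fin m) ℂ) (hU : Uᴴ * U = 1)
    (hspan : ∀ v : Fin n → ℂ,
      (∃ y, U *ᵥ y = v) ↔
        ∃ p : Polynomial ℂ, p.natDegree ≤ m - 1 ∧
          v = (Polynomial.aeval A p) *ᵥ ((Polynomial.aeval A q)⁻¹ *ᵥ u))
    (Am : Matrix (Fin m) (Fin m) ℂ) (hAm : Am = Uᴴ * A * U)
    (hqAm : IsUnit (Polynomial.aeval Am q))
    (x : Fin m → ℂ) (hx : x = Uᴴ *ᵥ u) :
    ∀ p : Polynomial ℂ, p.natDegree ≤ m - 1 →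
      (Polynomial.aeval A p) *ᵥ ((Polynomial.aeval A q)⁻¹ *ᵥ u)
        = U *ᵥ ((Polynomial.aeval Am p) *ᵥ ((Polynomial.aeval Am q)⁻¹ *ᵥ x)) :=
  stmt_9_general hd A u s q hq hqA U hU hspan Am hAm hqAm x hx
end

section
/- Let p be a polynomial of degree at most m−1 and let the quasi-orthogonal Krylov decomposition A V_m = V_m T_m + v̂_{m+1} e_m* hold, where T_m is tridiagonal (Jacobi matrix with modified (m,m) entry ω_m) and v̂_{m+1} ∈ span{v_m, v_{m+1}}. Then β_0 V_m p(T_m) e_1 = p(A) u. -/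
/-!
An upper Hessenberg matrix raises the "height" of `e₁` by at most one per multiplication, so
`T^k e₁` vanishes below row `k`; in particular the last coordinate of `T^k e₁` vanishes for
`k < m - 1`. Hence the rank-one remainder `v̂ e_m*` of the Krylov decomposition is invisible on
`T^k e₁` for these `k`, and `A^k V e₁ = V T^k e₁` follows by induction; linearity gives the
statement for polynomials of degree at most `m - 1`.
-/

open Matrix Polynomial

theorem Matrix.pow_mulVec_single_zero_eq_zero_of_hessenberg {R : Type*} [Semiring R]
    {m : ℕ} (hm : 0 < m) (T : Matrix (Fin m) (Fin m) R)
    (hT : ∀ i j : Fin m, (j : ℕ) + 1 < (i : ℕ) → T i j = 0) (k : ℕ) (j : Fin m)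
    (hkj : k < (j : ℕ)) : (T ^ k *ᵥ Pi.single (⟨0, hm⟩ : Fin m) 1) j = 0 := by
  induction k generalizing j with
  | zero =>
    rw [pow_zero, one_mulVec]
    exact Pi.single_eq_of_ne (Fin.ne_of_gt hkj) 1
  | succ k ih =>
    rw [pow_succ', ← mulVec_mulVec]
    generalize T ^ k *ᵥ Pi.single (⟨0, hm⟩ : Fin m) 1 = w at ih ⊢
    simp only [mulVec, dotProduct]
    refine Finset.sum_eq_zero fun i _ => ?_
    rcases lt_or_ge k i with hki | hik
    · rw [ih i hki, mul_zero]
    · rw [hT j i (by omega), zero_mul]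

section KrylovDecomposition

variable {R ι κ : Type*} [CommSemiring R] [Fintype ι] [DecidableEq ι] [Fintype κ] [DecidableEq κ]
  {A : Matrix ι ι R} {V : Matrix ι κ R} {T : Matrix κ κ R} {E : Matrix ι κ R} {x : κ → R} {K : ℕ}

theorem Matrix.mulVec_pow_mulVec_of_mul_eq_add (h : A * V = V * T + E)
    (hE : ∀ k < K, E *ᵥ (T ^ k *ᵥ x) = 0) {k : ℕ} (hk : k ≤ K) :
    V *ᵥ (T ^ k *ᵥ x) = A ^ k *ᵥ (V *ᵥ x) := by
  induction k with
  | zero => simp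
  | succ k ih =>
    calc V *ᵥ (T ^ (k + 1) *ᵥ x) = (V * T + E) *ᵥ (T ^ k *ᵥ x) := by
          rw [add_mulVec, hE k (by omega), add_zero, mulVec_mulVec, mulVec_mulVec,
            Matrix.mul_assoc, ← pow_succ']
      _ = A ^ (k + 1) *ᵥ (V *ᵥ x) := by
          rw [← h, ← mulVec_mulVec, ih (by omega), mulVec_mulVec, pow_succ']

theorem Matrix.mulVec_aeval_mulVec_of_mul_eq_add (h : A * V = V * T + E)
    (hE : ∀ k < K, E *ᵥ (T ^ k *ᵥ x) = 0) {p : R[X]} (hp : p.natDegree ≤ K) :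
    V *ᵥ (aeval T p *ᵥ x) = aeval A p *ᵥ (V *ᵥ x) := by
  have hp' : p.natDegree < K + 1 := Nat.lt_succ_of_le hp
  rw [aeval_eq_sum_range' hp', aeval_eq_sum_range' hp', sum_mulVec, sum_mulVec, mulVec_sum]
  refine Finset.sum_congr rfl fun k hk => ?_
  rw [smul_mulVec, smul_mulVec, mulVec_smul,
    mulVec_pow_mulVec_of_mul_eq_add h hE (Nat.lt_succ_iff.mp (Finset.mem_range.mp hk))]

end KrylovDecomposition

/-- Given the quasi-orthogonal Krylov decomposition
`A V = V T + v̂ e_m*` with `T` tridiagonal and `u = β₀ V e₁`, every polynomial `p`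
of degree at most `m−1` satisfies `β₀ V p(T) e₁ = p(A) u`. -/
theorem stmt_13 {n m : ℕ} (hm : 0 < m)
    (A : Matrix (Fin n) (Fin n) ℂ) (u : Fin n → ℂ)
    (V : Matrix (Fin n) (Fin m) ℂ) (T : Matrix (Fin m) (Fin m) ℂ)
    (htri : ∀ i j : Fin m, ((i : ℕ) + 1 < (j : ℕ) ∨ (j : ℕ) + 1 < (i : ℕ)) → T i j = 0)
    (vhat : Fin n → ℂ)
    (hdecomp : A * V = V * T +
      Matrix.of fun (i : Fin n) (j : Fin m) => vhat i * (if (j : ℕ) = m - 1 then 1 else 0))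
    (β₀ : ℂ)
    (hu : u = β₀ • (V *ᵥ (Pi.single (⟨0, hm⟩ : Fin m) 1 : Fin m → ℂ))) :
    ∀ p : Polynomial ℂ, p.natDegree ≤ m - 1 →
      β₀ • (V *ᵥ ((Polynomial.aeval T p) *ᵥ (Pi.single (⟨0, hm⟩ : Fin m) 1 : Fin m → ℂ)))
        = (Polynomial.aeval A p) *ᵥ u := by
  intro p hp
  have hremainder : ∀ k < m - 1, (Matrix.of fun (i : Fin n) (j : Fin m) =>
      vhat i * (if (j : ℕ) = m - 1 then 1 else 0)) *ᵥ
        (T ^ k *ᵥ Pi.single (⟨0, hm⟩ : Fin m) 1) = 0 := by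
    intro k hk
    have hlast := pow_mulVec_single_zero_eq_zero_of_hessenberg hm T
      (fun i j h => htri i j (Or.inr h)) k
    generalize T ^ k *ᵥ Pi.single (⟨0, hm⟩ : Fin m) 1 = w at hlast ⊢
    ext i
    simp only [mulVec, dotProduct, of_apply, Pi.zero_apply]
    refine Finset.sum_eq_zero fun j _ => ?_
    by_cases hj : (j : ℕ) = m - 1
    · rw [hlast j (by omega), mul_zero]
    · simp [hj]
  rw [hu, mulVec_smul, mulVec_aeval_mulVec_of_mul_eq_add hdecomp hremainder hp]
end
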